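/- arXiv:2602.16460 — 7 statements merged into one kernel-verified Lean document; each statement's English description precedes it below -/
import Mathlib

section
/- Let B, C be real numbers with |B| ≤ C and C − B > 0, and set F(y) = By + C (so F ≥ 0 on [-1,1] and F(-1) > 0). There exists a constant c > 0 depending only on B, C such that for every C² function σ : [-1,1] → ℂ with σ(-1) = σ(1) = 0, one has ∫₋₁¹|σ'(y)|²dy ≤ c·∫₋₁¹F(y)|σ''(y)|²dy. -/
open MeasureTheory intervalIntegral

open scoped RealInnerProductSpace

/-! The weight dominates `k (1 - y)` with `k = (C - B) / 2`, so it suffices to bound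
`∫ₐᵇ ‖σ'‖²` by `(b - a) ∫ₐᵇ (b - t) ‖σ''‖²`. Integration by parts, with the boundary terms
killed by `σ a = σ b = 0`, gives `∫ ‖σ'‖² ≤ ∫ ‖σ‖ ‖σ''‖`, and Cauchy–Schwarz from the endpoint
`b` gives `‖σ t‖² ≤ (b - t) ∫ ‖σ'‖²`. A pointwise AM–GM splitting of `‖σ‖ ‖σ''‖` then bounds
`∫ ‖σ‖ ‖σ''‖` by half of `∫ ‖σ'‖²` plus `(b - a) / 2 · ∫ (b - t) ‖σ''‖²`. -/

theorem sq_integral_le_mul_integral_sq {f : ℝ → ℝ} (hf : Continuous f) {a b : ℝ} (hab : a ≤ b) :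
    (∫ x in a..b, f x) ^ 2 ≤ (b - a) * ∫ x in a..b, f x ^ 2 := by
  rcases hab.eq_or_lt with rfl | hlt
  · simp
  set I := ∫ x in a..b, f x
  have hvar : 0 ≤ ∫ x in a..b, ((b - a) * f x - I) ^ 2 :=
    integral_nonneg hab fun x _ => sq_nonneg _
  have hexpand : ∫ x in a..b, ((b - a) * f x - I) ^ 2
      = (b - a) * ((b - a) * ∫ x in a..b, f x ^ 2) - (b - a) * I ^ 2 := by
    have hpoly : (fun x => ((b - a) * f x - I) ^ 2)
        = fun x => (b - a) ^ 2 * f x ^ 2 - 2 * (b - a) * I * f x + I ^ 2 := by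
      ext x; ring
    have hf2 : IntervalIntegrable (fun x => f x ^ 2) volume a b := (hf.pow 2).intervalIntegrable _ _
    have hf1 : IntervalIntegrable f volume a b := hf.intervalIntegrable _ _
    rw [hpoly, intervalIntegral.integral_add (hf2.const_mul _ |>.sub (hf1.const_mul _))
      intervalIntegrable_const, intervalIntegral.integral_sub (hf2.const_mul _) (hf1.const_mul _),
      intervalIntegral.integral_const_mul, intervalIntegral.integral_const_mul,
      intervalIntegral.integral_const, smul_eq_mul]
    ring
  nlinarith

theorem norm_sq_le_mul_integral_norm_deriv_sq {E : Type*} [NormedAddCommGroup E]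
    [NormedSpace ℝ E] [CompleteSpace E] {σ : ℝ → E} (hσ : ContDiff ℝ 1 σ) {y b : ℝ}
    (hyb : y ≤ b) (hb : σ b = 0) :
    ‖σ y‖ ^ 2 ≤ (b - y) * ∫ t in y..b, ‖deriv σ t‖ ^ 2 := by
  have hσ' : Continuous (deriv σ) := hσ.continuous_deriv le_rfl
  have hftc : ∫ t in y..b, deriv σ t = -σ y := by
    rw [integral_deriv_eq_sub (fun t _ => hσ.differentiable one_ne_zero t)
      (hσ'.intervalIntegrable _ _), hb, zero_sub]
  have hnorm : ‖σ y‖ ≤ ∫ t in y..b, ‖deriv σ t‖ := by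
    simpa [hftc] using norm_integral_le_integral_norm (μ := volume) (f := deriv σ) hyb
  calc ‖σ y‖ ^ 2 ≤ (∫ t in y..b, ‖deriv σ t‖) ^ 2 := by gcongr
    _ ≤ (b - y) * ∫ t in y..b, ‖deriv σ t‖ ^ 2 :=
      sq_integral_le_mul_integral_sq hσ'.norm hyb

theorem mul_le_of_sq_le_mul {x y t D L : ℝ} (hL : 0 < L) (ht : 0 ≤ t) (hD : 0 ≤ D)
    (hx : x ^ 2 ≤ t * D) : x * y ≤ D / (2 * L) + L * t * y ^ 2 / 2 := by
  rcases ht.eq_or_lt with rfl | htpos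
  · have : x = 0 := by nlinarith
    subst this; simp only [zero_mul, mul_zero, zero_div, add_zero]; positivity
  refine le_of_mul_le_mul_right ?_ (by positivity : 0 < 2 * L * t)
  have hrhs : (D / (2 * L) + L * t * y ^ 2 / 2) * (2 * L * t) = t * D + (L * t * y) ^ 2 := by
    field_simp
  rw [hrhs]
  nlinarith [sq_nonneg (x - L * t * y)]

theorem integral_norm_deriv_sq_le_integral_norm_mul_norm {E : Type*} [NormedAddCommGroup E]
    [InnerProductSpace ℝ E] {σ : ℝ → E} (hσ : ContDiff ℝ 2 σ)
    {a b : ℝ} (hab : a ≤ b) (ha : σ a = 0) (hb : σ b = 0) :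
    ∫ t in a..b, ‖deriv σ t‖ ^ 2 ≤ ∫ t in a..b, ‖σ t‖ * ‖deriv (deriv σ) t‖ := by
  have hσ₁ : ContDiff ℝ 1 (deriv σ) := ContDiff.deriv' hσ
  have hd : Continuous (deriv σ) := hσ₁.continuous
  have hdd : Continuous (deriv (deriv σ)) := hσ₁.continuous_deriv le_rfl
  have hg : IntervalIntegrable (fun t => ⟪σ t, deriv (deriv σ) t⟫ + ⟪deriv σ t, deriv σ t⟫)
      volume a b := ((hσ.continuous.inner hdd).add (hd.inner hd)).intervalIntegrable _ _
  have hh : IntervalIntegrable (fun t => ‖σ t‖ * ‖deriv (deriv σ) t‖) volume a b :=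
    (hσ.continuous.norm.mul hdd.norm).intervalIntegrable _ _
  have hparts : ∫ t in a..b, (⟪σ t, deriv (deriv σ) t⟫ + ⟪deriv σ t, deriv σ t⟫) = 0 := by
    rw [integral_eq_sub_of_hasDerivAt (f := fun t => ⟪σ t, deriv σ t⟫)
      (fun t _ => ((hσ.differentiable two_ne_zero t).hasDerivAt.inner ℝ
        (hσ₁.differentiable one_ne_zero t).hasDerivAt))
      hg]
    simp [ha, hb]
  have hpoint : ∀ t ∈ Set.Icc a b, ‖deriv σ t‖ ^ 2
      ≤ (⟪σ t, deriv (deriv σ) t⟫ + ⟪deriv σ t, deriv σ t⟫) + ‖σ t‖ * ‖deriv (deriv σ) t‖ := by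
    intro t _
    rw [real_inner_self_eq_norm_sq]
    linarith [neg_le_of_abs_le (abs_real_inner_le_norm (σ t) (deriv (deriv σ) t))]
  calc ∫ t in a..b, ‖deriv σ t‖ ^ 2
      ≤ ∫ t in a..b, ((⟪σ t, deriv (deriv σ) t⟫ + ⟪deriv σ t, deriv σ t⟫)
          + ‖σ t‖ * ‖deriv (deriv σ) t‖) :=
        integral_mono_on hab ((hd.norm.pow 2).intervalIntegrable _ _)
          (hg.add hh) hpoint
    _ = ∫ t in a..b, ‖σ t‖ * ‖deriv (deriv σ) t‖ := by
        rw [intervalIntegral.integral_add hg hh, hparts, zero_add]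

theorem integral_norm_deriv_sq_le_mul_integral_weighted {E : Type*} [NormedAddCommGroup E]
    [InnerProductSpace ℝ E] [CompleteSpace E] {σ : ℝ → E} (hσ : ContDiff ℝ 2 σ)
    {a b : ℝ} (hab : a < b) (ha : σ a = 0) (hb : σ b = 0) :
    ∫ t in a..b, ‖deriv σ t‖ ^ 2 ≤ (b - a) * ∫ t in a..b, (b - t) * ‖deriv (deriv σ) t‖ ^ 2 := by
  set D := ∫ t in a..b, ‖deriv σ t‖ ^ 2
  have hd : Continuous (deriv σ) := hσ.continuous_deriv one_le_two
  have hdd : Continuous (deriv (deriv σ)) := (ContDiff.deriv' hσ).continuous_deriv le_rfl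
  have hD : 0 ≤ D := integral_nonneg hab.le fun t _ => sq_nonneg _
  have hpoint : ∀ t ∈ Set.Icc a b, ‖σ t‖ ^ 2 ≤ (b - t) * D := fun t ⟨hat, htb⟩ =>
    (norm_sq_le_mul_integral_norm_deriv_sq (hσ.of_le one_le_two) htb hb).trans <|
      mul_le_mul_of_nonneg_left (integral_mono_interval hat htb le_rfl
        (Filter.Eventually.of_forall fun _ => sq_nonneg _) ((hd.norm.pow 2).intervalIntegrable _ _))
        (sub_nonneg.mpr htb)
  have hw : IntervalIntegrable (fun t => (b - t) * ‖deriv (deriv σ) t‖ ^ 2) volume a b :=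
    ((continuous_const.sub continuous_id).mul (hdd.norm.pow 2)).intervalIntegrable _ _
  have hamgm : ∫ t in a..b, ‖σ t‖ * ‖deriv (deriv σ) t‖
      ≤ ∫ t in a..b, (D / (2 * (b - a)) + (b - a) * ((b - t) * ‖deriv (deriv σ) t‖ ^ 2) / 2) :=
    integral_mono_on hab.le ((hσ.continuous.norm.mul hdd.norm).intervalIntegrable _ _)
      (intervalIntegrable_const.add ((hw.const_mul _).div_const _)) fun t ht => by
        simpa only [mul_assoc] using
          mul_le_of_sq_le_mul (sub_pos.mpr hab) (sub_nonneg.mpr ht.2) hD (hpoint t ht)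
  rw [intervalIntegral.integral_add intervalIntegrable_const ((hw.const_mul _).div_const _),
    intervalIntegral.integral_const, intervalIntegral.integral_div,
    intervalIntegral.integral_const_mul, smul_eq_mul] at hamgm
  have hibp := integral_norm_deriv_sq_le_integral_norm_mul_norm hσ hab.le ha hb
  have hhalf : (b - a) * (D / (2 * (b - a))) = D / 2 := by field_simp [(sub_pos.mpr hab).ne']
  linarith

/-- Weighted inequality (cf. \eqref{911a} in the paper, case `A = 0`): for the affine weight
`F(y) = By + C` with `|B| ≤ C` and `C − B > 0`, there is `c > 0` depending only on `B, C`
such that every `C²` function `σ` with `σ(±1) = 0` satisfies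
`∫|σ'|² ≤ c·∫F|σ''|²`. -/
theorem stmt_3 (B C : ℝ) (hBC : |B| ≤ C) (hCB : 0 < C - B) :
    ∃ c > 0, ∀ σ : ℝ → ℂ, ContDiff ℝ 2 σ → σ (-1) = 0 → σ 1 = 0 →
      (∫ y in (-1 : ℝ)..1, ‖deriv σ y‖ ^ 2)
        ≤ c * ∫ y in (-1 : ℝ)..1, (B * y + C) * ‖iteratedDeriv 2 σ y‖ ^ 2 := by
  set k := (C - B) / 2
  have hk : 0 < k := half_pos hCB
  have hweight : ∀ y ∈ Set.Icc (-1 : ℝ) 1, 1 - y ≤ k⁻¹ * (B * y + C) := by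
    intro y ⟨hy₁, _⟩
    -- `B y + C = k (1 - y) + (B + C) (1 + y) / 2`
    have hBC' : 0 ≤ B + C := by linarith [neg_abs_le B]
    rw [le_inv_mul_iff₀ hk, show k = (C - B) / 2 from rfl]
    nlinarith [mul_nonneg hBC' (neg_le_iff_add_nonneg.mp hy₁)]
  refine ⟨2 * k⁻¹, by positivity, fun σ hσ hm hp => ?_⟩
  have hdd : Continuous (deriv (deriv σ)) := (ContDiff.deriv' hσ).continuous_deriv le_rfl
  rw [iteratedDeriv_succ, iteratedDeriv_one, mul_assoc, ← intervalIntegral.integral_const_mul]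
  calc ∫ y in (-1 : ℝ)..1, ‖deriv σ y‖ ^ 2
      ≤ (1 - (-1)) * ∫ y in (-1 : ℝ)..1, (1 - y) * ‖deriv (deriv σ) y‖ ^ 2 :=
        integral_norm_deriv_sq_le_mul_integral_weighted hσ (by norm_num) hm hp
    _ ≤ (1 - (-1)) * ∫ y in (-1 : ℝ)..1, k⁻¹ * ((B * y + C) * ‖deriv (deriv σ) y‖ ^ 2) := by
        refine mul_le_mul_of_nonneg_left (integral_mono_on (by norm_num) ?_ ?_
          fun y hy => ?_) (by norm_num)
        · exact ((continuous_const.sub continuous_id).mul (hdd.norm.pow 2)).intervalIntegrable _ _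
        · exact (continuous_const.mul (((continuous_const.mul continuous_id).add
            continuous_const).mul (hdd.norm.pow 2))).intervalIntegrable _ _
        · rw [← mul_assoc]
          exact mul_le_mul_of_nonneg_right (hweight y hy) (sq_nonneg _)
    _ = 2 * ∫ y in (-1 : ℝ)..1, k⁻¹ * ((B * y + C) * ‖deriv (deriv σ) y‖ ^ 2) := by norm_num
end

section
/- Let B, C be real numbers with |B| ≤ C and C − B > 0, and set F(y) = By + C. There exists a constant c > 0 depending only on B, C such that for every C¹ function σ : [-1,1] → ℂ with σ(-1) = 0, one has ∫₋₁¹|σ(y)|²dy ≤ c·∫₋₁¹F(y)|σ'(y)|²dy. -/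
/-!
A one-dimensional Hardy inequality: if `σ(a) = 0` then `∫ₐᵇ ‖σ‖² ≤ 4 ∫ₐᵇ (b - y)² ‖σ'‖²`,
obtained by integrating `((y - b) ‖σ y‖²)' = ‖σ‖² + 2 (y - b) ⟪σ, σ'⟫` (both boundary terms
vanish) and absorbing half of `∫ ‖σ‖²` by Young's inequality. The weight `(1 - y)²` is in turn
dominated by `4 F(y) / (C - B)` on `[-1, 1]`, whence the theorem with `c = 16 / (C - B)`.
-/

open MeasureTheory intervalIntegral

section Hardy

variable {E : Type*} [NormedAddCommGroup E] [InnerProductSpace ℝ E]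

theorem two_mul_mul_inner_le_half_norm_sq_add {t : ℝ} (ht : 0 ≤ t) (u v : E) :
    2 * t * inner ℝ u v ≤ 1 / 2 * ‖u‖ ^ 2 + 2 * (t ^ 2 * ‖v‖ ^ 2) := by
  have hCS : 2 * t * inner ℝ u v ≤ 2 * t * (‖u‖ * ‖v‖) :=
    mul_le_mul_of_nonneg_left (real_inner_le_norm u v) (by positivity)
  nlinarith [sq_nonneg (‖u‖ - 2 * t * ‖v‖)]

theorem integral_norm_sq_eq_integral_mul_inner_deriv {σ : ℝ → E} (hσ : ContDiff ℝ 1 σ)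
    {a b : ℝ} (ha : σ a = 0) :
    ∫ y in a..b, ‖σ y‖ ^ 2 = ∫ y in a..b, 2 * (b - y) * inner ℝ (σ y) (deriv σ y) := by
  have hdiff : Differentiable ℝ σ := hσ.differentiable one_ne_zero
  have hderiv : ∀ y, HasDerivAt (fun y => (y - b) * ‖σ y‖ ^ 2)
      (‖σ y‖ ^ 2 - 2 * (b - y) * inner ℝ (σ y) (deriv σ y)) y := fun y =>
    (((hasDerivAt_id' y).sub_const b).fun_mul (hdiff y).hasDerivAt.norm_sq).congr_deriv (by ring)
  have hFTC := integral_eq_sub_of_hasDerivAt (a := a) (b := b) (fun y _ => hderiv y)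
    (by apply Continuous.intervalIntegrable; fun_prop)
  rw [intervalIntegral.integral_sub (by apply Continuous.intervalIntegrable; fun_prop)
    (by apply Continuous.intervalIntegrable; fun_prop)] at hFTC
  simp only [sub_self, zero_mul, ha, norm_zero, ne_eq, OfNat.ofNat_ne_zero, not_false_eq_true,
    zero_pow, mul_zero] at hFTC
  linarith

theorem integral_norm_sq_le_four_mul_integral_sq_mul_norm_deriv_sq {σ : ℝ → E}
    (hσ : ContDiff ℝ 1 σ) {a b : ℝ} (hab : a ≤ b) (ha : σ a = 0) :
    ∫ y in a..b, ‖σ y‖ ^ 2 ≤ 4 * ∫ y in a..b, (b - y) ^ 2 * ‖deriv σ y‖ ^ 2 := by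
  have hYoung : ∫ y in a..b, 2 * (b - y) * inner ℝ (σ y) (deriv σ y)
      ≤ ∫ y in a..b, (1 / 2 * ‖σ y‖ ^ 2 + 2 * ((b - y) ^ 2 * ‖deriv σ y‖ ^ 2)) :=
    integral_mono_on hab (by apply Continuous.intervalIntegrable; fun_prop)
      (by apply Continuous.intervalIntegrable; fun_prop)
      fun y hy => two_mul_mul_inner_le_half_norm_sq_add (sub_nonneg.2 hy.2) _ _
  rw [intervalIntegral.integral_add (by apply Continuous.intervalIntegrable; fun_prop)
      (by apply Continuous.intervalIntegrable; fun_prop), intervalIntegral.integral_const_mul,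
    intervalIntegral.integral_const_mul,
    ← integral_norm_sq_eq_integral_mul_inner_deriv hσ ha] at hYoung
  linarith

end Hardy

theorem sub_mul_one_sub_sq_le_four_mul_affine {B C y : ℝ} (hBC : |B| ≤ C)
    (hy : y ∈ Set.Icc (-1) 1) :
    (C - B) * (1 - y) ^ 2 ≤ 4 * (B * y + C) := by
  obtain ⟨hy₁, hy₂⟩ := hy
  obtain ⟨hB₁, hB₂⟩ := abs_le.1 hBC
  -- the difference is `(1 + y)((C - B)y - (3C + B))`, which is `≤ 0` on `[-1, 1]`
  have hfactor : 0 ≤ 3 * C + B - (C - B) * y := by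
    nlinarith [mul_le_mul_of_nonneg_left hy₂ (sub_nonneg.2 hB₂)]
  nlinarith [mul_nonneg (neg_le_iff_add_nonneg'.1 hy₁) hfactor]

/-- Weighted inequality (cf. \eqref{911b} in the paper): for the affine weight
`F(y) = By + C` with `|B| ≤ C` and `C − B > 0`, there is `c > 0` depending only on `B, C`
such that every `C¹` function `σ` with `σ(-1) = 0` satisfies `∫|σ|² ≤ c·∫F|σ'|²`. -/
theorem stmt_4 (B C : ℝ) (hBC : |B| ≤ C) (hCB : 0 < C - B) :
    ∃ c > 0, ∀ σ : ℝ → ℂ, ContDiff ℝ 1 σ → σ (-1) = 0 →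
      (∫ y in (-1 : ℝ)..1, ‖σ y‖ ^ 2)
        ≤ c * ∫ y in (-1 : ℝ)..1, (B * y + C) * ‖deriv σ y‖ ^ 2 := by
  refine ⟨16 / (C - B), by positivity, fun σ hσ h₀ => ?_⟩
  have hweight : ∫ y in (-1 : ℝ)..1, (1 - y) ^ 2 * ‖deriv σ y‖ ^ 2
      ≤ ∫ y in (-1 : ℝ)..1, 4 / (C - B) * ((B * y + C) * ‖deriv σ y‖ ^ 2) := by
    refine integral_mono_on (by norm_num) (by apply Continuous.intervalIntegrable; fun_prop)
      (by apply Continuous.intervalIntegrable; fun_prop) fun y hy => ?_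
    rw [div_mul_eq_mul_div, le_div_iff₀ hCB]
    nlinarith [mul_le_mul_of_nonneg_right (sub_mul_one_sub_sq_le_four_mul_affine hBC hy)
      (sq_nonneg ‖deriv σ y‖)]
  calc (∫ y in (-1 : ℝ)..1, ‖σ y‖ ^ 2)
      ≤ 4 * ∫ y in (-1 : ℝ)..1, (1 - y) ^ 2 * ‖deriv σ y‖ ^ 2 :=
        integral_norm_sq_le_four_mul_integral_sq_mul_norm_deriv_sq hσ (by norm_num) h₀
    _ ≤ 4 * ∫ y in (-1 : ℝ)..1, 4 / (C - B) * ((B * y + C) * ‖deriv σ y‖ ^ 2) := by gcongr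
    _ = 16 / (C - B) * ∫ y in (-1 : ℝ)..1, (B * y + C) * ‖deriv σ y‖ ^ 2 := by
        rw [intervalIntegral.integral_const_mul]; ring
end

section
/- Let B, C be real numbers with |B| ≤ C and C − B > 0, and set F(y) = By + C. There exists a constant c > 0 depending only on B, C such that for every C² function σ : [-1,1] → ℂ with σ(-1) = σ(1) = 0, one has |σ'(-1)|² ≤ c·∫₋₁¹F(y)|σ''(y)|²dy. -/
open MeasureTheory intervalIntegral

/-!
Taylor's formula with integral remainder and `σ(±1) = 0` give
`2 σ'(-1) = -∫₋₁¹ (1 - t) σ''(t) dt`. Since `F(t) - (C - B)(1 - t)/2 = (B + C)(1 + t)/2 ≥ 0`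
on `[-1, 1]`, the weight `F` dominates `(C - B)(1 - t)/2`, so for `x = |σ'(-1)|` the
pointwise Young inequality `(C - B) x (1 - t)|σ''| ≤ (C - B)(1 - t) x²/2 + F |σ''|²`
integrates to `2 (C - B) x² ≤ (C - B) x² + ∫ F |σ''|²`, i.e. `c = 1/(C - B)` works.
-/

theorem integral_sub_smul_eq_of_hasDerivAt {E : Type*} [NormedAddCommGroup E] [NormedSpace ℝ E]
    [CompleteSpace E] {f f' f'' : ℝ → E} {a b : ℝ}
    (hf : ∀ x ∈ Set.uIcc a b, HasDerivAt f (f' x) x)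
    (hf' : ∀ x ∈ Set.uIcc a b, HasDerivAt f' (f'' x) x)
    (hf'' : IntervalIntegrable f'' volume a b) :
    ∫ t in a..b, (b - t) • f'' t = f b - f a - (b - a) • f' a := by
  have hu : ∀ x ∈ Set.uIcc a b, HasDerivAt (fun t : ℝ ↦ b - t) (-1) x :=
    fun x _ ↦ by simpa using (hasDerivAt_id x).const_sub b
  have hf'_int : IntervalIntegrable f' volume a b :=
    ContinuousOn.intervalIntegrable fun x hx ↦ (hf' x hx).continuousAt.continuousWithinAt
  rw [integral_smul_deriv_eq_deriv_smul hu hf' intervalIntegrable_const hf'']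
  simp only [sub_self, zero_smul, neg_smul, one_smul, intervalIntegral.integral_neg,
    integral_eq_sub_of_hasDerivAt hf hf'_int]
  abel

theorem two_mul_norm_deriv_le_integral {E : Type*} [NormedAddCommGroup E] [NormedSpace ℝ E]
    [CompleteSpace E] {σ : ℝ → E} (hσ : ContDiff ℝ 2 σ) (hm : σ (-1) = 0) (hp : σ 1 = 0) :
    2 * ‖deriv σ (-1)‖ ≤ ∫ t in (-1 : ℝ)..1, (1 - t) * ‖iteratedDeriv 2 σ t‖ := by
  have hσ' : Differentiable ℝ (deriv σ) := by
    simpa [iteratedDeriv_one] using hσ.differentiable_iteratedDeriv 1 (by norm_num)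
  have hσ'' : Continuous (iteratedDeriv 2 σ) := hσ.continuous_iteratedDeriv 2 le_rfl
  have taylor := integral_sub_smul_eq_of_hasDerivAt
    (fun x _ ↦ (hσ.differentiable (by norm_num) x).hasDerivAt)
    (fun x _ ↦ by simpa [iteratedDeriv_succ, iteratedDeriv_one] using (hσ' x).hasDerivAt)
    (hσ''.intervalIntegrable (-1) 1)
  rw [hm, hp] at taylor
  calc 2 * ‖deriv σ (-1)‖ = ‖∫ t in (-1 : ℝ)..1, (1 - t) • iteratedDeriv 2 σ t‖ := by
        rw [taylor, sub_zero, zero_sub, norm_neg, norm_smul]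
        norm_num
    _ ≤ ∫ t in (-1 : ℝ)..1, (1 - t) * ‖iteratedDeriv 2 σ t‖ := by
        refine intervalIntegral.norm_integral_le_of_norm_le (by norm_num)
          (ae_of_all _ fun t ht ↦ ?_) ((by fun_prop : Continuous _).intervalIntegrable _ _)
        rw [norm_smul, Real.norm_of_nonneg (by linarith [ht.2])]

theorem mul_mul_le_add_weight_mul_sq {B C t : ℝ} (hB : -C ≤ B) (hCB : 0 ≤ C - B)
    (ht : t ∈ Set.Icc (-1 : ℝ) 1) (x y : ℝ) :
    (C - B) * x * ((1 - t) * y) ≤ (C - B) * (1 - t) / 2 * x ^ 2 + (B * t + C) * y ^ 2 := by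
  -- the difference is `(C - B)(1 - t)(x - y)² / 2 + (B + C)(1 + t) y² / 2`
  nlinarith [mul_nonneg (mul_nonneg hCB (sub_nonneg.2 ht.2)) (sq_nonneg (x - y)),
    mul_nonneg (mul_nonneg (neg_le_iff_add_nonneg.1 hB) (neg_le_iff_add_nonneg'.1 ht.1))
      (sq_nonneg y)]

theorem mul_integral_le_add_integral_weight_mul_sq {B C : ℝ} (hB : -C ≤ B) (hCB : 0 ≤ C - B)
    {g : ℝ → ℝ} (hg : Continuous g) (x : ℝ) :
    (C - B) * x * ∫ t in (-1 : ℝ)..1, (1 - t) * g t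
      ≤ (C - B) * x ^ 2 + ∫ t in (-1 : ℝ)..1, (B * t + C) * g t ^ 2 := by
  have hmono : ∫ t in (-1 : ℝ)..1, (C - B) * x * ((1 - t) * g t)
      ≤ ∫ t in (-1 : ℝ)..1, ((C - B) * (1 - t) / 2 * x ^ 2 + (B * t + C) * g t ^ 2) :=
    integral_mono_on (by norm_num) ((by fun_prop : Continuous _).intervalIntegrable _ _)
      ((by fun_prop : Continuous _).intervalIntegrable _ _)
      fun t ht ↦ mul_mul_le_add_weight_mul_sq hB hCB ht x (g t)
  rw [intervalIntegral.integral_const_mul,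
    integral_add ((by fun_prop : Continuous _).intervalIntegrable _ _)
      ((by fun_prop : Continuous _).intervalIntegrable _ _)] at hmono
  have hw : ∫ t in (-1 : ℝ)..1, (1 - t) = 2 := by
    rw [integral_sub intervalIntegrable_const intervalIntegrable_id]
    norm_num
  convert hmono using 2
  simp only [intervalIntegral.integral_mul_const, intervalIntegral.integral_div,
    intervalIntegral.integral_const_mul, hw]
  ring

/-- Boundary estimate (cf. \eqref{910b} in the paper): for the affine weight
`F(y) = By + C` with `|B| ≤ C` and `C − B > 0`, there is `c > 0` depending only on `B, C`
such that every `C²` function `σ` with `σ(±1) = 0` satisfies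
`|σ'(-1)|² ≤ c·∫F|σ''|²`. -/
theorem stmt_5 (B C : ℝ) (hBC : |B| ≤ C) (hCB : 0 < C - B) :
    ∃ c > 0, ∀ σ : ℝ → ℂ, ContDiff ℝ 2 σ → σ (-1) = 0 → σ 1 = 0 →
      ‖deriv σ (-1)‖ ^ 2
        ≤ c * ∫ y in (-1 : ℝ)..1, (B * y + C) * ‖iteratedDeriv 2 σ y‖ ^ 2 := by
  refine ⟨(C - B)⁻¹, inv_pos.2 hCB, fun σ hσ hm hp ↦ ?_⟩
  rw [le_inv_mul_iff₀ hCB]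
  set x := ‖deriv σ (-1)‖
  have hx : 0 ≤ (C - B) * x := mul_nonneg hCB.le (norm_nonneg _)
  have hweighted := mul_integral_le_add_integral_weight_mul_sq (abs_le.1 hBC).1 hCB.le
    (hσ.continuous_iteratedDeriv 2 le_rfl).norm x
  calc (C - B) * x ^ 2 = (C - B) * x * (2 * x) - (C - B) * x ^ 2 := by ring
    _ ≤ (C - B) * x * (∫ t in (-1 : ℝ)..1, (1 - t) * ‖iteratedDeriv 2 σ t‖)
          - (C - B) * x ^ 2 := by
        gcongr
        exact two_mul_norm_deriv_le_integral hσ hm hp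
    _ ≤ _ := by linarith
end

section
/- Let B, C be real numbers with |B| ≤ C and C − B > 0, and set F(y) = By + C. There exists a constant c > 0 depending only on B, C such that for every C² function σ : [-1,1] → ℂ and every y ∈ (-1,1), one has |σ'(y) − σ'(-1)|² ≤ c·(1 + |log(1−y)|)·∫₋₁¹F(t)|σ''(t)|²dt. -/
/-!
Write `σ'(y) - σ'(-1) = ∫_{-1}^y σ''` and apply Cauchy–Schwarz with the weight `F`:
`|σ'(y) - σ'(-1)|² ≤ (∫_{-1}^y F⁻¹) · ∫_{-1}^1 F |σ''|²`. Since `B ≥ -C`, the weight dominates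
`(C - B)/2 · (1 - t)` on `[-1, 1]`, so `∫_{-1}^y F⁻¹ ≤ 2/(C - B) · log (2 / (1 - y))`, which is the
logarithmic factor.
-/

open MeasureTheory intervalIntegral

theorem sq_integral_le_integral_inv_mul_integral_mul_sq {α : Type*} [MeasurableSpace α]
    {μ : Measure α} {f w : α → ℝ} (hw : ∀ᵐ t ∂μ, 0 < w t) (hf : Integrable f μ)
    (hw' : Integrable (fun t => (w t)⁻¹) μ) (hwf : Integrable (fun t => w t * f t ^ 2) μ) :
    (∫ t, f t ∂μ) ^ 2 ≤ (∫ t, (w t)⁻¹ ∂μ) * ∫ t, w t * f t ^ 2 ∂μ := by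
  -- integrating `2 x f ≤ x² w⁻¹ + w f²` gives a quadratic in `x` that is nonnegative everywhere
  have hquad : ∀ x : ℝ, 0 ≤ (∫ t, (w t)⁻¹ ∂μ) * (x * x) + (-2 * ∫ t, f t ∂μ) * x
      + ∫ t, w t * f t ^ 2 ∂μ := by
    intro x
    have hmono : ∫ t, 2 * x * f t ∂μ ≤ ∫ t, (x * x * (w t)⁻¹ + w t * f t ^ 2) ∂μ := by
      refine integral_mono_ae (hf.const_mul _) ((hw'.const_mul _).add hwf) ?_
      filter_upwards [hw] with t ht
      have : 0 ≤ (w t)⁻¹ * (x - w t * f t) ^ 2 := by positivity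
      field_simp at this ⊢
      nlinarith
    rw [MeasureTheory.integral_const_mul, integral_add (hw'.const_mul _) hwf,
      MeasureTheory.integral_const_mul] at hmono
    nlinarith
  have hdiscrim := discrim_le_zero hquad
  rw [discrim] at hdiscrim
  nlinarith

theorem sq_intervalIntegral_le_integral_inv_mul_integral_mul_sq {μ : Measure ℝ} {f w : ℝ → ℝ}
    {a b : ℝ} (hab : a ≤ b) (hw : ∀ t ∈ Set.Ioc a b, 0 < w t) (hf : IntervalIntegrable f μ a b)
    (hw' : IntervalIntegrable (fun t => (w t)⁻¹) μ a b)
    (hwf : IntervalIntegrable (fun t => w t * f t ^ 2) μ a b) :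
    (∫ t in a..b, f t ∂μ) ^ 2 ≤ (∫ t in a..b, (w t)⁻¹ ∂μ) * ∫ t in a..b, w t * f t ^ 2 ∂μ := by
  simp only [integral_of_le hab]
  exact sq_integral_le_integral_inv_mul_integral_mul_sq
    (ae_restrict_of_forall_mem measurableSet_Ioc hw) hf.1 hw'.1 hwf.1

theorem norm_deriv_sub_le_integral_norm_iteratedDeriv_two {E : Type*} [NormedAddCommGroup E]
    [NormedSpace ℝ E] [CompleteSpace E] {σ : ℝ → E} (hσ : ContDiff ℝ 2 σ) {a b : ℝ}
    (hab : a ≤ b) : ‖deriv σ b - deriv σ a‖ ≤ ∫ t in a..b, ‖iteratedDeriv 2 σ t‖ := by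
  have hσ' : ContDiff ℝ 1 (deriv σ) := hσ.iterate_deriv' 1 1
  rw [iteratedDeriv_eq_iterate, Function.iterate_succ_apply', Function.iterate_one,
    ← integral_deriv_eq_sub (fun x _ => hσ'.differentiable one_ne_zero x)
      ((hσ'.continuous_deriv le_rfl).intervalIntegrable _ _)]
  exact norm_integral_le_integral_norm hab

theorem half_sub_mul_one_sub_le_affine {B C t : ℝ} (hBC : -C ≤ B) (ht : -1 ≤ t) :
    (C - B) / 2 * (1 - t) ≤ B * t + C := by
  nlinarith

theorem affine_pos_of_mem_Ico {B C t : ℝ} (hBC : -C ≤ B) (hCB : 0 < C - B)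
    (ht : t ∈ Set.Ico (-1 : ℝ) 1) : 0 < B * t + C :=
  (mul_pos (by linarith) (by linarith [ht.2])).trans_le (half_sub_mul_one_sub_le_affine hBC ht.1)

theorem affine_nonneg_of_mem_Icc {B C t : ℝ} (hBC : -C ≤ B) (hCB : 0 ≤ C - B)
    (ht : t ∈ Set.Icc (-1 : ℝ) 1) : 0 ≤ B * t + C :=
  (mul_nonneg (by linarith) (by linarith [ht.2])).trans (half_sub_mul_one_sub_le_affine hBC ht.1)

theorem integral_inv_one_sub {y : ℝ} (hy : y < 1) :
    ∫ t in (-1 : ℝ)..y, (1 - t)⁻¹ = Real.log (2 / (1 - y)) := by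
  rw [integral_comp_sub_left (fun t => t⁻¹),
    integral_inv (Set.notMem_uIcc_of_lt (by linarith) (by norm_num))]
  norm_num

theorem integral_inv_one_sub_le {y : ℝ} (hy : y < 1) :
    ∫ t in (-1 : ℝ)..y, (1 - t)⁻¹ ≤ 1 + |Real.log (1 - y)| := by
  rw [integral_inv_one_sub hy, Real.log_div two_ne_zero (by linarith)]
  linarith [Real.log_two_lt_d9, neg_le_abs (Real.log (1 - y))]

theorem integral_inv_affine_le {B C y : ℝ} (hBC : -C ≤ B) (hCB : 0 < C - B) (hy₁ : -1 ≤ y)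
    (hy₂ : y < 1) :
    ∫ t in (-1 : ℝ)..y, (B * t + C)⁻¹ ≤ 2 / (C - B) * (1 + |Real.log (1 - y)|) := by
  have hle : ∀ t ∈ Set.Icc (-1 : ℝ) y, (B * t + C)⁻¹ ≤ 2 / (C - B) * (1 - t)⁻¹ := fun t ht => by
    rw [← inv_div, ← mul_inv]
    exact inv_anti₀ (mul_pos (by linarith) (by linarith [ht.2]))
      (half_sub_mul_one_sub_le_affine hBC ht.1)
  calc ∫ t in (-1 : ℝ)..y, (B * t + C)⁻¹
      ≤ ∫ t in (-1 : ℝ)..y, 2 / (C - B) * (1 - t)⁻¹ := by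
        refine integral_mono_on hy₁ ?_ ?_ hle
        all_goals
          refine ContinuousOn.intervalIntegrable ?_
          rw [Set.uIcc_of_le hy₁]
        · exact ContinuousOn.inv₀ (by fun_prop)
            fun t ht => (affine_pos_of_mem_Ico hBC hCB ⟨ht.1, ht.2.trans_lt hy₂⟩).ne'
        · exact continuousOn_const.mul <| ContinuousOn.inv₀ (by fun_prop)
            fun t ht => (sub_pos.2 (ht.2.trans_lt hy₂)).ne'
    _ ≤ 2 / (C - B) * (1 + |Real.log (1 - y)|) := by
        rw [intervalIntegral.integral_const_mul]
        gcongr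
        exact integral_inv_one_sub_le hy₂

/-- Pointwise logarithmic estimate (cf. \eqref{sigma-basic} in the paper): for the affine
weight `F(y) = By + C` with `|B| ≤ C` and `C − B > 0`, there is `c > 0` depending only on
`B, C` such that every `C²` function `σ` and every `y ∈ (-1,1)` satisfy
`|σ'(y) − σ'(-1)|² ≤ c·(1 + |log(1−y)|)·∫F|σ''|²`. -/
theorem stmt_6 (B C : ℝ) (hBC : |B| ≤ C) (hCB : 0 < C - B) :
    ∃ c > 0, ∀ σ : ℝ → ℂ, ContDiff ℝ 2 σ → ∀ y ∈ Set.Ioo (-1 : ℝ) 1,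
      ‖deriv σ y - deriv σ (-1)‖ ^ 2
        ≤ c * (1 + |Real.log (1 - y)|) *
            ∫ t in (-1 : ℝ)..1, (B * t + C) * ‖iteratedDeriv 2 σ t‖ ^ 2 := by
  have hBC' : -C ≤ B := (abs_le.mp hBC).1
  refine ⟨2 / (C - B), by positivity, fun σ hσ y ⟨hy₁, hy₂⟩ => ?_⟩
  have hFpos : ∀ t ∈ Set.Icc (-1 : ℝ) y, 0 < B * t + C := fun t ht =>
    affine_pos_of_mem_Ico hBC' hCB ⟨ht.1, ht.2.trans_lt hy₂⟩
  have hσ'' : Continuous (iteratedDeriv 2 σ) := hσ.continuous_iteratedDeriv 2 le_rfl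
  calc ‖deriv σ y - deriv σ (-1)‖ ^ 2
      ≤ (∫ t in (-1 : ℝ)..y, ‖iteratedDeriv 2 σ t‖) ^ 2 := by
        gcongr
        exact norm_deriv_sub_le_integral_norm_iteratedDeriv_two hσ hy₁.le
    _ ≤ (∫ t in (-1 : ℝ)..y, (B * t + C)⁻¹) *
          ∫ t in (-1 : ℝ)..y, (B * t + C) * ‖iteratedDeriv 2 σ t‖ ^ 2 := by
        refine sq_intervalIntegral_le_integral_inv_mul_integral_mul_sq hy₁.le
          (fun t ht => hFpos t (Set.Ioc_subset_Icc_self ht)) (hσ''.norm.intervalIntegrable _ _)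
          ?_ ((by fun_prop : Continuous _).intervalIntegrable _ _)
        refine ContinuousOn.intervalIntegrable ?_
        rw [Set.uIcc_of_le hy₁.le]
        exact ContinuousOn.inv₀ (by fun_prop) fun t ht => (hFpos t ht).ne'
    _ ≤ 2 / (C - B) * (1 + |Real.log (1 - y)|) *
          ∫ t in (-1 : ℝ)..1, (B * t + C) * ‖iteratedDeriv 2 σ t‖ ^ 2 := by
        refine mul_le_mul (integral_inv_affine_le hBC' hCB hy₁.le hy₂) ?_
          (integral_nonneg hy₁.le fun t ht => by have := hFpos t ht; positivity) (by positivity)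
        refine integral_mono_interval le_rfl hy₁.le hy₂.le ?_
          ((by fun_prop : Continuous _).intervalIntegrable _ _)
        refine ae_restrict_of_forall_mem measurableSet_Ioc fun t ht => ?_
        have := affine_nonneg_of_mem_Icc hBC' hCB.le (Set.Ioc_subset_Icc_self ht)
        positivity
end

section
/- Let A, B, C satisfy condition (ABC) and F(y) = 3Ay² + By + C. Let ξ ∈ ℝ, let h : [-1,1] → ℂ be continuous, and let φ : [-1,1] → ℂ be a C⁴ solution of the Orr–Sommerfeld problem φ'''' − 2ξ²φ'' + ξ⁴φ − iξ[F(y)(φ'' − ξ²φ) − 6Aφ] = h on (-1,1) with φ(±1) = φ'(±1) = 0. Assume moreover that the quotient σ = φ/F extends to a C³ function on [-1,1]. Then −12A∫₋₁¹|σ'(y)|²dy − 6Aξ²∫₋₁¹|σ(y)|²dy + ∫₋₁¹F(y)(|σ''(y)|² + 2ξ²|σ'(y)|² + ξ⁴|σ(y)|²)dy ≤ Re ∫₋₁¹ h(y)·conj(σ(y)) dy. -/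
/-!
Write `φ = F σ`. Pairing the equation with `conj σ` and integrating by parts, `Re (h conj σ)` minus
the integrand of the left-hand side is the derivative of an explicit boundary form
`W = boundaryForm`, so the difference of the two sides is `W 1 - W (-1)`. At an endpoint `e = ±1`
the boundary conditions force `σ e = 0`, and also `σ' e = 0` unless `F e = 0`; in that case
condition (ABC) gives `e F'(e) < 0`, while `W e = -F'(e) |σ' e|²`. Hence `W (-1) ≤ 0 ≤ W 1`.
-/

open MeasureTheory intervalIntegral Set ComplexConjugate

theorem HasDerivAt.conj {f : ℝ → ℂ} {f' : ℂ} {x : ℝ} (hf : HasDerivAt f f' x) :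
    HasDerivAt (fun t => conj (f t)) (conj f') x := by
  simpa only [starRingEnd_apply] using hf.star

theorem HasDerivAt.re {f : ℝ → ℂ} {f' : ℂ} {x : ℝ} (hf : HasDerivAt f f' x) :
    HasDerivAt (fun t => (f t).re) f'.re x :=
  Complex.reCLM.hasFDerivAt.comp_hasDerivAt x hf

theorem ContDiff.hasDerivAt_iteratedDeriv {𝕜 F : Type*} [NontriviallyNormedField 𝕜]
    [NormedAddCommGroup F] [NormedSpace 𝕜 F] {f : 𝕜 → F} {n : WithTop ℕ∞} {k : ℕ}
    (hf : ContDiff 𝕜 n f) (hk : k < n) (x : 𝕜) :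
    HasDerivAt (iteratedDeriv k f) (iteratedDeriv (k + 1) f x) x := by
  rw [iteratedDeriv_succ]
  exact (hf.differentiable_iteratedDeriv k hk x).hasDerivAt

theorem Set.EqOn.deriv_Icc {E : Type*} [NormedAddCommGroup E] [NormedSpace ℝ E]
    {f g : ℝ → E} {a b : ℝ} (hab : a < b) (hf : Differentiable ℝ f) (hg : Differentiable ℝ g)
    (h : EqOn f g (Icc a b)) : EqOn (_root_.deriv f) (_root_.deriv g) (Icc a b) := fun y hy => by
  have hu := uniqueDiffOn_Icc hab y hy
  rw [← (hf y).derivWithin hu, ← (hg y).derivWithin hu, derivWithin_congr h (h hy)]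

theorem intervalIntegral.integral_le_re_integral_of_hasDerivAt {a b : ℝ} (hab : a ≤ b)
    {f : ℝ → ℂ} {q W : ℝ → ℝ} (hf : ContinuousOn f (Icc a b)) (hq : ContinuousOn q (Icc a b))
    (hW : ContinuousOn W (Icc a b)) (hW' : ∀ x ∈ Ioo a b, HasDerivAt W ((f x).re - q x) x)
    (hWab : W a ≤ W b) : ∫ x in a..b, q x ≤ (∫ x in a..b, f x).re := by
  have hfi : IntervalIntegrable f volume a b := hf.intervalIntegrable_of_Icc hab
  have hri : IntervalIntegrable (fun x => (f x).re) volume a b :=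
    (Complex.continuous_re.comp_continuousOn hf).intervalIntegrable_of_Icc hab
  have hqi : IntervalIntegrable q volume a b := hq.intervalIntegrable_of_Icc hab
  have hFTC := integral_eq_sub_of_hasDerivAt_of_le hab hW hW' (hri.sub hqi)
  rw [integral_sub hri hqi] at hFTC
  have := intervalIntegral_re (𝕜 := ℂ) hfi
  simp only [RCLike.re_to_complex] at this
  linarith

namespace OrrSommerfeld

def weight (A B C y : ℝ) : ℝ := 3 * A * y ^ 2 + B * y + C

variable {A B C ξ : ℝ} {φ σ : ℝ → ℂ}

theorem hasDerivAt_weight (y : ℝ) : HasDerivAt (weight A B C) (6 * A * y + B) y := by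
  have := (((hasDerivAt_pow 2 y).const_mul (3 * A)).add ((hasDerivAt_id y).const_mul B)).add_const C
  exact this.congr_deriv (by ring)

theorem hasDerivAt_deriv_weight (y : ℝ) : HasDerivAt (fun y => 6 * A * y + B) (6 * A) y := by
  simpa using ((hasDerivAt_id y).const_mul (6 * A)).add_const B

theorem mul_deriv_weight_neg (hABC : (A, B, C) ≠ (0, 0, 0)) (hA : A ≤ 0)
    (hB : |B| ≤ 3 * A + C) {e : ℝ} (he : |e| = 1) (h0 : weight A B C e = 0) :
    e * (6 * A * e + B) < 0 := by
  have he2 : e * e = 1 := by rw [← abs_mul_abs_self, he, one_mul]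
  have h0' : 3 * A + e * B + C = 0 := by
    unfold weight at h0; linear_combination h0 - 3 * A * he2
  have hlt : e * (6 * A * e + B) = 6 * A + e * B := by linear_combination 6 * A * he2
  rw [hlt]
  by_contra! hnonneg
  have hB0 := abs_nonneg B
  obtain rfl : A = 0 := by linarith
  obtain rfl : C = 0 := by linarith
  obtain rfl : B = 0 := abs_nonpos_iff.mp (by linarith)
  exact hABC rfl

theorem hasDerivAt_weight_mul {y : ℝ} {s' : ℂ} (hσ : HasDerivAt σ s' y) :
    HasDerivAt (fun y => (weight A B C y : ℂ) * σ y)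
      (((6 * A * y + B : ℝ) : ℂ) * σ y + weight A B C y * s') y :=
  (hasDerivAt_weight y).ofReal_comp.mul hσ

theorem hasDerivAt_deriv_weight_mul {y : ℝ} {s' s'' : ℂ} (hσ : HasDerivAt σ s' y)
    (hσ' : HasDerivAt (deriv σ) s'' y) :
    HasDerivAt (fun y => ((6 * A * y + B : ℝ) : ℂ) * σ y + weight A B C y * deriv σ y)
      (6 * A * σ y + 2 * ((6 * A * y + B : ℝ) : ℂ) * s' + weight A B C y * s'') y := by
  refine ((hasDerivAt_deriv_weight y).ofReal_comp.mul hσ |>.add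
    (hasDerivAt_weight_mul hσ')).congr_deriv ?_
  rw [hσ.deriv]
  push_cast
  ring

theorem deriv_eqOn_of_eqOn_weight_mul {a b : ℝ} (hab : a < b) (hφ : Differentiable ℝ φ)
    (hσ : Differentiable ℝ σ) (h : EqOn φ (fun y => (weight A B C y : ℂ) * σ y) (Icc a b)) :
    EqOn (deriv φ) (fun y => ((6 * A * y + B : ℝ) : ℂ) * σ y + weight A B C y * deriv σ y)
      (Icc a b) :=
  (h.deriv_Icc hab hφ (fun y => (hasDerivAt_weight_mul (hσ y).hasDerivAt).differentiableAt)
    ).trans fun y _ => (hasDerivAt_weight_mul (hσ y).hasDerivAt).deriv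

theorem iteratedDeriv_two_eqOn_of_eqOn_weight_mul {a b : ℝ} (hab : a < b) (hφ : ContDiff ℝ 2 φ)
    (hσ : ContDiff ℝ 2 σ) (h : EqOn φ (fun y => (weight A B C y : ℂ) * σ y) (Icc a b)) :
    EqOn (iteratedDeriv 2 φ) (fun y => 6 * A * σ y + 2 * ((6 * A * y + B : ℝ) : ℂ) * deriv σ y
      + weight A B C y * iteratedDeriv 2 σ y) (Icc a b) := by
  have hσ₀ (y : ℝ) : HasDerivAt σ (deriv σ y) y := by
    simpa using hσ.hasDerivAt_iteratedDeriv (k := 0) (by norm_num) y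
  have hσ₁ (y : ℝ) : HasDerivAt (deriv σ) (iteratedDeriv 2 σ y) y := by
    simpa using hσ.hasDerivAt_iteratedDeriv (k := 1) (by norm_num) y
  rw [iteratedDeriv_succ, iteratedDeriv_one]
  refine ((deriv_eqOn_of_eqOn_weight_mul hab (hφ.differentiable (by norm_num))
    (hσ.differentiable (by norm_num)) h).deriv_Icc hab ?_ ?_).trans fun y _ => ?_
  · simpa using hφ.differentiable_iteratedDeriv 1 (by norm_num)
  · exact fun y => (hasDerivAt_deriv_weight_mul (hσ₀ y) (hσ₁ y)).differentiableAt
  · exact (hasDerivAt_deriv_weight_mul (hσ₀ y) (hσ₁ y)).deriv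

noncomputable def boundaryForm (A B C ξ : ℝ) (φ σ : ℝ → ℂ) (y : ℝ) : ℝ :=
  (iteratedDeriv 3 φ y * conj (σ y) - iteratedDeriv 2 φ y * conj (deriv σ y)
    + 6 * A * σ y * conj (deriv σ y)
    + ((6 * A * y + B : ℝ) : ℂ) * (deriv σ y * conj (deriv σ y) - ξ ^ 2 * σ y * conj (σ y))
    - (2 * ξ ^ 2 * weight A B C y + Complex.I * ξ * weight A B C y ^ 2)
      * deriv σ y * conj (σ y)).re

noncomputable def energyDensity (A B C ξ : ℝ) (σ : ℝ → ℂ) (y : ℝ) : ℝ :=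
  -12 * A * ‖deriv σ y‖ ^ 2 + -6 * A * ξ ^ 2 * ‖σ y‖ ^ 2
    + weight A B C y * (‖iteratedDeriv 2 σ y‖ ^ 2 + 2 * ξ ^ 2 * ‖deriv σ y‖ ^ 2 + ξ ^ 4 * ‖σ y‖ ^ 2)

theorem hasDerivAt_boundaryForm (hφ : ContDiff ℝ 4 φ) (hσ : ContDiff ℝ 2 σ) {y : ℝ} {h : ℂ}
    (hφy : φ y = weight A B C y * σ y)
    (hφ₂ : iteratedDeriv 2 φ y = 6 * A * σ y + 2 * ((6 * A * y + B : ℝ) : ℂ) * deriv σ y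
      + weight A B C y * iteratedDeriv 2 σ y)
    (heq : iteratedDeriv 4 φ y - 2 * (ξ : ℂ) ^ 2 * iteratedDeriv 2 φ y + (ξ : ℂ) ^ 4 * φ y
      - Complex.I * ξ * (weight A B C y * (iteratedDeriv 2 φ y - (ξ : ℂ) ^ 2 * φ y)
        - 6 * (A : ℂ) * φ y) = h) :
    HasDerivAt (boundaryForm A B C ξ φ σ) ((h * conj (σ y)).re - energyDensity A B C ξ σ y) y := by
  have hσ₀ : HasDerivAt σ (deriv σ y) y := by
    simpa using hσ.hasDerivAt_iteratedDeriv (k := 0) (by norm_num) y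
  have hσ₁ : HasDerivAt (deriv σ) (iteratedDeriv 2 σ y) y := by
    simpa using hσ.hasDerivAt_iteratedDeriv (k := 1) (by norm_num) y
  have hφ₂' := hφ.hasDerivAt_iteratedDeriv (k := 2) (by norm_num) y
  have hφ₃ := hφ.hasDerivAt_iteratedDeriv (k := 3) (by norm_num) y
  have hF := (hasDerivAt_weight (A := A) (B := B) (C := C) y).ofReal_comp
  have hF' := (hasDerivAt_deriv_weight (A := A) (B := B) y).ofReal_comp
  refine (((((hφ₃.mul hσ₀.conj).sub (hφ₂'.mul hσ₁.conj)).add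
    (((hσ₀.const_mul (6 * A : ℂ)).mul hσ₁.conj))).add
    (hF'.mul ((hσ₁.mul hσ₁.conj).sub ((hσ₀.const_mul ((ξ : ℂ) ^ 2)).mul hσ₀.conj)))).sub
    ((((hF.const_mul (2 * (ξ : ℂ) ^ 2)).add ((hF.pow 2).const_mul (Complex.I * ξ))).mul hσ₁).mul
      hσ₀.conj)).re.congr_deriv ?_
  simp only [Pi.add_apply, Pi.sub_apply, Pi.mul_apply, Pi.pow_apply, Nat.cast_ofNat,
    energyDensity, Complex.sq_norm, Complex.normSq_apply]
  rw [← heq, hφy, hφ₂]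
  simp only [← Complex.ofReal_pow, Complex.add_re, Complex.add_im, Complex.sub_re, Complex.sub_im,
    Complex.mul_re, Complex.mul_im, Complex.conj_re, Complex.conj_im, Complex.ofReal_re,
    Complex.ofReal_im, Complex.I_re, Complex.I_im, Complex.re_ofNat, Complex.im_ofNat]
  ring

theorem continuous_boundaryForm (hφ : ContDiff ℝ 3 φ) (hσ : ContDiff ℝ 1 σ) :
    Continuous (boundaryForm A B C ξ φ σ) := by
  have := hφ.continuous_iteratedDeriv 3 le_rfl
  have := hφ.continuous_iteratedDeriv 2 (by norm_num)
  have := hσ.continuous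
  have := hσ.continuous_deriv le_rfl
  unfold boundaryForm weight
  fun_prop

theorem mul_boundaryForm_nonneg (hABC : (A, B, C) ≠ (0, 0, 0)) (hA : A ≤ 0)
    (hB : |B| ≤ 3 * A + C) {e : ℝ} (he : |e| = 1) (h₀ : (weight A B C e : ℂ) * σ e = 0)
    (h₁ : ((6 * A * e + B : ℝ) : ℂ) * σ e + weight A B C e * deriv σ e = 0)
    (h₂ : iteratedDeriv 2 φ e = 6 * A * σ e + 2 * ((6 * A * e + B : ℝ) : ℂ) * deriv σ e
      + weight A B C e * iteratedDeriv 2 σ e) :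
    0 ≤ e * boundaryForm A B C ξ φ σ e := by
  by_cases hF : weight A B C e = 0
  · have hneg := mul_deriv_weight_neg hABC hA hB he hF
    rw [hF, Complex.ofReal_zero, zero_mul, add_zero] at h₁
    have hσe : σ e = 0 :=
      (mul_eq_zero.mp h₁).resolve_left (by exact_mod_cast right_ne_zero_of_mul hneg.ne)
    have hW : boundaryForm A B C ξ φ σ e = -(6 * A * e + B) * ‖deriv σ e‖ ^ 2 := by
      simp only [boundaryForm, hσe, h₂, hF, map_zero, mul_zero, zero_mul, add_zero, zero_add,
        sub_zero, zero_sub, Complex.ofReal_zero, Complex.add_re, Complex.neg_re, Complex.mul_re,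
        Complex.mul_im, Complex.re_ofNat, Complex.im_ofNat, Complex.ofReal_re, Complex.ofReal_im,
        Complex.conj_re, Complex.conj_im, Complex.sq_norm, Complex.normSq_apply]
      ring
    rw [hW]
    nlinarith [sq_nonneg ‖deriv σ e‖]
  · have hσe : σ e = 0 := by simpa [hF] using h₀
    have hσ'e : deriv σ e = 0 := by simpa [hF, hσe] using h₁
    simp [boundaryForm, hσe, hσ'e]

theorem continuous_energyDensity (hσ : ContDiff ℝ 2 σ) :
    Continuous (energyDensity A B C ξ σ) := by
  have := hσ.continuous
  have := hσ.continuous_deriv (by norm_num)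
  have := hσ.continuous_iteratedDeriv 2 le_rfl
  unfold energyDensity weight
  fun_prop

theorem integral_energyDensity (hσ : ContDiff ℝ 2 σ) (a b : ℝ) :
    ∫ y in a..b, energyDensity A B C ξ σ y =
      -12 * A * (∫ y in a..b, ‖deriv σ y‖ ^ 2) + -6 * A * ξ ^ 2 * (∫ y in a..b, ‖σ y‖ ^ 2)
        + ∫ y in a..b, weight A B C y *
          (‖iteratedDeriv 2 σ y‖ ^ 2 + 2 * ξ ^ 2 * ‖deriv σ y‖ ^ 2 + ξ ^ 4 * ‖σ y‖ ^ 2) := by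
  have := hσ.continuous
  have := hσ.continuous_deriv (by norm_num)
  have := hσ.continuous_iteratedDeriv 2 le_rfl
  have hi {f : ℝ → ℝ} (hf : Continuous f) : IntervalIntegrable f volume a b :=
    hf.intervalIntegrable a b
  unfold energyDensity
  rw [integral_add (hi (by fun_prop)) (hi (by unfold weight; fun_prop)),
    integral_add (hi (by fun_prop)) (hi (by fun_prop)), intervalIntegral.integral_const_mul,
    intervalIntegral.integral_const_mul]

end OrrSommerfeld

open OrrSommerfeld

/-- Key a priori inequality \eqref{key-apriori}: under condition (ABC), if `φ` is a `C⁴`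
solution of the non-homogeneous Orr–Sommerfeld problem with datum `h` and the quotient
`σ = φ/F` extends to a `C³` function on `[-1,1]`, then
`−12A∫|σ'|² − 6Aξ²∫|σ|² + ∫F(|σ''|² + 2ξ²|σ'|² + ξ⁴|σ|²) ≤ Re ∫ h·conj(σ)`. -/
theorem stmt_7 (A B C : ℝ) (hABC : (A, B, C) ≠ (0, 0, 0)) (hA : A ≤ 0)
    (hB : |B| ≤ 3 * A + C) (ξ : ℝ) (h φ σ : ℝ → ℂ)
    (hh : ContinuousOn h (Set.Icc (-1 : ℝ) 1))
    (hφ : ContDiff ℝ 4 φ)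
    (heq : ∀ y ∈ Set.Ioo (-1 : ℝ) 1,
      iteratedDeriv 4 φ y - 2 * (ξ : ℂ) ^ 2 * iteratedDeriv 2 φ y + (ξ : ℂ) ^ 4 * φ y
        - Complex.I * (ξ : ℂ) *
            (((3 * A * y ^ 2 + B * y + C : ℝ) : ℂ) * (iteratedDeriv 2 φ y - (ξ : ℂ) ^ 2 * φ y)
              - 6 * (A : ℂ) * φ y) = h y)
    (hbc1 : φ (-1) = 0) (hbc2 : φ 1 = 0) (hbc3 : deriv φ (-1) = 0) (hbc4 : deriv φ 1 = 0)
    (hσ : ContDiff ℝ 3 σ)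
    (hφσ : ∀ y ∈ Set.Icc (-1 : ℝ) 1, φ y = ((3 * A * y ^ 2 + B * y + C : ℝ) : ℂ) * σ y) :
    (-12) * A * (∫ y in (-1 : ℝ)..1, ‖deriv σ y‖ ^ 2)
        + (-6) * A * ξ ^ 2 * (∫ y in (-1 : ℝ)..1, ‖σ y‖ ^ 2)
        + (∫ y in (-1 : ℝ)..1, (3 * A * y ^ 2 + B * y + C) *
            (‖iteratedDeriv 2 σ y‖ ^ 2 + 2 * ξ ^ 2 * ‖deriv σ y‖ ^ 2 + ξ ^ 4 * ‖σ y‖ ^ 2))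
      ≤ (∫ y in (-1 : ℝ)..1, h y * (starRingEnd ℂ) (σ y)).re := by
  have hσ₂ : ContDiff ℝ 2 σ := hσ.of_le (by norm_num)
  have hφσ' : EqOn φ (fun y => (weight A B C y : ℂ) * σ y) (Icc (-1) 1) := hφσ
  have hφ₁ := deriv_eqOn_of_eqOn_weight_mul (by norm_num) (hφ.differentiable (by norm_num))
    (hσ₂.differentiable (by norm_num)) hφσ'
  have hφ₂ := iteratedDeriv_two_eqOn_of_eqOn_weight_mul (by norm_num) (hφ.of_le (by norm_num))
    hσ₂ hφσ'
  have hW₁ : 0 ≤ boundaryForm A B C ξ φ σ 1 := by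
    simpa using mul_boundaryForm_nonneg (φ := φ) (ξ := ξ) hABC hA hB (e := 1) (by simp)
      ((hφσ' (by norm_num)).symm.trans hbc2) ((hφ₁ (by norm_num)).symm.trans hbc4)
      (hφ₂ (by norm_num))
  have hW₀ : boundaryForm A B C ξ φ σ (-1) ≤ 0 := by
    simpa using mul_boundaryForm_nonneg (φ := φ) (ξ := ξ) hABC hA hB (e := -1) (by simp)
      ((hφσ' (by norm_num)).symm.trans hbc1) ((hφ₁ (by norm_num)).symm.trans hbc3)
      (hφ₂ (by norm_num))
  refine (integral_energyDensity hσ₂ (-1) 1).symm.trans_le ?_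
  exact integral_le_re_integral_of_hasDerivAt (by norm_num)
    (hh.mul (Complex.continuous_conj.comp hσ.continuous).continuousOn)
    (continuous_energyDensity hσ₂).continuousOn
    (continuous_boundaryForm (hφ.of_le (by norm_num)) (hσ.of_le (by norm_num))).continuousOn
    (fun y hy => hasDerivAt_boundaryForm hφ hσ₂ (hφσ' (Ioo_subset_Icc_self hy))
      (hφ₂ (Ioo_subset_Icc_self hy)) (heq y hy)) (hW₀.trans hW₁)
end

section
/- Let A, B, C satisfy condition (ABC) and F(y) = 3Ay² + By + C, and let L > 0. There exists a constant c > 0 depending only on A, B, C (not on L) such that for every smooth real-valued function σ on [-L,L] × [-1,1] with σ(x,±1) = 0 for all x ∈ [-L,L], setting ψ(x,y) = F(y)σ(x,y), one has: −6A∬_{Q_L}σ_x² − 12A∬_{Q_L}σ_y² + ∬_{Q_L}F(y)(σ_xx² + 2σ_xy² + σ_yy²) ≥ c·∬_{Q_L}(σ_x² + σ_y² + ψ_xx² + 2ψ_xy² + ψ_yy²), where Q_L = (-L,L) × (-1,1) and subscripts denote partial derivatives. -/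
open MeasureTheory intervalIntegral

/-- Partial derivative in the first (horizontal) variable. -/
noncomputable def pdx (f : ℝ → ℝ → ℝ) : ℝ → ℝ → ℝ := fun x y => deriv (fun t => f t y) x

/-- Partial derivative in the second (vertical) variable. -/
noncomputable def pdy (f : ℝ → ℝ → ℝ) : ℝ → ℝ → ℝ := fun x y => deriv (fun t => f x t) y

open Function Set

lemma slice_x (f : ℝ → ℝ → ℝ) (hf : ContDiff ℝ (⊤ : ℕ∞) (uncurry f)) (y : ℝ) :
    ContDiff ℝ (⊤ : ℕ∞) (fun t => f t y) :=
  hf.comp (contDiff_id.prodMk contDiff_const)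

lemma slice_y (f : ℝ → ℝ → ℝ) (hf : ContDiff ℝ (⊤ : ℕ∞) (uncurry f)) (x : ℝ) :
    ContDiff ℝ (⊤ : ℕ∞) (f x) :=
  hf.comp (contDiff_const.prodMk contDiff_id)

lemma pdx_eq (f : ℝ → ℝ → ℝ) (hf : ContDiff ℝ (⊤ : ℕ∞) (uncurry f)) (x y : ℝ) :
    pdx f x y = fderiv ℝ (uncurry f) (x, y) (1, 0) := by
  have h : HasDerivAt (fun t => f t y) (fderiv ℝ (uncurry f) (x, y) (1, 0)) x := by
    have h1 : HasFDerivAt (uncurry f) (fderiv ℝ (uncurry f) (x, y)) (x, y) :=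
      (hf.differentiable (by simp) (x, y)).hasFDerivAt
    have h2 : HasDerivAt (fun t : ℝ => (t, y)) ((1 : ℝ), (0 : ℝ)) x := by
      simpa using (hasDerivAt_id x).prodMk (hasDerivAt_const x y)
    exact (h1.comp_hasDerivAt x h2)
  exact h.deriv

lemma pdy_eq (f : ℝ → ℝ → ℝ) (hf : ContDiff ℝ (⊤ : ℕ∞) (uncurry f)) (x y : ℝ) :
    pdy f x y = fderiv ℝ (uncurry f) (x, y) (0, 1) := by
  have h : HasDerivAt (fun t => f x t) (fderiv ℝ (uncurry f) (x, y) (0, 1)) y := by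
    have h1 : HasFDerivAt (uncurry f) (fderiv ℝ (uncurry f) (x, y)) (x, y) :=
      (hf.differentiable (by simp) (x, y)).hasFDerivAt
    have h2 : HasDerivAt (fun t : ℝ => (x, t)) ((0 : ℝ), (1 : ℝ)) y := by
      simpa using (hasDerivAt_const y x).prodMk (hasDerivAt_id y)
    exact (h1.comp_hasDerivAt y h2)
  exact h.deriv

lemma contDiff_pdx (f : ℝ → ℝ → ℝ) (hf : ContDiff ℝ (⊤ : ℕ∞) (uncurry f)) :
    ContDiff ℝ (⊤ : ℕ∞) (uncurry (pdx f)) := by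
  have : (uncurry (pdx f)) = fun p : ℝ × ℝ => fderiv ℝ (uncurry f) p (1, 0) := by
    funext p
    exact pdx_eq f hf p.1 p.2
  rw [this]
  exact (ContinuousLinearMap.apply ℝ ℝ ((1 : ℝ), (0 : ℝ))).contDiff.comp
    (hf.fderiv_right (by simp))

lemma contDiff_pdy (f : ℝ → ℝ → ℝ) (hf : ContDiff ℝ (⊤ : ℕ∞) (uncurry f)) :
    ContDiff ℝ (⊤ : ℕ∞) (uncurry (pdy f)) := by
  have : (uncurry (pdy f)) = fun p : ℝ × ℝ => fderiv ℝ (uncurry f) p (0, 1) := by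
    funext p
    exact pdy_eq f hf p.1 p.2
  rw [this]
  exact (ContinuousLinearMap.apply ℝ ℝ ((0 : ℝ), (1 : ℝ))).contDiff.comp
    (hf.fderiv_right (by simp))

lemma cs_int (f : ℝ → ℝ) (hf : Continuous f) {a b : ℝ} (hab : a ≤ b) :
    (∫ t in a..b, f t) ^ 2 ≤ (b - a) * ∫ t in a..b, (f t) ^ 2 := by
  rcases eq_or_lt_of_le hab with h | h
  · subst h; simp
  · set I := ∫ t in a..b, f t with hI
    have h0 : 0 ≤ ∫ t in a..b, ((b - a) * f t - I) ^ 2 :=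
      integral_nonneg hab (fun t _ => sq_nonneg _)
    have e : ∫ t in a..b, ((b - a) * f t - I) ^ 2
        = (b - a) ^ 2 * (∫ t in a..b, (f t) ^ 2) - (b - a) * I ^ 2 := by
      have hptw : ∀ t, ((b - a) * f t - I) ^ 2
          = (b - a) ^ 2 * (f t) ^ 2 - (2 * (b - a) * I) * f t + I ^ 2 := by
        intro t; ring
      simp_rw [hptw]
      erw [integral_add ((((hf.pow 2).intervalIntegrable a b).const_mul _).sub
            ((hf.intervalIntegrable a b).const_mul _)) intervalIntegrable_const,
          integral_sub (((hf.pow 2).intervalIntegrable a b).const_mul _)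
            ((hf.intervalIntegrable a b).const_mul _),
          intervalIntegral.integral_const_mul, intervalIntegral.integral_const_mul, intervalIntegral.integral_const,
          ← hI, smul_eq_mul]
      simp only [Pi.pow_apply]
      ring
    rw [e] at h0
    nlinarith [h.le]

lemma deriv_contDiff_top {u : ℝ → ℝ} (hu : ContDiff ℝ (⊤ : ℕ∞) u) : ContDiff ℝ (⊤ : ℕ∞) (deriv u) := by
  have h : deriv u = fun y => fderiv ℝ u y 1 := by
    funext y; exact (fderiv_apply_one_eq_deriv).symm
  rw [h]
  exact (ContinuousLinearMap.apply ℝ ℝ (1 : ℝ)).contDiff.comp (hu.fderiv_right (by simp))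

lemma hardy_sq (u : ℝ → ℝ) (hu : ContDiff ℝ (⊤ : ℕ∞) u) (h0 : u (-1) = 0) {y : ℝ}
    (hy : y ∈ Set.Icc (-1 : ℝ) 1) :
    (u y) ^ 2 ≤ (1 + y) * ∫ t in (-1 : ℝ)..1, (deriv u t) ^ 2 := by
  have hfc : Continuous (deriv u) := (deriv_contDiff_top hu).continuous
  have e : ∫ t in (-1 : ℝ)..y, deriv u t = u y - u (-1) :=
    integral_deriv_eq_sub (fun x _ => hu.differentiable (by simp) x)
      (hfc.intervalIntegrable _ _)
  rw [h0, sub_zero] at e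
  calc (u y) ^ 2 = (∫ t in (-1 : ℝ)..y, deriv u t) ^ 2 := by rw [e]
    _ ≤ (y - (-1)) * ∫ t in (-1 : ℝ)..y, (deriv u t) ^ 2 := cs_int _ hfc (by linarith [hy.1])
    _ ≤ (1 + y) * ∫ t in (-1 : ℝ)..1, (deriv u t) ^ 2 := by
        have hm : (∫ t in (-1 : ℝ)..y, (deriv u t) ^ 2)
            ≤ ∫ t in (-1 : ℝ)..1, (deriv u t) ^ 2 :=
          integral_mono_interval le_rfl hy.1 hy.2
            (Filter.Eventually.of_forall fun t => sq_nonneg _)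
            ((hfc.pow 2).intervalIntegrable _ _)
        have h1 : (0 : ℝ) ≤ 1 + y := by linarith [hy.1]
        calc (y - (-1)) * ∫ t in (-1 : ℝ)..y, (deriv u t) ^ 2
            = (1 + y) * ∫ t in (-1 : ℝ)..y, (deriv u t) ^ 2 := by ring_nf
          _ ≤ (1 + y) * ∫ t in (-1 : ℝ)..1, (deriv u t) ^ 2 :=
              mul_le_mul_of_nonneg_left hm h1

lemma ibp_sq (u : ℝ → ℝ) (hu : ContDiff ℝ (⊤ : ℕ∞) u) (ha : u (-1) = 0) (hb : u 1 = 0) :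
    ∫ y in (-1 : ℝ)..1, (deriv u y) ^ 2
      = - ∫ y in (-1 : ℝ)..1, u y * deriv (deriv u) y := by
  have hd1 : ContDiff ℝ (⊤ : ℕ∞) (deriv u) := deriv_contDiff_top hu
  have hd2 : Continuous (deriv (deriv u)) := (deriv_contDiff_top hd1).continuous
  have h := integral_deriv_mul_eq_sub (a := (-1 : ℝ)) (b := 1)
    (u := u) (v := deriv u) (u' := deriv u) (v' := deriv (deriv u))
    (fun x _ => (hu.differentiable (by simp) x).hasDerivAt)
    (fun x _ => (hd1.differentiable (by simp) x).hasDerivAt)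
    (hd1.continuous.intervalIntegrable _ _) (hd2.intervalIntegrable _ _)
  rw [ha, hb] at h
  simp only [zero_mul, sub_zero, sub_self] at h
  have hc1 : Continuous (fun y => deriv u y * deriv u y) :=
    hd1.continuous.mul hd1.continuous
  have hc2 : Continuous (fun y => u y * deriv (deriv u) y) := hu.continuous.mul hd2
  rw [integral_add (hc1.intervalIntegrable _ _) (hc2.intervalIntegrable _ _)] at h
  have hsq : (∫ y in (-1 : ℝ)..1, deriv u y * deriv u y)
      = ∫ y in (-1 : ℝ)..1, (deriv u y) ^ 2 := by
    apply integral_congr; intro y _; ring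
  linarith [h, hsq.ge, hsq.le]

/-- weighted Poincaré: `∫ u² ≤ 8 ∫ (1+y) u'²` when `u 1 = 0`. -/
lemma w0 (u : ℝ → ℝ) (hu : ContDiff ℝ (⊤ : ℕ∞) u) (hb : u 1 = 0) :
    ∫ y in (-1 : ℝ)..1, (u y) ^ 2
      ≤ 8 * ∫ y in (-1 : ℝ)..1, (1 + y) * (deriv u y) ^ 2 := by
  have hd1 : Continuous (deriv u) := (deriv_contDiff_top hu).continuous
  have hcu : Continuous u := hu.continuous
  have hcA : Continuous (fun y : ℝ => (u y) ^ 2) := hcu.pow 2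
  have hcB : Continuous (fun y : ℝ => (1 + y) * (2 * u y * deriv u y)) := by
    have : Continuous (fun y : ℝ => (1 : ℝ) + y) := continuous_const.add continuous_id
    exact this.mul ((continuous_const.mul hcu).mul hd1)
  have hcC : Continuous (fun y : ℝ => (1 / 2) * (u y) ^ 2
      + 4 * ((1 + y) * (deriv u y) ^ 2)) := by
    have h1 : Continuous (fun y : ℝ => (1 : ℝ) + y) := continuous_const.add continuous_id
    exact (continuous_const.mul hcA).add (continuous_const.mul (h1.mul (hd1.pow 2)))
  have hcD : Continuous (fun y : ℝ => (1 + y) * (deriv u y) ^ 2) := by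
    have h1 : Continuous (fun y : ℝ => (1 : ℝ) + y) := continuous_const.add continuous_id
    exact h1.mul (hd1.pow 2)
  have key := integral_deriv_mul_eq_sub (a := (-1 : ℝ)) (b := 1)
    (u := fun y => 1 + y) (v := fun y => (u y) ^ 2) (u' := fun _ => (1 : ℝ))
    (v' := fun y => 2 * u y * deriv u y)
    (fun x _ => by simpa using ((hasDerivAt_id x).const_add 1))
    (fun x _ => by
      have h := ((hu.differentiable (by simp) x).hasDerivAt (𝕜 := ℝ)).pow 2
      simpa [mul_comm, mul_assoc, Pi.pow_def] using h)
    intervalIntegrable_const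
    (((continuous_const.mul hcu).mul hd1).intervalIntegrable _ _)
  have keyL : ∫ y in (-1 : ℝ)..1, ((1 : ℝ) * (u y) ^ 2 + (1 + y) * (2 * u y * deriv u y))
      = 0 := key.trans (by norm_num [hb])
  have keyM : (∫ y in (-1 : ℝ)..1, (u y) ^ 2)
      + (∫ y in (-1 : ℝ)..1, (1 + y) * (2 * u y * deriv u y)) = 0 := by
    rw [← integral_add (hcA.intervalIntegrable _ _) (hcB.intervalIntegrable _ _), ← keyL]
    apply integral_congr; intro y _; ring
  have hptw : ∀ y ∈ Set.Icc (-1 : ℝ) 1,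
      -((1 + y) * (2 * u y * deriv u y))
        ≤ (1 / 2) * (u y) ^ 2 + 4 * ((1 + y) * (deriv u y) ^ 2) := by
    intro y hy
    have hw0 : (0 : ℝ) ≤ 1 + y := by linarith [hy.1]
    have hw2 : (1 : ℝ) + y ≤ 2 := by linarith [hy.2]
    nlinarith [sq_nonneg (u y + 2 * (1 + y) * deriv u y),
      mul_nonneg (mul_nonneg hw0 (by linarith : (0 : ℝ) ≤ 2 - (1 + y)))
        (sq_nonneg (deriv u y))]
  have hmono : (∫ y in (-1 : ℝ)..1, -((1 + y) * (2 * u y * deriv u y)))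
      ≤ ∫ y in (-1 : ℝ)..1, ((1 / 2) * (u y) ^ 2 + 4 * ((1 + y) * (deriv u y) ^ 2)) :=
    integral_mono_on (by norm_num) (hcB.neg.intervalIntegrable _ _)
      (hcC.intervalIntegrable _ _) hptw
  rw [intervalIntegral.integral_neg] at hmono
  have hsplit2 : ∫ y in (-1 : ℝ)..1, ((1 / 2) * (u y) ^ 2 + 4 * ((1 + y) * (deriv u y) ^ 2))
      = (1 / 2) * (∫ y in (-1 : ℝ)..1, (u y) ^ 2)
        + 4 * ∫ y in (-1 : ℝ)..1, (1 + y) * (deriv u y) ^ 2 := by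
    rw [integral_add ((hcA.intervalIntegrable _ _).const_mul _)
      ((hcD.intervalIntegrable _ _).const_mul _),
      intervalIntegral.integral_const_mul, intervalIntegral.integral_const_mul]
  rw [hsplit2] at hmono
  linarith [keyM, hmono]

section
variable (u : ℝ → ℝ)

lemma deriv_contDiff_top' {u : ℝ → ℝ} (hu : ContDiff ℝ (⊤ : ℕ∞) u) : ContDiff ℝ (⊤ : ℕ∞) (deriv u) := by
  have h : deriv u = fun y => fderiv ℝ u y 1 := by
    funext y; exact (fderiv_apply_one_eq_deriv).symm
  rw [h]
  exact (ContinuousLinearMap.apply ℝ ℝ (1 : ℝ)).contDiff.comp (hu.fderiv_right (by simp))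

/-- `∫ u'² ≤ 2 ∫ (1+y) u''²` for `u(±1)=0`. -/
lemma wD2 (u : ℝ → ℝ) (hu : ContDiff ℝ (⊤ : ℕ∞) u) (ha : u (-1) = 0) (hb : u 1 = 0) :
    ∫ y in (-1 : ℝ)..1, (deriv u y) ^ 2
      ≤ 2 * ∫ y in (-1 : ℝ)..1, (1 + y) * (deriv (deriv u) y) ^ 2 := by
  have hd1 : ContDiff ℝ (⊤ : ℕ∞) (deriv u) := deriv_contDiff_top' hu
  have hd2 : Continuous (deriv (deriv u)) := (deriv_contDiff_top' hd1).continuous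
  have hcu : Continuous u := hu.continuous
  set K := ∫ y in (-1 : ℝ)..1, (deriv u y) ^ 2 with hK
  have hK0 : 0 ≤ K := integral_nonneg (by norm_num) (fun _ _ => sq_nonneg _)
  have hibp : K = - ∫ y in (-1 : ℝ)..1, u y * deriv (deriv u) y := ibp_sq u hu ha hb
  have hptw : ∀ y ∈ Set.Icc (-1 : ℝ) 1,
      -(u y * deriv (deriv u) y) ≤ K / 4 + (1 + y) * (deriv (deriv u) y) ^ 2 := by
    intro y hy
    have hw0 : (0 : ℝ) ≤ 1 + y := by linarith [hy.1]
    have husq : (u y) ^ 2 ≤ (1 + y) * K := hardy_sq u hu ha hy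
    have h2 : 0 ≤ K / 4 + (1 + y) * (deriv (deriv u) y) ^ 2 := by positivity
    nlinarith [sq_nonneg (K / 4 - (1 + y) * (deriv (deriv u) y) ^ 2),
      mul_le_mul_of_nonneg_right husq (sq_nonneg (deriv (deriv u) y)), h2,
      sq_nonneg (u y * deriv (deriv u) y)]
  have hcB : Continuous (fun y : ℝ => -(u y * deriv (deriv u) y)) := (hcu.mul hd2).neg
  have hcC : Continuous (fun y : ℝ => K / 4 + (1 + y) * (deriv (deriv u) y) ^ 2) := by
    have h1 : Continuous (fun y : ℝ => (1 : ℝ) + y) := continuous_const.add continuous_id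
    exact continuous_const.add (h1.mul (hd2.pow 2))
  have hcD : Continuous (fun y : ℝ => (1 + y) * (deriv (deriv u) y) ^ 2) := by
    have h1 : Continuous (fun y : ℝ => (1 : ℝ) + y) := continuous_const.add continuous_id
    exact h1.mul (hd2.pow 2)
  have hmono : (∫ y in (-1 : ℝ)..1, -(u y * deriv (deriv u) y))
      ≤ ∫ y in (-1 : ℝ)..1, (K / 4 + (1 + y) * (deriv (deriv u) y) ^ 2) :=
    integral_mono_on (by norm_num) (hcB.intervalIntegrable _ _)
      (hcC.intervalIntegrable _ _) hptw
  rw [intervalIntegral.integral_neg] at hmono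
  have hsplit : ∫ y in (-1 : ℝ)..1, (K / 4 + (1 + y) * (deriv (deriv u) y) ^ 2)
      = K / 2 + ∫ y in (-1 : ℝ)..1, (1 + y) * (deriv (deriv u) y) ^ 2 := by
    rw [integral_add intervalIntegrable_const (hcD.intervalIntegrable _ _),
      intervalIntegral.integral_const, smul_eq_mul]
    ring
  rw [hsplit] at hmono
  linarith [hibp, hmono]

/-- reflected versions. -/
lemma w0' (u : ℝ → ℝ) (hu : ContDiff ℝ (⊤ : ℕ∞) u) (ha : u (-1) = 0) :
    ∫ y in (-1 : ℝ)..1, (u y) ^ 2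
      ≤ 8 * ∫ y in (-1 : ℝ)..1, (1 - y) * (deriv u y) ^ 2 := by
  have hg : ContDiff ℝ (⊤ : ℕ∞) (fun y => u (-y)) := hu.comp (contDiff_id.neg)
  have h := w0 (fun y => u (-y)) hg (by simpa using ha)
  have e1 : (∫ y in (-1 : ℝ)..1, (u (-y)) ^ 2) = ∫ y in (-1 : ℝ)..1, (u y) ^ 2 := by
    simpa using integral_comp_neg (a := (-1 : ℝ)) (b := 1) (f := fun y => (u y) ^ 2)
  have e2 : (∫ y in (-1 : ℝ)..1, (1 + y) * (deriv (fun t => u (-t)) y) ^ 2)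
      = ∫ y in (-1 : ℝ)..1, (1 - y) * (deriv u y) ^ 2 := by
    have step : (∫ y in (-1 : ℝ)..1, (1 + y) * (deriv (fun t => u (-t)) y) ^ 2)
        = ∫ y in (-1 : ℝ)..1, (1 - (-y)) * (deriv u (-y)) ^ 2 := by
      apply integral_congr; intro y _; beta_reduce
      rw [deriv_comp_neg]; ring
    rw [step]
    simpa using integral_comp_neg (a := (-1 : ℝ)) (b := 1)
      (f := fun y => (1 - y) * (deriv u y) ^ 2)
  calc ∫ y in (-1 : ℝ)..1, (u y) ^ 2 = ∫ y in (-1 : ℝ)..1, (u (-y)) ^ 2 := e1.symm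
    _ ≤ 8 * ∫ y in (-1 : ℝ)..1, (1 + y) * (deriv (fun t => u (-t)) y) ^ 2 := h
    _ = 8 * ∫ y in (-1 : ℝ)..1, (1 - y) * (deriv u y) ^ 2 := by rw [e2]

lemma wD2' (u : ℝ → ℝ) (hu : ContDiff ℝ (⊤ : ℕ∞) u) (ha : u (-1) = 0) (hb : u 1 = 0) :
    ∫ y in (-1 : ℝ)..1, (deriv u y) ^ 2
      ≤ 2 * ∫ y in (-1 : ℝ)..1, (1 - y) * (deriv (deriv u) y) ^ 2 := by
  have hg : ContDiff ℝ (⊤ : ℕ∞) (fun y => u (-y)) := hu.comp (contDiff_id.neg)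
  have h := wD2 (fun y => u (-y)) hg (by simpa using hb) (by simpa using ha)
  have hdd : ∀ y : ℝ, deriv (deriv (fun t => u (-t))) y = deriv (deriv u) (-y) := by
    intro y
    have h1 : (deriv (fun t => u (-t))) = fun t => -deriv u (-t) := by
      funext t; rw [deriv_comp_neg]
    rw [h1]
    have h2 : deriv (fun t => -deriv u (-t)) y = -deriv (fun t => deriv u (-t)) y := by
      apply deriv.neg
    rw [h2, deriv_comp_neg, neg_neg]
  have e1 : (∫ y in (-1 : ℝ)..1, (deriv (fun t => u (-t)) y) ^ 2)
      = ∫ y in (-1 : ℝ)..1, (deriv u y) ^ 2 := by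
    have step : (∫ y in (-1 : ℝ)..1, (deriv (fun t => u (-t)) y) ^ 2)
        = ∫ y in (-1 : ℝ)..1, (deriv u (-y)) ^ 2 := by
      apply integral_congr; intro y _; beta_reduce
      rw [deriv_comp_neg]; ring
    rw [step]
    simpa using integral_comp_neg (a := (-1 : ℝ)) (b := 1) (f := fun y => (deriv u y) ^ 2)
  have e2 : (∫ y in (-1 : ℝ)..1, (1 + y) * (deriv (deriv (fun t => u (-t))) y) ^ 2)
      = ∫ y in (-1 : ℝ)..1, (1 - y) * (deriv (deriv u) y) ^ 2 := by
    have step : (∫ y in (-1 : ℝ)..1, (1 + y) * (deriv (deriv (fun t => u (-t))) y) ^ 2)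
        = ∫ y in (-1 : ℝ)..1, (1 - (-y)) * (deriv (deriv u) (-y)) ^ 2 := by
      apply integral_congr; intro y _; beta_reduce
      rw [hdd]; ring
    rw [step]
    simpa using integral_comp_neg (a := (-1 : ℝ)) (b := 1)
      (f := fun y => (1 - y) * (deriv (deriv u) y) ^ 2)
  calc ∫ y in (-1 : ℝ)..1, (deriv u y) ^ 2
      = ∫ y in (-1 : ℝ)..1, (deriv (fun t => u (-t)) y) ^ 2 := e1.symm
    _ ≤ 2 * ∫ y in (-1 : ℝ)..1, (1 + y) * (deriv (deriv (fun t => u (-t))) y) ^ 2 := h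
    _ = 2 * ∫ y in (-1 : ℝ)..1, (1 - y) * (deriv (deriv u) y) ^ 2 := by rw [e2]

/-- unweighted Poincaré `∫u² ≤ 16∫u'²` from w0 -/
lemma p0 (u : ℝ → ℝ) (hu : ContDiff ℝ (⊤ : ℕ∞) u) (hb : u 1 = 0) :
    ∫ y in (-1 : ℝ)..1, (u y) ^ 2 ≤ 16 * ∫ y in (-1 : ℝ)..1, (deriv u y) ^ 2 := by
  have hd1 : Continuous (deriv u) := (deriv_contDiff_top' hu).continuous
  have h := w0 u hu hb
  have hcD : Continuous (fun y : ℝ => (1 + y) * (deriv u y) ^ 2) := by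
    have h1 : Continuous (fun y : ℝ => (1 : ℝ) + y) := continuous_const.add continuous_id
    exact h1.mul (hd1.pow 2)
  have hmono : (∫ y in (-1 : ℝ)..1, (1 + y) * (deriv u y) ^ 2)
      ≤ ∫ y in (-1 : ℝ)..1, 2 * (deriv u y) ^ 2 := by
    apply integral_mono_on (by norm_num) (hcD.intervalIntegrable _ _)
      ((continuous_const.mul (hd1.pow 2)).intervalIntegrable _ _)
    intro y hy
    show (1 + y) * deriv u y ^ 2 ≤ 2 * deriv u y ^ 2
    nlinarith [sq_nonneg (deriv u y), hy.1, hy.2]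
  rw [intervalIntegral.integral_const_mul] at hmono
  linarith
end

section prodrule
variable (g g' g'' : ℝ → ℝ) (σ : ℝ → ℝ → ℝ)

lemma pdx_gmul (hσ : ContDiff ℝ (⊤ : ℕ∞) (uncurry σ)) (x y : ℝ) :
    pdx (fun x y => g y * σ x y) x y = g y * pdx σ x y :=
  (((slice_x σ hσ y).differentiable (by simp) x).hasDerivAt.const_mul (g y)).deriv

lemma pdxx_gmul (hσ : ContDiff ℝ (⊤ : ℕ∞) (uncurry σ)) (x y : ℝ) :
    pdx (pdx (fun x y => g y * σ x y)) x y = g y * pdx (pdx σ) x y := by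
  have hrw : (fun t => pdx (fun a b => g b * σ a b) t y) = fun t => g y * pdx σ t y :=
    funext fun t => pdx_gmul g σ hσ t y
  show deriv (fun t => pdx (fun a b => g b * σ a b) t y) x = _
  rw [hrw]
  exact (((slice_x (pdx σ) (contDiff_pdx σ hσ) y).differentiable (by simp)
    x).hasDerivAt.const_mul (g y)).deriv

lemma pdxy_gmul (hσ : ContDiff ℝ (⊤ : ℕ∞) (uncurry σ)) (hg : ∀ t, HasDerivAt g (g' t) t) (x y : ℝ) :
    pdy (pdx (fun x y => g y * σ x y)) x y
      = g' y * pdx σ x y + g y * pdy (pdx σ) x y := by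
  have hrw : (fun s => pdx (fun a b => g b * σ a b) x s) = fun s => g s * pdx σ x s :=
    funext fun s => pdx_gmul g σ hσ x s
  show deriv (fun s => pdx (fun a b => g b * σ a b) x s) y = _
  rw [hrw]
  exact ((hg y).mul
    ((slice_y (pdx σ) (contDiff_pdx σ hσ) x).differentiable (by simp) y).hasDerivAt).deriv

lemma pdy_gmul (hσ : ContDiff ℝ (⊤ : ℕ∞) (uncurry σ)) (hg : ∀ t, HasDerivAt g (g' t) t) (x y : ℝ) :
    pdy (fun x y => g y * σ x y) x y = g' y * σ x y + g y * pdy σ x y :=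
  ((hg y).mul ((slice_y σ hσ x).differentiable (by simp) y).hasDerivAt).deriv

lemma pdyy_gmul (hσ : ContDiff ℝ (⊤ : ℕ∞) (uncurry σ)) (hg : ∀ t, HasDerivAt g (g' t) t)
    (hg' : ∀ t, HasDerivAt g' (g'' t) t) (x y : ℝ) :
    pdy (pdy (fun x y => g y * σ x y)) x y
      = g'' y * σ x y + g' y * pdy σ x y + (g' y * pdy σ x y + g y * pdy (pdy σ) x y) := by
  have hrw : (fun s => pdy (fun a b => g b * σ a b) x s)
      = fun s => g' s * σ x s + g s * pdy σ x s :=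
    funext fun s => pdy_gmul g g' σ hσ hg x s
  show deriv (fun s => pdy (fun a b => g b * σ a b) x s) y = _
  rw [hrw]
  exact (((hg' y).mul ((slice_y σ hσ x).differentiable (by simp) y).hasDerivAt).add
    ((hg y).mul
      ((slice_y (pdy σ) (contDiff_pdy σ hσ) x).differentiable (by simp) y).hasDerivAt)).deriv

end prodrule

lemma F_nonneg (A B C : ℝ) (hA : A ≤ 0) (hB : |B| ≤ 3 * A + C) {y : ℝ}
    (hy : y ∈ Set.Icc (-1 : ℝ) 1) : 0 ≤ 3 * A * y ^ 2 + B * y + C := by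
  have h1 : |B * y| ≤ |B| := by
    rw [abs_mul]
    exact mul_le_of_le_one_right (abs_nonneg B) (abs_le.mpr ⟨hy.1, hy.2⟩)
  have h2 : -|B| ≤ B * y := by
    have := neg_abs_le (B * y); linarith
  have h3 : 0 ≤ (-A) * (1 - y ^ 2) :=
    mul_nonneg (by linarith) (by nlinarith [hy.1, hy.2])
  nlinarith [h3, h2, hB]

/-- The key coercivity property. -/
def KeyProp (A B C K3 : ℝ) : Prop :=
  ∀ u v p : ℝ → ℝ, ContDiff ℝ (⊤ : ℕ∞) u → ContDiff ℝ (⊤ : ℕ∞) v → Continuous p →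
    u (-1) = 0 → u 1 = 0 → v (-1) = 0 → v 1 = 0 →
    (∫ y in (-1 : ℝ)..1, (v y) ^ 2) + (∫ y in (-1 : ℝ)..1, (deriv u y) ^ 2)
      ≤ K3 * ((-6) * A * (∫ y in (-1 : ℝ)..1, (v y) ^ 2)
        + (-12) * A * (∫ y in (-1 : ℝ)..1, (deriv u y) ^ 2)
        + ∫ y in (-1 : ℝ)..1, (3 * A * y ^ 2 + B * y + C) *
            ((p y) ^ 2 + 2 * (deriv v y) ^ 2 + (deriv (deriv u) y) ^ 2))

lemma key_neg (A B C : ℝ) (hA : A < 0) (hB : |B| ≤ 3 * A + C) :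
    KeyProp A B C (-6 * A)⁻¹ := by
  intro u v p hu hv hp hua hub hva hvb
  have h6 : 0 < -6 * A := by linarith
  have hX0 : 0 ≤ ∫ y in (-1 : ℝ)..1, (v y) ^ 2 :=
    integral_nonneg (by norm_num) fun _ _ => sq_nonneg _
  have hY0 : 0 ≤ ∫ y in (-1 : ℝ)..1, (deriv u y) ^ 2 :=
    integral_nonneg (by norm_num) fun _ _ => sq_nonneg _
  have hZ0 : 0 ≤ ∫ y in (-1 : ℝ)..1, (3 * A * y ^ 2 + B * y + C) *
      ((p y) ^ 2 + 2 * (deriv v y) ^ 2 + (deriv (deriv u) y) ^ 2) :=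
    integral_nonneg (by norm_num) fun y hy =>
      mul_nonneg (F_nonneg A B C hA.le hB hy) (by positivity)
  rw [inv_mul_eq_div, le_div_iff₀ h6]
  nlinarith [mul_nonneg h6.le hY0]

set_option maxHeartbeats 2000000 in
lemma key_zero (A B C : ℝ) (hA0 : A = 0) (hC : 0 < C) (hBC : |B| ≤ C) :
    KeyProp A B C (12 / C) := by
  subst hA0
  intro u v p hu hv hp hua hub hva hvb
  have hcv : Continuous (deriv v) := (deriv_contDiff_top hv).continuous
  have hcu2 : Continuous (deriv (deriv u)) :=
    (deriv_contDiff_top (deriv_contDiff_top hu)).continuous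
  have hF0 : ∀ y ∈ Set.Icc (-1 : ℝ) 1, 0 ≤ B * y + C := by
    intro y hy
    have := F_nonneg 0 B C le_rfl (by simpa using hBC) hy
    linarith [this]
  set X := ∫ y in (-1 : ℝ)..1, (v y) ^ 2 with hXdef
  set Y := ∫ y in (-1 : ℝ)..1, (deriv u y) ^ 2 with hYdef
  set E1 := ∫ y in (-1 : ℝ)..1, (B * y + C) * (p y) ^ 2 with hE1def
  set E2 := ∫ y in (-1 : ℝ)..1, (B * y + C) * (deriv v y) ^ 2 with hE2def
  set E3 := ∫ y in (-1 : ℝ)..1, (B * y + C) * (deriv (deriv u) y) ^ 2 with hE3def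
  have hE10 : 0 ≤ E1 := integral_nonneg (by norm_num) fun y hy =>
    mul_nonneg (hF0 y hy) (sq_nonneg _)
  have hE20 : 0 ≤ E2 := integral_nonneg (by norm_num) fun y hy =>
    mul_nonneg (hF0 y hy) (sq_nonneg _)
  have hE30 : 0 ≤ E3 := integral_nonneg (by norm_num) fun y hy =>
    mul_nonneg (hF0 y hy) (sq_nonneg _)
  have hcF : Continuous (fun y : ℝ => B * y + C) := by fun_prop
  have hsplit : (∫ y in (-1 : ℝ)..1, (3 * 0 * y ^ 2 + B * y + C) *
      ((p y) ^ 2 + 2 * (deriv v y) ^ 2 + (deriv (deriv u) y) ^ 2))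
      = E1 + 2 * E2 + E3 := by
    have h1 : (∫ y in (-1 : ℝ)..1, (3 * 0 * y ^ 2 + B * y + C) *
        ((p y) ^ 2 + 2 * (deriv v y) ^ 2 + (deriv (deriv u) y) ^ 2))
        = ∫ y in (-1 : ℝ)..1, ((B * y + C) * (p y) ^ 2
          + (2 * ((B * y + C) * (deriv v y) ^ 2)
            + (B * y + C) * (deriv (deriv u) y) ^ 2)) := by
      apply integral_congr; intro y _; ring
    erw [h1, integral_add ((hcF.mul (hp.pow 2)).intervalIntegrable _ _)
        (((continuous_const.mul (hcF.mul (hcv.pow 2))).add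
          (hcF.mul (hcu2.pow 2))).intervalIntegrable _ _),
      integral_add ((continuous_const.mul (hcF.mul (hcv.pow 2))).intervalIntegrable _ _)
        ((hcF.mul (hcu2.pow 2)).intervalIntegrable _ _),
      intervalIntegral.integral_const_mul]
    simp only [Pi.mul_apply, Pi.pow_apply]
    ring
  -- weighted estimates, by sign of B
  have hmain : C * X ≤ 16 * E2 ∧ C * Y ≤ 4 * E3 := by
    rcases le_or_gt 0 B with hBpos | hBneg
    · have hBC' : B ≤ C := (abs_le.mp hBC).2
      have hX8 : X ≤ 8 * ∫ y in (-1 : ℝ)..1, (1 + y) * (deriv v y) ^ 2 := w0 v hv hvb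
      have hY2 : Y ≤ 2 * ∫ y in (-1 : ℝ)..1, (1 + y) * (deriv (deriv u) y) ^ 2 :=
        wD2 u hu hua hub
      have hw2 : C * (∫ y in (-1 : ℝ)..1, (1 + y) * (deriv v y) ^ 2) ≤ 2 * E2 := by
        rw [← intervalIntegral.integral_const_mul, ← intervalIntegral.integral_const_mul]
        apply integral_mono_on (by norm_num)
          ((continuous_const.mul ((by fun_prop : Continuous fun y : ℝ => (1 + y))
            |>.mul (hcv.pow 2))).intervalIntegrable _ _)
          ((continuous_const.mul (hcF.mul (hcv.pow 2))).intervalIntegrable _ _)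
        intro y hy
        simp only [Pi.mul_apply, Pi.pow_apply]
        nlinarith [mul_nonneg (mul_nonneg (by linarith : (0:ℝ) ≤ C - B)
            (by linarith [hy.2] : (0:ℝ) ≤ 1 - y)) (sq_nonneg (deriv v y)),
          mul_nonneg (mul_nonneg hBpos (by linarith [hy.1] : (0:ℝ) ≤ 1 + y))
            (sq_nonneg (deriv v y))]
      have hw3 : C * (∫ y in (-1 : ℝ)..1, (1 + y) * (deriv (deriv u) y) ^ 2) ≤ 2 * E3 := by
        rw [← intervalIntegral.integral_const_mul, ← intervalIntegral.integral_const_mul]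
        apply integral_mono_on (by norm_num)
          ((continuous_const.mul ((by fun_prop : Continuous fun y : ℝ => (1 + y))
            |>.mul (hcu2.pow 2))).intervalIntegrable _ _)
          ((continuous_const.mul (hcF.mul (hcu2.pow 2))).intervalIntegrable _ _)
        intro y hy
        simp only [Pi.mul_apply, Pi.pow_apply]
        nlinarith [mul_nonneg (mul_nonneg (by linarith : (0:ℝ) ≤ C - B)
            (by linarith [hy.2] : (0:ℝ) ≤ 1 - y)) (sq_nonneg (deriv (deriv u) y)),
          mul_nonneg (mul_nonneg hBpos (by linarith [hy.1] : (0:ℝ) ≤ 1 + y))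
            (sq_nonneg (deriv (deriv u) y))]
      constructor
      · nlinarith [mul_le_mul_of_nonneg_left hX8 hC.le]
      · nlinarith [mul_le_mul_of_nonneg_left hY2 hC.le]
    · have hBC' : -C ≤ B := (abs_le.mp hBC).1
      have hX8 : X ≤ 8 * ∫ y in (-1 : ℝ)..1, (1 - y) * (deriv v y) ^ 2 := w0' v hv hva
      have hY2 : Y ≤ 2 * ∫ y in (-1 : ℝ)..1, (1 - y) * (deriv (deriv u) y) ^ 2 :=
        wD2' u hu hua hub
      have hw2 : C * (∫ y in (-1 : ℝ)..1, (1 - y) * (deriv v y) ^ 2) ≤ 2 * E2 := by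
        rw [← intervalIntegral.integral_const_mul, ← intervalIntegral.integral_const_mul]
        apply integral_mono_on (by norm_num)
          ((continuous_const.mul ((by fun_prop : Continuous fun y : ℝ => (1 - y))
            |>.mul (hcv.pow 2))).intervalIntegrable _ _)
          ((continuous_const.mul (hcF.mul (hcv.pow 2))).intervalIntegrable _ _)
        intro y hy
        simp only [Pi.mul_apply, Pi.pow_apply]
        nlinarith [mul_nonneg (mul_nonneg (by linarith : (0:ℝ) ≤ C + B)
            (by linarith [hy.1] : (0:ℝ) ≤ 1 + y)) (sq_nonneg (deriv v y)),
          mul_nonneg (mul_nonneg (by linarith : (0:ℝ) ≤ -B)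
            (by linarith [hy.2] : (0:ℝ) ≤ 1 - y)) (sq_nonneg (deriv v y))]
      have hw3 : C * (∫ y in (-1 : ℝ)..1, (1 - y) * (deriv (deriv u) y) ^ 2) ≤ 2 * E3 := by
        rw [← intervalIntegral.integral_const_mul, ← intervalIntegral.integral_const_mul]
        apply integral_mono_on (by norm_num)
          ((continuous_const.mul ((by fun_prop : Continuous fun y : ℝ => (1 - y))
            |>.mul (hcu2.pow 2))).intervalIntegrable _ _)
          ((continuous_const.mul (hcF.mul (hcu2.pow 2))).intervalIntegrable _ _)
        intro y hy
        simp only [Pi.mul_apply, Pi.pow_apply]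
        nlinarith [mul_nonneg (mul_nonneg (by linarith : (0:ℝ) ≤ C + B)
            (by linarith [hy.1] : (0:ℝ) ≤ 1 + y)) (sq_nonneg (deriv (deriv u) y)),
          mul_nonneg (mul_nonneg (by linarith : (0:ℝ) ≤ -B)
            (by linarith [hy.2] : (0:ℝ) ≤ 1 - y)) (sq_nonneg (deriv (deriv u) y))]
      constructor
      · nlinarith [mul_le_mul_of_nonneg_left hX8 hC.le]
      · nlinarith [mul_le_mul_of_nonneg_left hY2 hC.le]
  rw [hsplit]
  rw [div_mul_eq_mul_div, le_div_iff₀ hC]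
  nlinarith [hmain.1, hmain.2, hE10, hE20, hE30]

/-- pointwise quadratic bound -/
lemma ptbound (M M' F dF a s sx sy sxx sxy syy : ℝ) (hF0 : 0 ≤ F) (hFM : F ≤ M)
    (h1 : -M' ≤ dF) (h2 : dF ≤ M') :
    sx ^ 2 + sy ^ 2 + (F * sxx) ^ 2 + 2 * (dF * sx + F * sxy) ^ 2
      + (6 * a * s + dF * sy + (dF * sy + F * syy)) ^ 2
    ≤ (1 + 4 * M' ^ 2) * sx ^ 2 + (1 + 12 * M' ^ 2) * sy ^ 2 + 108 * a ^ 2 * s ^ 2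
      + 5 * M * (F * (sxx ^ 2 + 2 * sxy ^ 2 + syy ^ 2)) := by
  have hM0 : 0 ≤ M := hF0.trans hFM
  have hdf2 : dF ^ 2 ≤ M' ^ 2 := by nlinarith
  have hb1 : (F * sxx) ^ 2 ≤ M * (F * sxx ^ 2) := by
    nlinarith [mul_nonneg (mul_nonneg (sub_nonneg.2 hFM) hF0) (sq_nonneg sxx)]
  have hb2 : (dF * sx + F * sxy) ^ 2 ≤ 2 * M' ^ 2 * sx ^ 2 + 2 * M * (F * sxy ^ 2) := by
    nlinarith [sq_nonneg (dF * sx - F * sxy),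
      mul_nonneg (mul_nonneg (sub_nonneg.2 hFM) hF0) (sq_nonneg sxy),
      mul_le_mul_of_nonneg_right hdf2 (sq_nonneg sx)]
  have hb3 : (6 * a * s + dF * sy + (dF * sy + F * syy)) ^ 2
      ≤ 108 * a ^ 2 * s ^ 2 + 12 * M' ^ 2 * sy ^ 2 + 3 * M * (F * syy ^ 2) := by
    nlinarith [sq_nonneg (6 * a * s - 2 * (dF * sy)), sq_nonneg (6 * a * s - F * syy),
      sq_nonneg (2 * (dF * sy) - F * syy),
      mul_le_mul_of_nonneg_right hdf2 (sq_nonneg sy),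
      mul_nonneg (mul_nonneg (sub_nonneg.2 hFM) hF0) (sq_nonneg syy)]
  nlinarith [hb1, hb2, hb3, mul_nonneg (mul_nonneg hM0 hF0) (sq_nonneg sxx),
    mul_nonneg (mul_nonneg hM0 hF0) (sq_nonneg sxy),
    mul_nonneg (mul_nonneg hM0 hF0) (sq_nonneg syy)]

set_option maxHeartbeats 2000000 in
lemma perx (A B C K3 : ℝ) (hA : A ≤ 0) (hB : |B| ≤ 3 * A + C) (hK3 : 0 < K3)
    (hkey : KeyProp A B C K3) (σ ψ : ℝ → ℝ → ℝ) (hσ : ContDiff ℝ (⊤ : ℕ∞) (uncurry σ))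
    (hψ : ∀ x y : ℝ, ψ x y = (3 * A * y ^ 2 + B * y + C) * σ x y) (x : ℝ)
    (hu1 : σ x (-1) = 0) (hu2 : σ x 1 = 0)
    (hv1 : pdx σ x (-1) = 0) (hv2 : pdx σ x 1 = 0) :
    ((2 + 12 * (6 * |A| + |B|) ^ 2 + 1728 * A ^ 2) * K3 + 5 * (3 * |A| + |B| + |C|) + 1)⁻¹ *
      (∫ y in (-1 : ℝ)..1, ((pdx σ x y) ^ 2 + (pdy σ x y) ^ 2 + (pdx (pdx ψ) x y) ^ 2
        + 2 * (pdy (pdx ψ) x y) ^ 2 + (pdy (pdy ψ) x y) ^ 2))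
    ≤ (-6) * A * (∫ y in (-1 : ℝ)..1, (pdx σ x y) ^ 2)
      + (-12) * A * (∫ y in (-1 : ℝ)..1, (pdy σ x y) ^ 2)
      + ∫ y in (-1 : ℝ)..1, (3 * A * y ^ 2 + B * y + C) *
          ((pdx (pdx σ) x y) ^ 2 + 2 * (pdy (pdx σ) x y) ^ 2 + (pdy (pdy σ) x y) ^ 2) := by
  set M' : ℝ := 6 * |A| + |B| with hM'def
  set M : ℝ := 3 * |A| + |B| + |C| with hMdef
  set K1 : ℝ := 2 + 12 * M' ^ 2 + 1728 * A ^ 2 with hK1def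
  have hM0 : 0 ≤ M := by rw [hMdef]; positivity
  have hM'0 : 0 ≤ M' := by rw [hM'def]; positivity
  have hK10 : 0 < K1 := by rw [hK1def]; positivity
  have hD : 0 < K1 * K3 + 5 * M + 1 := by positivity
  -- the function ψ as a product
  have hψfun : ψ = fun x y => (3 * A * y ^ 2 + B * y + C) * σ x y :=
    funext fun a => funext fun b => hψ a b
  have hgd : ∀ t : ℝ, HasDerivAt (fun y : ℝ => 3 * A * y ^ 2 + B * y + C) (6 * A * t + B) t := by
    intro t
    have h1 : HasDerivAt (fun y : ℝ => 3 * A * y ^ 2) (6 * A * t) t := by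
      have := (hasDerivAt_pow 2 t).const_mul (3 * A)
      norm_num at this
      exact this.congr_deriv (by ring)
    have h2 : HasDerivAt (fun y : ℝ => B * y) B t := by
      simpa using (hasDerivAt_id t).const_mul B
    simpa using (h1.add h2).add_const C
  have hdFd : ∀ t : ℝ, HasDerivAt (fun y : ℝ => 6 * A * y + B) (6 * A) t := by
    intro t
    simpa using ((hasDerivAt_id t).const_mul (6 * A)).add_const B
  -- derivative identities
  have e_xx : ∀ y : ℝ, pdx (pdx ψ) x y = (3 * A * y ^ 2 + B * y + C) * pdx (pdx σ) x y := by
    intro y; rw [hψfun]; exact pdxx_gmul _ σ hσ x y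
  have e_xy : ∀ y : ℝ, pdy (pdx ψ) x y
      = (6 * A * y + B) * pdx σ x y + (3 * A * y ^ 2 + B * y + C) * pdy (pdx σ) x y := by
    intro y; rw [hψfun]; exact pdxy_gmul _ _ σ hσ hgd x y
  have e_yy : ∀ y : ℝ, pdy (pdy ψ) x y
      = 6 * A * σ x y + (6 * A * y + B) * pdy σ x y
        + ((6 * A * y + B) * pdy σ x y + (3 * A * y ^ 2 + B * y + C) * pdy (pdy σ) x y) := by
    intro y; rw [hψfun]
    exact pdyy_gmul _ _ (fun _ => 6 * A) σ hσ hgd hdFd x y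
  -- continuity of slices
  have hcσ : Continuous (fun y => σ x y) := (slice_y σ hσ x).continuous
  have hcσx : Continuous (fun y => pdx σ x y) :=
    (slice_y (pdx σ) (contDiff_pdx σ hσ) x).continuous
  have hcσy : Continuous (fun y => pdy σ x y) :=
    (slice_y (pdy σ) (contDiff_pdy σ hσ) x).continuous
  have hcσxx : Continuous (fun y => pdx (pdx σ) x y) :=
    (slice_y (pdx (pdx σ)) (contDiff_pdx _ (contDiff_pdx σ hσ)) x).continuous
  have hcσxy : Continuous (fun y => pdy (pdx σ) x y) :=
    (slice_y (pdy (pdx σ)) (contDiff_pdy _ (contDiff_pdx σ hσ)) x).continuous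
  have hcσyy : Continuous (fun y => pdy (pdy σ) x y) :=
    (slice_y (pdy (pdy σ)) (contDiff_pdy _ (contDiff_pdy σ hσ)) x).continuous
  -- step 1 : rewrite the LHS integrand
  have hI1 : (∫ y in (-1 : ℝ)..1, ((pdx σ x y) ^ 2 + (pdy σ x y) ^ 2 + (pdx (pdx ψ) x y) ^ 2
        + 2 * (pdy (pdx ψ) x y) ^ 2 + (pdy (pdy ψ) x y) ^ 2))
      = ∫ y in (-1 : ℝ)..1, ((pdx σ x y) ^ 2 + (pdy σ x y) ^ 2
        + ((3 * A * y ^ 2 + B * y + C) * pdx (pdx σ) x y) ^ 2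
        + 2 * ((6 * A * y + B) * pdx σ x y
            + (3 * A * y ^ 2 + B * y + C) * pdy (pdx σ) x y) ^ 2
        + (6 * A * σ x y + (6 * A * y + B) * pdy σ x y
            + ((6 * A * y + B) * pdy σ x y
              + (3 * A * y ^ 2 + B * y + C) * pdy (pdy σ) x y)) ^ 2) := by
    apply integral_congr; intro y _; beta_reduce
    rw [e_xx y, e_xy y, e_yy y]
  -- step 2 : pointwise bound and monotonicity
  have hI2 : (∫ y in (-1 : ℝ)..1, ((pdx σ x y) ^ 2 + (pdy σ x y) ^ 2
        + ((3 * A * y ^ 2 + B * y + C) * pdx (pdx σ) x y) ^ 2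
        + 2 * ((6 * A * y + B) * pdx σ x y
            + (3 * A * y ^ 2 + B * y + C) * pdy (pdx σ) x y) ^ 2
        + (6 * A * σ x y + (6 * A * y + B) * pdy σ x y
            + ((6 * A * y + B) * pdy σ x y
              + (3 * A * y ^ 2 + B * y + C) * pdy (pdy σ) x y)) ^ 2))
      ≤ ∫ y in (-1 : ℝ)..1, ((1 + 4 * M' ^ 2) * (pdx σ x y) ^ 2
          + (1 + 12 * M' ^ 2) * (pdy σ x y) ^ 2 + 108 * A ^ 2 * (σ x y) ^ 2
          + 5 * M * ((3 * A * y ^ 2 + B * y + C) * ((pdx (pdx σ) x y) ^ 2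
              + 2 * (pdy (pdx σ) x y) ^ 2 + (pdy (pdy σ) x y) ^ 2))) := by
    apply integral_mono_on (by norm_num) ?hi1 ?hi2 ?hpt
    case hi1 => exact Continuous.intervalIntegrable (by fun_prop) _ _
    case hi2 => exact Continuous.intervalIntegrable (by fun_prop) _ _
    intro y hy
    have hF0y : 0 ≤ 3 * A * y ^ 2 + B * y + C := F_nonneg A B C hA hB hy
    have hFM : 3 * A * y ^ 2 + B * y + C ≤ M := by
      rw [hMdef]
      have hBy : B * y ≤ |B| := by
        calc B * y ≤ |B * y| := le_abs_self _
          _ ≤ |B| := by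
              rw [abs_mul]
              exact mul_le_of_le_one_right (abs_nonneg B) (abs_le.mpr ⟨hy.1, hy.2⟩)
      nlinarith [le_abs_self C, mul_nonneg (neg_nonneg.2 hA) (sq_nonneg y), abs_nonneg A]
    have hdFb : |6 * A * y + B| ≤ M' := by
      rw [hM'def]
      calc |6 * A * y + B| ≤ |6 * A * y| + |B| := abs_add_le _ _
        _ ≤ 6 * |A| + |B| := by
            have : |6 * A * y| = 6 * |A| * |y| := by
              rw [abs_mul, abs_mul]; norm_num
            rw [this]
            have : 6 * |A| * |y| ≤ 6 * |A| * 1 :=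
              mul_le_mul_of_nonneg_left (abs_le.mpr ⟨hy.1, hy.2⟩) (by positivity)
            linarith
    exact ptbound M M' _ _ A (σ x y) (pdx σ x y) (pdy σ x y) (pdx (pdx σ) x y)
      (pdy (pdx σ) x y) (pdy (pdy σ) x y) hF0y hFM (abs_le.mp hdFb).1 (abs_le.mp hdFb).2
  -- step 3 : split the RHS of step 2
  have hI3 : (∫ y in (-1 : ℝ)..1, ((1 + 4 * M' ^ 2) * (pdx σ x y) ^ 2
          + (1 + 12 * M' ^ 2) * (pdy σ x y) ^ 2 + 108 * A ^ 2 * (σ x y) ^ 2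
          + 5 * M * ((3 * A * y ^ 2 + B * y + C) * ((pdx (pdx σ) x y) ^ 2
              + 2 * (pdy (pdx σ) x y) ^ 2 + (pdy (pdy σ) x y) ^ 2))))
      = (1 + 4 * M' ^ 2) * (∫ y in (-1 : ℝ)..1, (pdx σ x y) ^ 2)
        + (1 + 12 * M' ^ 2) * (∫ y in (-1 : ℝ)..1, (pdy σ x y) ^ 2)
        + 108 * A ^ 2 * (∫ y in (-1 : ℝ)..1, (σ x y) ^ 2)
        + 5 * M * (∫ y in (-1 : ℝ)..1, ((3 * A * y ^ 2 + B * y + C) * ((pdx (pdx σ) x y) ^ 2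
              + 2 * (pdy (pdx σ) x y) ^ 2 + (pdy (pdy σ) x y) ^ 2))) := by
    rw [intervalIntegral.integral_add (by apply Continuous.intervalIntegrable; fun_prop)
        (by apply Continuous.intervalIntegrable; fun_prop),
      intervalIntegral.integral_add (by apply Continuous.intervalIntegrable; fun_prop)
        (by apply Continuous.intervalIntegrable; fun_prop),
      intervalIntegral.integral_add (by apply Continuous.intervalIntegrable; fun_prop)
        (by apply Continuous.intervalIntegrable; fun_prop),
      intervalIntegral.integral_const_mul, intervalIntegral.integral_const_mul, intervalIntegral.integral_const_mul, intervalIntegral.integral_const_mul]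
  -- step 4 : Poincaré for σ² and the key inequality
  have hS16 : (∫ y in (-1 : ℝ)..1, (σ x y) ^ 2)
      ≤ 16 * ∫ y in (-1 : ℝ)..1, (pdy σ x y) ^ 2 := by
    have h := p0 (σ x) (slice_y σ hσ x) hu2
    rw [show deriv (σ x) = pdy σ x from rfl] at h
    exact h
  have hXY := hkey (σ x) (pdx σ x) (pdx (pdx σ) x) (slice_y σ hσ x)
    (slice_y (pdx σ) (contDiff_pdx σ hσ) x) hcσxx hu1 hu2 hv1 hv2
  rw [show deriv (deriv (σ x)) = pdy (pdy σ) x from rfl,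
    show deriv (pdx σ x) = pdy (pdx σ) x from rfl,
    show deriv (σ x) = pdy σ x from rfl] at hXY
  -- nonnegativity facts
  have hX0 : 0 ≤ ∫ y in (-1 : ℝ)..1, (pdx σ x y) ^ 2 :=
    integral_nonneg (by norm_num) fun _ _ => sq_nonneg _
  have hY0 : 0 ≤ ∫ y in (-1 : ℝ)..1, (pdy σ x y) ^ 2 :=
    integral_nonneg (by norm_num) fun _ _ => sq_nonneg _
  have hZ0 : 0 ≤ ∫ y in (-1 : ℝ)..1, (3 * A * y ^ 2 + B * y + C) *
      ((pdx (pdx σ) x y) ^ 2 + 2 * (pdy (pdx σ) x y) ^ 2 + (pdy (pdy σ) x y) ^ 2) :=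
    integral_nonneg (by norm_num) fun y hy =>
      mul_nonneg (F_nonneg A B C hA hB hy) (by positivity)
  -- final assembly
  rw [hI1, inv_mul_le_iff₀ hD]
  have t1 := hI3 ▸ hI2
  set X := ∫ y in (-1 : ℝ)..1, (pdx σ x y) ^ 2
  set Y := ∫ y in (-1 : ℝ)..1, (pdy σ x y) ^ 2
  set S := ∫ y in (-1 : ℝ)..1, (σ x y) ^ 2
  set Z := ∫ y in (-1 : ℝ)..1, (3 * A * y ^ 2 + B * y + C) *
      ((pdx (pdx σ) x y) ^ 2 + 2 * (pdy (pdx σ) x y) ^ 2 + (pdy (pdy σ) x y) ^ 2)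
  have hS0 : 0 ≤ S := integral_nonneg (by norm_num) fun _ _ => sq_nonneg _
  have t2 : 108 * A ^ 2 * S ≤ 1728 * A ^ 2 * Y := by
    nlinarith [mul_nonneg (by positivity : (0 : ℝ) ≤ 108 * A ^ 2)
      (by linarith [hS16] : 0 ≤ 16 * Y - S)]
  have t3 : (∫ y in (-1 : ℝ)..1, ((pdx σ x y) ^ 2 + (pdy σ x y) ^ 2
        + ((3 * A * y ^ 2 + B * y + C) * pdx (pdx σ) x y) ^ 2
        + 2 * ((6 * A * y + B) * pdx σ x y
            + (3 * A * y ^ 2 + B * y + C) * pdy (pdx σ) x y) ^ 2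
        + (6 * A * σ x y + (6 * A * y + B) * pdy σ x y
            + ((6 * A * y + B) * pdy σ x y
              + (3 * A * y ^ 2 + B * y + C) * pdy (pdy σ) x y)) ^ 2))
      ≤ K1 * (X + Y) + 5 * M * Z := by
    have c1 : (1 + 4 * M' ^ 2) ≤ K1 := by rw [hK1def]; nlinarith [sq_nonneg M', sq_nonneg A]
    have c2 : (1 + 12 * M' ^ 2) + 1728 * A ^ 2 ≤ K1 := by rw [hK1def]; nlinarith
    nlinarith [t1, t2, mul_nonneg (by linarith : (0:ℝ) ≤ K1 - (1 + 4 * M' ^ 2)) hX0,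
      mul_nonneg (by linarith : (0:ℝ) ≤ K1 - ((1 + 12 * M' ^ 2) + 1728 * A ^ 2)) hY0]
  have hR0 : 0 ≤ (-6) * A * X + (-12) * A * Y + Z := by nlinarith [hXY, hX0, hY0]
  have hZR : Z ≤ (-6) * A * X + (-12) * A * Y + Z := by
    nlinarith [mul_nonneg (by linarith : (0:ℝ) ≤ -A) hX0,
      mul_nonneg (by linarith : (0:ℝ) ≤ -A) hY0]
  have t4 : K1 * (X + Y) ≤ K1 * (K3 * ((-6) * A * X + (-12) * A * Y + Z)) :=
    mul_le_mul_of_nonneg_left hXY hK10.le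
  have t5 : 5 * M * Z ≤ 5 * M * ((-6) * A * X + (-12) * A * Y + Z) :=
    mul_le_mul_of_nonneg_left hZR (by positivity)
  nlinarith [t3, t4, t5, hR0]

set_option maxHeartbeats 2000000 in
/-- The two-dimensional Poincaré-type inequality \eqref{GammaLcontrol}: under condition (ABC),
with `F(y) = 3Ay² + By + C`, there is `c > 0` depending only on `A, B, C` (and not on `L`)
such that for every `L > 0` and every smooth `σ` with `σ(x, ±1) = 0` on `[-L,L]`, letting
`ψ = F·σ`, one has
`−6A∬σ_x² − 12A∬σ_y² + ∬F(σ_xx² + 2σ_xy² + σ_yy²) ≥ c·∬(σ_x² + σ_y² + ψ_xx² + 2ψ_xy² + ψ_yy²)`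
over `Q_L = (-L,L) × (-1,1)`. -/
theorem stmt_11 (A B C : ℝ) (hABC : (A, B, C) ≠ (0, 0, 0)) (hA : A ≤ 0)
    (hB : |B| ≤ 3 * A + C) :
    ∃ c > 0, ∀ L > (0 : ℝ), ∀ σ ψ : ℝ → ℝ → ℝ,
      ContDiff ℝ (⊤ : ℕ∞) (Function.uncurry σ) →
      (∀ x ∈ Set.Icc (-L) L, σ x (-1) = 0 ∧ σ x 1 = 0) →
      (∀ x y : ℝ, ψ x y = (3 * A * y ^ 2 + B * y + C) * σ x y) →
      c * ∫ x in (-L)..L, ∫ y in (-1 : ℝ)..1,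
            ((pdx σ x y) ^ 2 + (pdy σ x y) ^ 2 + (pdx (pdx ψ) x y) ^ 2
              + 2 * (pdy (pdx ψ) x y) ^ 2 + (pdy (pdy ψ) x y) ^ 2)
        ≤ (-6) * A * (∫ x in (-L)..L, ∫ y in (-1 : ℝ)..1, (pdx σ x y) ^ 2)
            + (-12) * A * (∫ x in (-L)..L, ∫ y in (-1 : ℝ)..1, (pdy σ x y) ^ 2)
            + ∫ x in (-L)..L, ∫ y in (-1 : ℝ)..1, (3 * A * y ^ 2 + B * y + C) *
                ((pdx (pdx σ) x y) ^ 2 + 2 * (pdy (pdx σ) x y) ^ 2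
                  + (pdy (pdy σ) x y) ^ 2) := by
  obtain ⟨K3, hK3, hkey⟩ : ∃ K3 > 0, KeyProp A B C K3 := by
    rcases lt_or_eq_of_le hA with hAlt | hAeq
    · exact ⟨(-6 * A)⁻¹, inv_pos.2 (by linarith), key_neg A B C hAlt hB⟩
    · have hBC : |B| ≤ C := by rw [hAeq] at hB; linarith [hB]
      have hC : 0 < C := by
        rcases lt_or_eq_of_le ((abs_nonneg B).trans hBC) with h | h
        · exact h
        · exfalso
          have hB0 : B = 0 := by
            have : |B| ≤ 0 := by rw [← h] at hBC; exact hBC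
            simpa [abs_nonpos_iff] using this
          have hC0 : C = 0 := h.symm
          exact hABC (by rw [hAeq, hB0, hC0])
      exact ⟨12 / C, by positivity, key_zero A B C hAeq hC hBC⟩
  refine ⟨((2 + 12 * (6 * |A| + |B|) ^ 2 + 1728 * A ^ 2) * K3
      + 5 * (3 * |A| + |B| + |C|) + 1)⁻¹, by positivity, ?_⟩
  intro L hL σ ψ hσ hbnd hψ
  have hψs : ContDiff ℝ (⊤ : ℕ∞) (uncurry ψ) := by
    have h : uncurry ψ = fun p : ℝ × ℝ => (3 * A * p.2 ^ 2 + B * p.2 + C) * uncurry σ p :=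
      funext fun p => hψ p.1 p.2
    rw [h]
    exact ContDiff.mul (by fun_prop) hσ
  -- joint continuity of all partials
  have c1 : Continuous fun p : ℝ × ℝ => pdx σ p.1 p.2 := (contDiff_pdx σ hσ).continuous
  have c2 : Continuous fun p : ℝ × ℝ => pdy σ p.1 p.2 := (contDiff_pdy σ hσ).continuous
  have c3 : Continuous fun p : ℝ × ℝ => pdx (pdx σ) p.1 p.2 :=
    (contDiff_pdx _ (contDiff_pdx σ hσ)).continuous
  have c4 : Continuous fun p : ℝ × ℝ => pdy (pdx σ) p.1 p.2 :=
    (contDiff_pdy _ (contDiff_pdx σ hσ)).continuous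
  have c5 : Continuous fun p : ℝ × ℝ => pdy (pdy σ) p.1 p.2 :=
    (contDiff_pdy _ (contDiff_pdy σ hσ)).continuous
  have c6 : Continuous fun p : ℝ × ℝ => pdx (pdx ψ) p.1 p.2 :=
    (contDiff_pdx _ (contDiff_pdx ψ hψs)).continuous
  have c7 : Continuous fun p : ℝ × ℝ => pdy (pdx ψ) p.1 p.2 :=
    (contDiff_pdy _ (contDiff_pdx ψ hψs)).continuous
  have c8 : Continuous fun p : ℝ × ℝ => pdy (pdy ψ) p.1 p.2 :=
    (contDiff_pdy _ (contDiff_pdy ψ hψs)).continuous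
  -- continuity in x of the inner integrals
  have hiL : Continuous fun x => ∫ y in (-1 : ℝ)..1,
      ((pdx σ x y) ^ 2 + (pdy σ x y) ^ 2 + (pdx (pdx ψ) x y) ^ 2
        + 2 * (pdy (pdx ψ) x y) ^ 2 + (pdy (pdy ψ) x y) ^ 2) := by
    apply intervalIntegral.continuous_parametric_intervalIntegral_of_continuous'
    show Continuous fun p : ℝ × ℝ => (pdx σ p.1 p.2) ^ 2 + (pdy σ p.1 p.2) ^ 2
      + (pdx (pdx ψ) p.1 p.2) ^ 2 + 2 * (pdy (pdx ψ) p.1 p.2) ^ 2 + (pdy (pdy ψ) p.1 p.2) ^ 2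
    fun_prop
  have hiX : Continuous fun x => ∫ y in (-1 : ℝ)..1, (pdx σ x y) ^ 2 := by
    apply intervalIntegral.continuous_parametric_intervalIntegral_of_continuous'
    show Continuous fun p : ℝ × ℝ => (pdx σ p.1 p.2) ^ 2
    fun_prop
  have hiY : Continuous fun x => ∫ y in (-1 : ℝ)..1, (pdy σ x y) ^ 2 := by
    apply intervalIntegral.continuous_parametric_intervalIntegral_of_continuous'
    show Continuous fun p : ℝ × ℝ => (pdy σ p.1 p.2) ^ 2
    fun_prop
  have hiZ : Continuous fun x => ∫ y in (-1 : ℝ)..1, (3 * A * y ^ 2 + B * y + C) *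
      ((pdx (pdx σ) x y) ^ 2 + 2 * (pdy (pdx σ) x y) ^ 2 + (pdy (pdy σ) x y) ^ 2) := by
    apply intervalIntegral.continuous_parametric_intervalIntegral_of_continuous'
    show Continuous fun p : ℝ × ℝ => (3 * A * p.2 ^ 2 + B * p.2 + C) *
      ((pdx (pdx σ) p.1 p.2) ^ 2 + 2 * (pdy (pdx σ) p.1 p.2) ^ 2 + (pdy (pdy σ) p.1 p.2) ^ 2)
    fun_prop
  set c : ℝ := ((2 + 12 * (6 * |A| + |B|) ^ 2 + 1728 * A ^ 2) * K3
      + 5 * (3 * |A| + |B| + |C|) + 1)⁻¹ with hcdef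
  -- rewrite RHS as a single x-integral
  have hR' : (∫ x in (-L)..L, ((-6) * A * (∫ y in (-1 : ℝ)..1, (pdx σ x y) ^ 2)
        + (-12) * A * (∫ y in (-1 : ℝ)..1, (pdy σ x y) ^ 2)
        + ∫ y in (-1 : ℝ)..1, (3 * A * y ^ 2 + B * y + C) *
            ((pdx (pdx σ) x y) ^ 2 + 2 * (pdy (pdx σ) x y) ^ 2 + (pdy (pdy σ) x y) ^ 2)))
      = (-6) * A * (∫ x in (-L)..L, ∫ y in (-1 : ℝ)..1, (pdx σ x y) ^ 2)
        + (-12) * A * (∫ x in (-L)..L, ∫ y in (-1 : ℝ)..1, (pdy σ x y) ^ 2)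
        + ∫ x in (-L)..L, ∫ y in (-1 : ℝ)..1, (3 * A * y ^ 2 + B * y + C) *
            ((pdx (pdx σ) x y) ^ 2 + 2 * (pdy (pdx σ) x y) ^ 2
              + (pdy (pdy σ) x y) ^ 2) := by
    erw [intervalIntegral.integral_add (((continuous_const.mul hiX).add
        (continuous_const.mul hiY)).intervalIntegrable _ _) (hiZ.intervalIntegrable _ _),
      intervalIntegral.integral_add ((continuous_const.mul hiX).intervalIntegrable _ _)
        ((continuous_const.mul hiY).intervalIntegrable _ _),
      intervalIntegral.integral_const_mul, intervalIntegral.integral_const_mul]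
  rw [← hR', ← intervalIntegral.integral_const_mul]
  -- a.e. comparison
  apply integral_mono_ae_restrict (by linarith : -L ≤ L)
    ((continuous_const.mul hiL).intervalIntegrable _ _)
    ((((continuous_const.mul hiX).add (continuous_const.mul hiY)).add
      hiZ).intervalIntegrable _ _)
  have hae : ∀ᵐ x ∂(volume.restrict (Icc (-L) L)), x ∈ Ioo (-L) L := by
    have hsub : Icc (-L) L \ Ioo (-L) L ⊆ ({-L, L} : Set ℝ) := by
      intro t ht
      rcases ht with ⟨⟨ht1, ht2⟩, ht3⟩
      simp only [mem_Ioo, not_and_or, not_lt] at ht3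
      rcases ht3 with h | h
      · exact Or.inl (le_antisymm h ht1)
      · exact Or.inr (le_antisymm ht2 h)
    have h2 : (volume : Measure ℝ) (Icc (-L) L \ Ioo (-L) L) = 0 :=
      measure_mono_null hsub (Set.Finite.measure_zero (by simp) volume)
    rw [ae_restrict_iff' measurableSet_Icc]
    have h3 : ∀ᵐ x : ℝ, x ∉ (Icc (-L) L \ Ioo (-L) L) :=
      measure_eq_zero_iff_ae_notMem.mp h2
    filter_upwards [h3] with t ht hmem
    by_contra hno
    exact ht ⟨hmem, hno⟩
  filter_upwards [hae] with x hx
  have hu1 : σ x (-1) = 0 := (hbnd x ⟨hx.1.le, hx.2.le⟩).1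
  have hu2 : σ x 1 = 0 := (hbnd x ⟨hx.1.le, hx.2.le⟩).2
  have hv1 : pdx σ x (-1) = 0 := by
    have hev : (fun t => σ t (-1)) =ᶠ[nhds x] (fun _ => (0 : ℝ)) := by
      filter_upwards [Ioo_mem_nhds hx.1 hx.2] with t ht
      exact (hbnd t ⟨ht.1.le, ht.2.le⟩).1
    show deriv (fun t => σ t (-1)) x = 0
    rw [hev.deriv_eq]
    exact deriv_const x 0
  have hv2 : pdx σ x 1 = 0 := by
    have hev : (fun t => σ t 1) =ᶠ[nhds x] (fun _ => (0 : ℝ)) := by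
      filter_upwards [Ioo_mem_nhds hx.1 hx.2] with t ht
      exact (hbnd t ⟨ht.1.le, ht.2.le⟩).2
    show deriv (fun t => σ t 1) x = 0
    rw [hev.deriv_eq]
    exact deriv_const x 0
  exact perx A B C K3 hA hB hK3 hkey σ ψ hσ hψ x hu1 hu2 hv1 hv2
end

section
/- Let A, C be real numbers with B = 0, (A,C) ≠ (0,0), A ≤ 0 and C ≥ 3|A|, and set F(y) = 3Ay² + C. Let ψ : ℝ × [-1,1] → ℝ be a smooth function for which there exists M > 0 such that for every a ∈ ℝ the integral over (a,a+1) × (-1,1) of the sum of the squares of all partial derivatives of ψ of order between 1 and 3 is at most M. Assume ψ is even in x, i.e. ψ(−x,y) = ψ(x,y) for all (x,y). If ψ satisfies the full nonlinear stream-function equation ψ_xxxx + 2ψ_xxyy + ψ_yyyy − [F(y)(ψ_xyy + ψ_xxx) − 6Aψ_x] + (ψ_x(Δψ)_y − ψ_y(Δψ)_x) = 0 in S = ℝ × (-1,1), where Δψ = ψ_xx + ψ_yy, together with ψ(x,±1) = ψ_x(x,±1) = ψ_y(x,±1) = 0 for all x ∈ ℝ, then ψ is identically zero. -/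
open MeasureTheory intervalIntegral

namespace CP

lemma diffAt_slice_x {f : ℝ → ℝ → ℝ} (hf : ContDiff ℝ (⊤ : ℕ∞) (Function.uncurry f)) (x y : ℝ) :
    DifferentiableAt ℝ (fun t => f t y) x := by
  have h1 : DifferentiableAt ℝ (Function.uncurry f) (x, y) := hf.differentiable (by simp) (x, y)
  have h2 : DifferentiableAt ℝ (fun t : ℝ => (t, y)) x :=
    (differentiableAt_id.prodMk (differentiableAt_const y))
  exact h1.comp x h2

lemma diffAt_slice_y {f : ℝ → ℝ → ℝ} (hf : ContDiff ℝ (⊤ : ℕ∞) (Function.uncurry f)) (x y : ℝ) :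
    DifferentiableAt ℝ (fun s => f x s) y := by
  have h1 : DifferentiableAt ℝ (Function.uncurry f) (x, y) := hf.differentiable (by simp) (x, y)
  have h2 : DifferentiableAt ℝ (fun s : ℝ => (x, s)) y :=
    ((differentiableAt_const x).prodMk differentiableAt_id)
  exact h1.comp y h2

lemma hasDerivAt_pdx {f : ℝ → ℝ → ℝ} (hf : ContDiff ℝ (⊤ : ℕ∞) (Function.uncurry f)) (x y : ℝ) :
    HasDerivAt (fun t => f t y) (pdx f x y) x :=
  (diffAt_slice_x hf x y).hasDerivAt

lemma hasDerivAt_pdy {f : ℝ → ℝ → ℝ} (hf : ContDiff ℝ (⊤ : ℕ∞) (Function.uncurry f)) (x y : ℝ) :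
    HasDerivAt (fun s => f x s) (pdy f x y) y :=
  (diffAt_slice_y hf x y).hasDerivAt

lemma pdx_eq_fderiv {f : ℝ → ℝ → ℝ} (hf : ContDiff ℝ (⊤ : ℕ∞) (Function.uncurry f)) (x y : ℝ) :
    pdx f x y = (fderiv ℝ (Function.uncurry f) (x, y)) (1, 0) := by
  have h2 : HasDerivAt (fun t : ℝ => (t, y)) ((1:ℝ), (0:ℝ)) x := by
    simpa using (hasDerivAt_id x).prodMk (hasDerivAt_const x y)
  have h1 : HasFDerivAt (Function.uncurry f) (fderiv ℝ (Function.uncurry f) (x, y)) (x, y) :=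
    (hf.differentiable (by simp) (x, y)).hasFDerivAt
  have := h1.comp_hasDerivAt x h2
  exact this.deriv

lemma pdy_eq_fderiv {f : ℝ → ℝ → ℝ} (hf : ContDiff ℝ (⊤ : ℕ∞) (Function.uncurry f)) (x y : ℝ) :
    pdy f x y = (fderiv ℝ (Function.uncurry f) (x, y)) (0, 1) := by
  have h2 : HasDerivAt (fun s : ℝ => (x, s)) ((0:ℝ), (1:ℝ)) y := by
    simpa using (hasDerivAt_const y x).prodMk (hasDerivAt_id y)
  have h1 : HasFDerivAt (Function.uncurry f) (fderiv ℝ (Function.uncurry f) (x, y)) (x, y) :=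
    (hf.differentiable (by simp) (x, y)).hasFDerivAt
  have := h1.comp_hasDerivAt y h2
  exact this.deriv

lemma contDiff_pdx {f : ℝ → ℝ → ℝ} (hf : ContDiff ℝ (⊤ : ℕ∞) (Function.uncurry f)) :
    ContDiff ℝ (⊤ : ℕ∞) (Function.uncurry (pdx f)) := by
  have h : Function.uncurry (pdx f)
      = fun p : ℝ × ℝ => (ContinuousLinearMap.apply ℝ ℝ ((1:ℝ), (0:ℝ)))
          (fderiv ℝ (Function.uncurry f) p) := by
    funext p
    exact pdx_eq_fderiv hf p.1 p.2
  rw [h]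
  exact (ContinuousLinearMap.apply ℝ ℝ ((1:ℝ), (0:ℝ))).contDiff.comp
    (hf.fderiv_right (by simp))

lemma contDiff_pdy {f : ℝ → ℝ → ℝ} (hf : ContDiff ℝ (⊤ : ℕ∞) (Function.uncurry f)) :
    ContDiff ℝ (⊤ : ℕ∞) (Function.uncurry (pdy f)) := by
  have h : Function.uncurry (pdy f)
      = fun p : ℝ × ℝ => (ContinuousLinearMap.apply ℝ ℝ ((0:ℝ), (1:ℝ)))
          (fderiv ℝ (Function.uncurry f) p) := by
    funext p
    exact pdy_eq_fderiv hf p.1 p.2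
  rw [h]
  exact (ContinuousLinearMap.apply ℝ ℝ ((0:ℝ), (1:ℝ))).contDiff.comp
    (hf.fderiv_right (by simp))

/-- Clairaut for smooth curried functions. -/
lemma pdx_pdy_comm {f : ℝ → ℝ → ℝ} (hf : ContDiff ℝ (⊤ : ℕ∞) (Function.uncurry f)) (x y : ℝ) :
    pdx (pdy f) x y = pdy (pdx f) x y := by
  set F := Function.uncurry f with hF
  have hdF : ContDiff ℝ (⊤ : ℕ∞) (fderiv ℝ F) := hf.fderiv_right (by simp)
  have hsym : ∀ v w : ℝ × ℝ,
      (fderiv ℝ (fderiv ℝ F) (x, y) v) w = (fderiv ℝ (fderiv ℝ F) (x, y) w) v := by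
    intro v w
    refine second_derivative_symmetric_of_eventually (f := F) (f' := fderiv ℝ F)
      (x := (x, y)) ?_ ?_ v w
    · exact Filter.Eventually.of_forall fun z => (hf.differentiable (by simp) z).hasFDerivAt
    · exact (hdF.differentiable (by simp) (x, y)).hasFDerivAt
  -- pdx (pdy f) x y = f'' (1,0) (0,1)
  have h2y : HasFDerivAt (fderiv ℝ F) (fderiv ℝ (fderiv ℝ F) (x, y)) (x, y) :=
    (hdF.differentiable (by simp) (x, y)).hasFDerivAt
  have e1 : pdx (pdy f) x y = (fderiv ℝ (fderiv ℝ F) (x, y) ((1:ℝ), (0:ℝ))) ((0:ℝ), (1:ℝ)) := by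
    have hx : HasDerivAt (fun t : ℝ => (t, y)) ((1:ℝ), (0:ℝ)) x := by
      simpa using (hasDerivAt_id x).prodMk (hasDerivAt_const x y)
    have hc : HasDerivAt (fun t => fderiv ℝ F (t, y)) (fderiv ℝ (fderiv ℝ F) (x, y) (1, 0)) x :=
      h2y.comp_hasDerivAt x hx
    have hc2 : HasDerivAt (fun t => (fderiv ℝ F (t, y)) ((0:ℝ), (1:ℝ)))
        ((fderiv ℝ (fderiv ℝ F) (x, y) (1, 0)) (0, 1)) x :=
      ((ContinuousLinearMap.apply ℝ ℝ ((0:ℝ), (1:ℝ))).hasFDerivAt.comp_hasDerivAt x hc)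
    have : (fun t => pdy f t y) = fun t => (fderiv ℝ F (t, y)) ((0:ℝ), (1:ℝ)) := by
      funext t; exact pdy_eq_fderiv hf t y
    show deriv (fun t => pdy f t y) x = _
    rw [this]
    exact hc2.deriv
  have e2 : pdy (pdx f) x y = (fderiv ℝ (fderiv ℝ F) (x, y) ((0:ℝ), (1:ℝ))) ((1:ℝ), (0:ℝ)) := by
    have hx : HasDerivAt (fun s : ℝ => (x, s)) ((0:ℝ), (1:ℝ)) y := by
      simpa using (hasDerivAt_const y x).prodMk (hasDerivAt_id y)
    have hc : HasDerivAt (fun s => fderiv ℝ F (x, s)) (fderiv ℝ (fderiv ℝ F) (x, y) (0, 1)) y :=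
      h2y.comp_hasDerivAt y hx
    have hc2 : HasDerivAt (fun s => (fderiv ℝ F (x, s)) ((1:ℝ), (0:ℝ)))
        ((fderiv ℝ (fderiv ℝ F) (x, y) (0, 1)) (1, 0)) y :=
      ((ContinuousLinearMap.apply ℝ ℝ ((1:ℝ), (0:ℝ))).hasFDerivAt.comp_hasDerivAt y hc)
    have : (fun s => pdx f x s) = fun s => (fderiv ℝ F (x, s)) ((1:ℝ), (0:ℝ)) := by
      funext s; exact pdx_eq_fderiv hf x s
    show deriv (fun s => pdx f x s) y = _
    rw [this]
    exact hc2.deriv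
  rw [e1, e2, hsym]


/-! ### Parity -/

lemma pdx_evenX {g : ℝ → ℝ → ℝ} (h : ∀ x y, g (-x) y = g x y) (x y : ℝ) :
    pdx g (-x) y = -pdx g x y := by
  have h1 : deriv (fun t => g (-t) y) x = -deriv (fun t => g t y) (-x) :=
    deriv_comp_neg (fun t => g t y) x
  have h2 : (fun t => g (-t) y) = fun t => g t y := by funext t; exact h t y
  rw [h2] at h1
  show deriv (fun t => g t y) (-x) = -deriv (fun t => g t y) x
  linarith [h1]

lemma pdx_oddX {g : ℝ → ℝ → ℝ} (h : ∀ x y, g (-x) y = -g x y) (x y : ℝ) :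
    pdx g (-x) y = pdx g x y := by
  have h1 : deriv (fun t => g (-t) y) x = -deriv (fun t => g t y) (-x) :=
    deriv_comp_neg (fun t => g t y) x
  have h2 : (fun t => g (-t) y) = fun t => -(g t y) := by funext t; exact h t y
  rw [h2, deriv.fun_neg] at h1
  show deriv (fun t => g t y) (-x) = deriv (fun t => g t y) x
  have := h1.symm
  linarith [this]

lemma pdy_evenX {g : ℝ → ℝ → ℝ} (h : ∀ x y, g (-x) y = g x y) (x y : ℝ) :
    pdy g (-x) y = pdy g x y := by
  show deriv (fun s => g (-x) s) y = deriv (fun s => g x s) y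
  congr 1; funext s; exact h x s

lemma pdy_oddX {g : ℝ → ℝ → ℝ} (h : ∀ x y, g (-x) y = -g x y) (x y : ℝ) :
    pdy g (-x) y = -pdy g x y := by
  show deriv (fun s => g (-x) s) y = -deriv (fun s => g x s) y
  have h2 : (fun s => g (-x) s) = fun s => -(g x s) := by funext s; exact h x s
  rw [h2, deriv.fun_neg]

/-! ### Differentiation under the integral sign -/

lemma hasDerivAt_integral {H : ℝ → ℝ → ℝ} (hH : ContDiff ℝ (⊤ : ℕ∞) (Function.uncurry H)) (x₀ : ℝ) :
    HasDerivAt (fun x => ∫ y in (-1:ℝ)..1, H x y) (∫ y in (-1:ℝ)..1, pdx H x₀ y) x₀ := by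
  have hpdxc : Continuous (Function.uncurry (pdx H)) := (contDiff_pdx hH).continuous
  have hK : IsCompact ((Set.Icc (x₀ - 1) (x₀ + 1)) ×ˢ (Set.Icc (-1 : ℝ) 1)) :=
    (isCompact_Icc).prod isCompact_Icc
  obtain ⟨Cb, hCb⟩ := hK.exists_bound_of_continuousOn hpdxc.continuousOn
  have slice_cont : ∀ x : ℝ, Continuous (fun y => H x y) := fun x =>
    hH.continuous.comp (continuous_const.prodMk continuous_id)
  have slice_cont' : ∀ x : ℝ, Continuous (fun y => pdx H x y) := fun x =>
    hpdxc.comp (continuous_const.prodMk continuous_id)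
  have main := intervalIntegral.hasDerivAt_integral_of_dominated_loc_of_deriv_le
    (F := H) (F' := pdx H) (x₀ := x₀) (a := (-1:ℝ)) (b := 1) (μ := MeasureTheory.volume)
    (bound := fun _ => Cb) (Metric.ball_mem_nhds x₀ one_pos)
    (Filter.Eventually.of_forall fun x => ((slice_cont x).aestronglyMeasurable).restrict)
    ((slice_cont x₀).intervalIntegrable _ _)
    (((slice_cont' x₀).aestronglyMeasurable).restrict)
    ?_ (intervalIntegrable_const) ?_
  · exact main.2
  · refine Filter.Eventually.of_forall fun t ht x hx => ?_
    have hxI : x ∈ Set.Icc (x₀ - 1) (x₀ + 1) := by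
      rw [Metric.mem_ball, Real.dist_eq] at hx
      constructor <;> [linarith [abs_lt.mp hx]; linarith [abs_lt.mp hx]]
    have htI : t ∈ Set.Icc (-1 : ℝ) 1 := by
      rw [Set.uIoc_of_le (by norm_num : (-1:ℝ) ≤ 1)] at ht
      exact ⟨le_of_lt ht.1, ht.2⟩
    exact hCb (x, t) (Set.mk_mem_prod hxI htI)
  · exact Filter.Eventually.of_forall fun t _ x _ => hasDerivAt_pdx hH x t

/-! ### FTC in the second variable -/

lemma integral_pdy {G : ℝ → ℝ → ℝ} (hG : ContDiff ℝ (⊤ : ℕ∞) (Function.uncurry G)) (x : ℝ) :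
    (∫ y in (-1:ℝ)..1, pdy G x y) = G x 1 - G x (-1) := by
  refine intervalIntegral.integral_deriv_eq_sub' (fun s => G x s) rfl
    (fun s _ => diffAt_slice_y hG x s) ?_
  exact (((contDiff_pdy hG).continuous).comp (continuous_const.prodMk continuous_id)).continuousOn


lemma continuous_param_integral {H : ℝ → ℝ → ℝ} (hH : ContDiff ℝ (⊤ : ℕ∞) (Function.uncurry H)) :
    Continuous (fun x => ∫ y in (-1:ℝ)..1, H x y) := by
  have : Differentiable ℝ (fun x => ∫ y in (-1:ℝ)..1, H x y) := fun x =>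
    (hasDerivAt_integral hH x).differentiableAt
  exact this.continuous

/-- Grönwall–Poincaré: if `f (-1) = 0` then `f y ^ 2 ≤ 9 ∫ f'²` on `[-1,1]`. -/
lemma poincare_pt {f df : ℝ → ℝ} (hder : ∀ s, HasDerivAt f (df s) s) (hc : Continuous df)
    (h0 : f (-1) = 0) {y : ℝ} (hy : y ∈ Set.Icc (-1:ℝ) 1) :
    f y ^ 2 ≤ 9 * ∫ s in (-1:ℝ)..1, df s ^ 2 := by
  have hfd : Differentiable ℝ f := fun s => (hder s).differentiableAt
  have hfc : Continuous f := hfd.continuous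
  set u : ℝ → ℝ := fun s => Real.exp (-s) * f s ^ 2 with hu
  have hu' : ∀ s, HasDerivAt u (Real.exp (-s) * (2 * f s * df s - f s ^ 2)) s := by
    intro s
    have h1 : HasDerivAt (fun t => Real.exp (-t)) (-Real.exp (-s)) s := by
      simpa [Function.comp_def] using ((Real.hasDerivAt_exp (-s)).comp s (hasDerivAt_neg s))
    have h2 : HasDerivAt (fun t => f t ^ 2) (2 * f s * df s) s := by
      have := (hder s).fun_pow 2
      simpa [mul_comm, mul_assoc, mul_left_comm] using this
    have := h1.fun_mul h2
    exact this.congr_deriv (by ring)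
  have hint : ∀ t, u t - u (-1) = ∫ s in (-1:ℝ)..t, Real.exp (-s) * (2 * f s * df s - f s ^ 2) := by
    intro t
    rw [intervalIntegral.integral_eq_sub_of_hasDerivAt (fun s _ => hu' s) ?_]
    · exact (Continuous.intervalIntegrable (by continuity) _ _)
  have hub : ∀ t ∈ Set.Icc (-1:ℝ) 1, u t ≤ 3 * ∫ s in (-1:ℝ)..1, df s ^ 2 := by
    intro t ht
    have h0' : u (-1) = 0 := by simp [hu, h0]
    have key : u t ≤ ∫ s in (-1:ℝ)..t, 3 * df s ^ 2 := by
      rw [show u t = u t - u (-1) by rw [h0']; ring, hint t]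
      apply intervalIntegral.integral_mono_on ht.1
      · exact (Continuous.intervalIntegrable (by continuity) _ _)
      · exact (Continuous.intervalIntegrable (by continuity) _ _)
      · intro s hs
        have hexp : Real.exp (-s) ≤ 3 := by
          calc Real.exp (-s) ≤ Real.exp 1 := Real.exp_le_exp.mpr (by linarith [hs.1])
          _ ≤ 3 := by linarith [Real.exp_one_lt_d9]
        have hexp0 : 0 < Real.exp (-s) := Real.exp_pos _
        have hsq : 2 * f s * df s - f s ^ 2 ≤ df s ^ 2 := by nlinarith [sq_nonneg (f s - df s)]
        calc Real.exp (-s) * (2 * f s * df s - f s ^ 2) ≤ Real.exp (-s) * df s ^ 2 := by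
              exact mul_le_mul_of_nonneg_left hsq hexp0.le
        _ ≤ 3 * df s ^ 2 := mul_le_mul_of_nonneg_right hexp (sq_nonneg _)
    calc u t ≤ ∫ s in (-1:ℝ)..t, 3 * df s ^ 2 := key
    _ ≤ ∫ s in (-1:ℝ)..1, 3 * df s ^ 2 := by
        apply intervalIntegral.integral_mono_interval (le_refl (-1:ℝ)) ht.1 ht.2
        · exact Filter.Eventually.of_forall fun s => by positivity
        · exact (Continuous.intervalIntegrable (by continuity) _ _)
    _ = 3 * ∫ s in (-1:ℝ)..1, df s ^ 2 := by
        rw [intervalIntegral.integral_const_mul]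
  have hexp2 : Real.exp y ≤ 3 := by
    calc Real.exp y ≤ Real.exp 1 := Real.exp_le_exp.mpr hy.2
    _ ≤ 3 := by linarith [Real.exp_one_lt_d9]
  have hid : f y ^ 2 = Real.exp y * u y := by
    simp only [hu]
    rw [← mul_assoc, ← Real.exp_add]
    simp
  rw [hid]
  have hu0 : 0 ≤ u y := by positivity
  have hint0 : (0:ℝ) ≤ ∫ s in (-1:ℝ)..1, df s ^ 2 :=
    intervalIntegral.integral_nonneg (by norm_num) (fun s _ => sq_nonneg _)
  calc Real.exp y * u y ≤ 3 * u y := mul_le_mul_of_nonneg_right hexp2 hu0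
  _ ≤ 3 * (3 * ∫ s in (-1:ℝ)..1, df s ^ 2) :=
      mul_le_mul_of_nonneg_left (hub y hy) (by norm_num)
  _ = 9 * ∫ s in (-1:ℝ)..1, df s ^ 2 := by ring


section combinators
variable {a b : ℝ → ℝ → ℝ}

lemma uncurry_add (ha : ContDiff ℝ (⊤ : ℕ∞) (Function.uncurry a)) (hb : ContDiff ℝ (⊤ : ℕ∞) (Function.uncurry b)) :
    ContDiff ℝ (⊤ : ℕ∞) (Function.uncurry fun x y => a x y + b x y) := ha.add hb

lemma uncurry_sub (ha : ContDiff ℝ (⊤ : ℕ∞) (Function.uncurry a)) (hb : ContDiff ℝ (⊤ : ℕ∞) (Function.uncurry b)) :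
    ContDiff ℝ (⊤ : ℕ∞) (Function.uncurry fun x y => a x y - b x y) := ha.sub hb

lemma uncurry_mul (ha : ContDiff ℝ (⊤ : ℕ∞) (Function.uncurry a)) (hb : ContDiff ℝ (⊤ : ℕ∞) (Function.uncurry b)) :
    ContDiff ℝ (⊤ : ℕ∞) (Function.uncurry fun x y => a x y * b x y) := ha.mul hb

lemma uncurry_sq (ha : ContDiff ℝ (⊤ : ℕ∞) (Function.uncurry a)) :
    ContDiff ℝ (⊤ : ℕ∞) (Function.uncurry fun x y => a x y ^ 2) := by
  have := ha.mul ha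
  have h : (Function.uncurry fun x y => a x y ^ 2) = Function.uncurry fun x y => a x y * a x y := by
    funext p; simp [Function.uncurry, sq]
  rw [h]; exact this

lemma pdx_add (ha : ContDiff ℝ (⊤ : ℕ∞) (Function.uncurry a)) (hb : ContDiff ℝ (⊤ : ℕ∞) (Function.uncurry b))
    (x y : ℝ) : pdx (fun x y => a x y + b x y) x y = pdx a x y + pdx b x y :=
  ((hasDerivAt_pdx ha x y).add (hasDerivAt_pdx hb x y)).deriv

lemma pdx_mul (ha : ContDiff ℝ (⊤ : ℕ∞) (Function.uncurry a)) (hb : ContDiff ℝ (⊤ : ℕ∞) (Function.uncurry b))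
    (x y : ℝ) : pdx (fun x y => a x y * b x y) x y = pdx a x y * b x y + a x y * pdx b x y :=
  ((hasDerivAt_pdx ha x y).mul (hasDerivAt_pdx hb x y)).deriv

lemma pdx_sub (ha : ContDiff ℝ (⊤ : ℕ∞) (Function.uncurry a)) (hb : ContDiff ℝ (⊤ : ℕ∞) (Function.uncurry b))
    (x y : ℝ) : pdx (fun x y => a x y - b x y) x y = pdx a x y - pdx b x y :=
  ((hasDerivAt_pdx ha x y).sub (hasDerivAt_pdx hb x y)).deriv

lemma pdy_add (ha : ContDiff ℝ (⊤ : ℕ∞) (Function.uncurry a)) (hb : ContDiff ℝ (⊤ : ℕ∞) (Function.uncurry b))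
    (x y : ℝ) : pdy (fun x y => a x y + b x y) x y = pdy a x y + pdy b x y :=
  ((hasDerivAt_pdy ha x y).add (hasDerivAt_pdy hb x y)).deriv

lemma pdy_mul (ha : ContDiff ℝ (⊤ : ℕ∞) (Function.uncurry a)) (hb : ContDiff ℝ (⊤ : ℕ∞) (Function.uncurry b))
    (x y : ℝ) : pdy (fun x y => a x y * b x y) x y = pdy a x y * b x y + a x y * pdy b x y :=
  ((hasDerivAt_pdy ha x y).mul (hasDerivAt_pdy hb x y)).deriv

lemma pdy_sub (ha : ContDiff ℝ (⊤ : ℕ∞) (Function.uncurry a)) (hb : ContDiff ℝ (⊤ : ℕ∞) (Function.uncurry b))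
    (x y : ℝ) : pdy (fun x y => a x y - b x y) x y = pdy a x y - pdy b x y :=
  ((hasDerivAt_pdy ha x y).sub (hasDerivAt_pdy hb x y)).deriv

lemma pdx_pdy_comm' (hf : ContDiff ℝ (⊤ : ℕ∞) (Function.uncurry a)) : pdx (pdy a) = pdy (pdx a) :=
  funext fun x => funext fun y => pdx_pdy_comm hf x y

end combinators

lemma amgm {s : ℝ} (hs : 0 < s) (u v : ℝ) : |u * v| ≤ u^2/(2*s) + (s/2)*v^2 := by
  have key : ∀ p r : ℝ, p * r ≤ p^2/(2*s) + (s/2)*r^2 := by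
    intro p r
    have h : 0 ≤ (s/2) * (p/s - r)^2 := by positivity
    have hexp : (s/2) * (p/s - r)^2 = p^2/(2*s) - p*r + (s/2)*r^2 := by
      field_simp
      ring
    linarith [hexp ▸ h]
  rw [abs_le]
  constructor
  · have h2 := key u (-v)
    have hneg : (-v)^2 = v^2 := neg_sq v
    nlinarith [h2]
  · exact key u v

lemma abs_integral_le {f g : ℝ → ℝ} (hf : Continuous f) (hg : Continuous g)
    (hb : ∀ y ∈ Set.Icc (-1:ℝ) 1, |f y| ≤ g y) :
    |∫ y in (-1:ℝ)..1, f y| ≤ ∫ y in (-1:ℝ)..1, g y := by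
  have h1 : (∫ y in (-1:ℝ)..1, f y) ≤ ∫ y in (-1:ℝ)..1, g y := by
    apply intervalIntegral.integral_mono_on (by norm_num) (hf.intervalIntegrable _ _)
      (hg.intervalIntegrable _ _)
    intro y hy
    exact le_trans (le_abs_self _) (hb y hy)
  have h2 : (∫ y in (-1:ℝ)..1, -f y) ≤ ∫ y in (-1:ℝ)..1, g y := by
    apply intervalIntegral.integral_mono_on (by norm_num) (hf.neg.intervalIntegrable _ _)
      (hg.intervalIntegrable _ _)
    intro y hy
    exact le_trans (neg_le_abs _) (hb y hy)
  rw [intervalIntegral.integral_neg] at h2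
  rw [abs_le]
  exact ⟨by linarith, h1⟩

/-- continuous nonneg function with all symmetric integrals zero vanishes. -/
lemma zero_of_integral {g : ℝ → ℝ} (hg : Continuous g) (hnn : ∀ x, 0 ≤ g x)
    (hz : ∀ a : ℝ, 0 ≤ a → (∫ x in (-a)..a, g x) = 0) : ∀ x, g x = 0 := by
  intro x₀
  by_contra hne
  have hpos : 0 < g x₀ := lt_of_le_of_ne (hnn x₀) (Ne.symm hne)
  obtain ⟨δ, hδ, hball⟩ := Metric.continuousAt_iff.mp hg.continuousAt (g x₀ / 2) (by linarith)
  set δ' := min (δ / 2) 1 with hδ'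
  have hδ'pos : 0 < δ' := by positivity
  have hδ'le : δ' < δ := by
    have : δ' ≤ δ / 2 := min_le_left _ _
    linarith
  have hlow : ∀ t ∈ Set.Icc (x₀ - δ') (x₀ + δ'), g x₀ / 2 ≤ g t := by
    intro t ht
    have : dist t x₀ < δ := by
      rw [Real.dist_eq, abs_sub_lt_iff]
      constructor <;> [linarith [ht.2]; linarith [ht.1]]
    have := hball this
    rw [Real.dist_eq, abs_sub_lt_iff] at this
    linarith [this.2]
  set a := |x₀| + 1 with ha
  have ha0 : 0 ≤ a := by positivity
  have hz' := hz a ha0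
  have hsub1 : -a ≤ x₀ - δ' := by
    have h1 : -|x₀| ≤ x₀ := neg_abs_le x₀
    have h2 : δ' ≤ 1 := min_le_right _ _
    simp only [ha]; linarith
  have hsub2 : x₀ + δ' ≤ a := by
    have h1 : x₀ ≤ |x₀| := le_abs_self x₀
    have h2 : δ' ≤ 1 := min_le_right _ _
    simp only [ha]; linarith
  have hmono : (∫ x in (x₀ - δ')..(x₀ + δ'), g x) ≤ ∫ x in (-a)..a, g x := by
    apply intervalIntegral.integral_mono_interval hsub1 (by linarith) hsub2
    · exact Filter.Eventually.of_forall fun t => hnn t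
    · exact hg.intervalIntegrable _ _
  have hconst : (∫ x in (x₀ - δ')..(x₀ + δ'), (g x₀ / 2)) ≤ ∫ x in (x₀ - δ')..(x₀ + δ'), g x := by
    apply intervalIntegral.integral_mono_on (by linarith)
      (intervalIntegrable_const) (hg.intervalIntegrable _ _)
    exact hlow
  rw [intervalIntegral.integral_const, smul_eq_mul] at hconst
  have : 0 < (x₀ + δ' - (x₀ - δ')) * (g x₀ / 2) := by
    apply mul_pos (by linarith) (by linarith)
  linarith [hz' ▸ hmono]

/-- continuous nonneg function on `[-1,1]` with zero integral vanishes there. -/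
lemma zero_on_of_integral {g : ℝ → ℝ} (hg : Continuous g) (hnn : ∀ x, 0 ≤ g x)
    (hz : (∫ x in (-1:ℝ)..1, g x) = 0) : ∀ y ∈ Set.Icc (-1:ℝ) 1, g y = 0 := by
  intro y₀ hy₀
  by_contra hne
  have hpos : 0 < g y₀ := lt_of_le_of_ne (hnn y₀) (Ne.symm hne)
  obtain ⟨δ, hδ, hball⟩ := Metric.continuousAt_iff.mp hg.continuousAt (g y₀ / 2) (by linarith)
  set δ' := min (δ / 2) 1 with hδ'
  have hδ'pos : 0 < δ' := by positivity
  set y₁ := max (-1 : ℝ) (y₀ - δ') with hy₁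
  set y₂ := min (1 : ℝ) (y₀ + δ') with hy₂
  have h12 : y₁ < y₂ := by
    rcases le_or_gt (y₀ + δ') 1 with h | h
    · have : y₂ = y₀ + δ' := min_eq_right h
      rw [this]
      apply max_lt <;> [linarith [hy₀.1]; linarith]
    · have h2 : y₂ = 1 := min_eq_left (by linarith)
      rw [h2]
      apply max_lt (by norm_num)
      have : δ' ≤ 1 := min_le_right _ _
      nlinarith [hy₀.2, hδ'pos]
  have hy₁m : -1 ≤ y₁ := le_max_left _ _
  have hy₂m : y₂ ≤ 1 := min_le_left _ _
  have hlow : ∀ t ∈ Set.Icc y₁ y₂, g y₀ / 2 ≤ g t := by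
    intro t ht
    have hd1 : y₀ - δ' ≤ t := le_trans (le_max_right _ _) ht.1
    have hd2 : t ≤ y₀ + δ' := le_trans ht.2 (min_le_right _ _)
    have : dist t y₀ < δ := by
      rw [Real.dist_eq, abs_sub_lt_iff]
      have : δ' ≤ δ / 2 := min_le_left _ _
      constructor <;> linarith
    have := hball this
    rw [Real.dist_eq, abs_sub_lt_iff] at this
    linarith [this.2]
  have hmono : (∫ x in y₁..y₂, g x) ≤ ∫ x in (-1:ℝ)..1, g x := by
    apply intervalIntegral.integral_mono_interval hy₁m (le_of_lt h12) hy₂m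
    · exact Filter.Eventually.of_forall fun t => hnn t
    · exact hg.intervalIntegrable _ _
  have hconst : (∫ x in y₁..y₂, (g y₀ / 2)) ≤ ∫ x in y₁..y₂, g x := by
    apply intervalIntegral.integral_mono_on (le_of_lt h12)
      (intervalIntegrable_const) (hg.intervalIntegrable _ _)
    exact hlow
  rw [intervalIntegral.integral_const, smul_eq_mul] at hconst
  have : 0 < (y₂ - y₁) * (g y₀ / 2) := mul_pos (by linarith) (by linarith)
  linarith [hz ▸ hmono]

end CP

open CP in
set_option maxHeartbeats 2000000 in
/-- Uniqueness in the large of the symmetric Couette–Poiseuille flow in the symmetry class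
(X1) (Theorem 6.1 of the paper, stream-function form): under the symmetric condition (AC),
i.e. `(A,C) ≠ (0,0)`, `A ≤ 0`, `C ≥ 3|A|`, with `F(y) = 3Ay² + C`, if `ψ` is smooth,
has uniformly locally bounded Dirichlet integrals (orders 1 to 3), is even in `x`, solves the
full nonlinear stream-function equation
`Δ²ψ − [F(y)(ψ_xyy + ψ_xxx) − 6Aψ_x] + (ψ_x(Δψ)_y − ψ_y(Δψ)_x) = 0` in `S = ℝ × (-1,1)`,
and `ψ = ψ_x = ψ_y = 0` on `y = ±1`, then `ψ ≡ 0`. -/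
theorem stmt_15 (A C : ℝ) (hAC : (A, C) ≠ (0, 0)) (hA : A ≤ 0) (hC : 3 * |A| ≤ C)
    (ψ : ℝ → ℝ → ℝ)
    (hsmooth : ContDiff ℝ (⊤ : ℕ∞) (Function.uncurry ψ))
    (M : ℝ) (hM : 0 < M)
    (hloc : ∀ a : ℝ,
      (∫ x in a..(a + 1), ∫ y in (-1 : ℝ)..1,
          ((pdx ψ x y) ^ 2 + (pdy ψ x y) ^ 2
            + (pdx (pdx ψ) x y) ^ 2 + (pdy (pdx ψ) x y) ^ 2 + (pdy (pdy ψ) x y) ^ 2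
            + (pdx (pdx (pdx ψ)) x y) ^ 2 + (pdy (pdx (pdx ψ)) x y) ^ 2
            + (pdy (pdy (pdx ψ)) x y) ^ 2 + (pdy (pdy (pdy ψ)) x y) ^ 2)) ≤ M)
    (hsymm : ∀ x y : ℝ, ψ (-x) y = ψ x y)
    (heq : ∀ x : ℝ, ∀ y ∈ Set.Ioo (-1 : ℝ) 1,
      pdx (pdx (pdx (pdx ψ))) x y + 2 * pdy (pdy (pdx (pdx ψ))) x y
          + pdy (pdy (pdy (pdy ψ))) x y
        - ((3 * A * y ^ 2 + C) * (pdy (pdy (pdx ψ)) x y + pdx (pdx (pdx ψ)) x y)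
            - 6 * A * pdx ψ x y)
        + (pdx ψ x y * pdy (fun a b => pdx (pdx ψ) a b + pdy (pdy ψ) a b) x y
            - pdy ψ x y * pdx (fun a b => pdx (pdx ψ) a b + pdy (pdy ψ) a b) x y) = 0)
    (hbc : ∀ x : ℝ, ψ x (-1) = 0 ∧ ψ x 1 = 0 ∧ pdx ψ x (-1) = 0 ∧ pdx ψ x 1 = 0 ∧
      pdy ψ x (-1) = 0 ∧ pdy ψ x 1 = 0) :
    ∀ x : ℝ, ∀ y ∈ Set.Icc (-1 : ℝ) 1, ψ x y = 0 := by
  classical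
  set w : ℝ → ℝ → ℝ := fun a b => pdx (pdx ψ) a b + pdy (pdy ψ) a b with hw_def
  -- ### smoothness of all the words we use
  have hψ : ContDiff ℝ (⊤ : ℕ∞) (Function.uncurry ψ) := hsmooth
  have h1x := contDiff_pdx hψ
  have h1y := contDiff_pdy hψ
  have h2xx := contDiff_pdx h1x
  have h2yy := contDiff_pdy h1y
  have h2yx := contDiff_pdy h1x
  have h2xy := contDiff_pdx h1y
  have h3xxx := contDiff_pdx h2xx
  have h3yyx := contDiff_pdy h2yx
  have h3yyy := contDiff_pdy h2yy
  have h3yxx := contDiff_pdy h2xx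
  have h4xxxx := contDiff_pdx h3xxx
  have h4yyyy := contDiff_pdy h3yyy
  have hw' : ContDiff ℝ (⊤ : ℕ∞) (Function.uncurry w) := uncurry_add h2xx h2yy
  have hwx := contDiff_pdx hw'
  have hwy := contDiff_pdy hw'
  have hwxx := contDiff_pdx hwx
  have hwyy := contDiff_pdy hwy
  -- ### parity
  have s1x : ∀ x y, pdx ψ (-x) y = -pdx ψ x y := pdx_evenX hsymm
  have s1y : ∀ x y, pdy ψ (-x) y = pdy ψ x y := pdy_evenX hsymm
  have s2xx : ∀ x y, pdx (pdx ψ) (-x) y = pdx (pdx ψ) x y := pdx_oddX s1x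
  have s2yy : ∀ x y, pdy (pdy ψ) (-x) y = pdy (pdy ψ) x y := pdy_evenX s1y
  have sw : ∀ x y, w (-x) y = w x y := by
    intro x y; simp only [hw_def]; rw [s2xx, s2yy]
  have swx : ∀ x y, pdx w (-x) y = -pdx w x y := pdx_evenX sw
  have swy : ∀ x y, pdy w (-x) y = pdy w x y := pdy_evenX sw
  have s3x : ∀ x y, pdx (pdx (pdx ψ)) (-x) y = -pdx (pdx (pdx ψ)) x y := pdx_evenX s2xx
  have s4x : ∀ x y, pdx (pdx (pdx (pdx ψ))) (-x) y = pdx (pdx (pdx (pdx ψ))) x y := pdx_oddX s3x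
  have s2yx : ∀ x y, pdy (pdx ψ) (-x) y = -pdy (pdx ψ) x y := pdy_oddX s1x
  have s3yyx : ∀ x y, pdy (pdy (pdx ψ)) (-x) y = -pdy (pdy (pdx ψ)) x y := pdy_oddX s2yx
  have s4yyxx : ∀ x y, pdy (pdy (pdx (pdx ψ))) (-x) y = pdy (pdy (pdx (pdx ψ))) x y :=
    pdy_evenX (pdy_evenX s2xx)
  have s4y : ∀ x y, pdy (pdy (pdy (pdy ψ))) (-x) y = pdy (pdy (pdy (pdy ψ))) x y :=
    pdy_evenX (pdy_evenX s2yy)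
  -- ### even part of the equation: ψ is biharmonic
  have hE : ∀ x : ℝ, ∀ y ∈ Set.Ioo (-1:ℝ) 1,
      pdx (pdx (pdx (pdx ψ))) x y + 2 * pdy (pdy (pdx (pdx ψ))) x y
        + pdy (pdy (pdy (pdy ψ))) x y = 0 := by
    intro x y hy
    have E1 := heq x y hy
    have E2 := heq (-x) y hy
    rw [s4x, s4yyxx, s4y, s3yyx, s3x, s1x, s1y, swy, swx] at E2
    linarith [E1, E2]
  -- ### Clairaut reorderings
  have c0 : pdx (pdy ψ) = pdy (pdx ψ) := pdx_pdy_comm' hψ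
  have hcomm : pdx (pdx (pdy (pdy ψ))) = pdy (pdy (pdx (pdx ψ))) := by
    calc pdx (pdx (pdy (pdy ψ))) = pdx (pdy (pdx (pdy ψ))) := by rw [pdx_pdy_comm' h1y]
    _ = pdy (pdx (pdx (pdy ψ))) := pdx_pdy_comm' h2xy
    _ = pdy (pdx (pdy (pdx ψ))) := by rw [c0]
    _ = pdy (pdy (pdx (pdx ψ))) := by rw [pdx_pdy_comm' h1x]
  have hcomm1 : pdx (pdy (pdy ψ)) = pdy (pdy (pdx ψ)) := by
    calc pdx (pdy (pdy ψ)) = pdy (pdx (pdy ψ)) := pdx_pdy_comm' h1y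
    _ = pdy (pdy (pdx ψ)) := by rw [c0]
  -- derivatives of w
  have hpdxw : pdx w = fun x y => pdx (pdx (pdx ψ)) x y + pdy (pdy (pdx ψ)) x y := by
    funext u v
    have : pdx w u v = pdx (pdx (pdx ψ)) u v + pdx (pdy (pdy ψ)) u v := pdx_add h2xx h2yy u v
    rw [this, hcomm1]
  have hpdyw : pdy w = fun x y => pdy (pdx (pdx ψ)) x y + pdy (pdy (pdy ψ)) x y := by
    funext u v
    exact pdy_add h2xx h2yy u v
  have hpdxxw : ∀ x y, pdx (pdx w) x y
      = pdx (pdx (pdx (pdx ψ))) x y + pdy (pdy (pdx (pdx ψ))) x y := by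
    intro x y
    rw [hpdxw]
    have : pdx (fun x y => pdx (pdx (pdx ψ)) x y + pdy (pdy (pdx ψ)) x y) x y
        = pdx (pdx (pdx (pdx ψ))) x y + pdx (pdy (pdy (pdx ψ))) x y := pdx_add h3xxx h3yyx x y
    rw [this]
    congr 1
    have : pdx (pdy (pdy (pdx ψ))) = pdy (pdy (pdx (pdx ψ))) := by
      calc pdx (pdy (pdy (pdx ψ))) = pdy (pdx (pdy (pdx ψ))) := pdx_pdy_comm' h2yx
      _ = pdy (pdy (pdx (pdx ψ))) := by rw [pdx_pdy_comm' h1x]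
    rw [this]
  have hpdyyw : ∀ x y, pdy (pdy w) x y
      = pdy (pdy (pdx (pdx ψ))) x y + pdy (pdy (pdy (pdy ψ))) x y := by
    intro x y
    rw [hpdyw]
    exact pdy_add h3yxx h3yyy x y
  -- ### biharmonicity on the closed strip
  have hbih : ∀ x : ℝ, ∀ y ∈ Set.Icc (-1:ℝ) 1, pdx (pdx w) x y + pdy (pdy w) x y = 0 := by
    intro x y hy
    have hIoo : ∀ z ∈ Set.Ioo (-1:ℝ) 1, pdx (pdx w) x z + pdy (pdy w) x z = 0 := by
      intro z hz
      rw [hpdxxw, hpdyyw]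
      linarith [hE x z hz]
    have hcont : Continuous (fun z => pdx (pdx w) x z + pdy (pdy w) x z) := by
      have c1 : Continuous (fun z => pdx (pdx w) x z) :=
        (hwxx.continuous).comp (continuous_const.prodMk continuous_id)
      have c2 : Continuous (fun z => pdy (pdy w) x z) :=
        (hwyy.continuous).comp (continuous_const.prodMk continuous_id)
      exact c1.add c2
    have hclosed : IsClosed {z : ℝ | pdx (pdx w) x z + pdy (pdy w) x z = 0} :=
      isClosed_eq hcont continuous_const
    have hsub : Set.Ioo (-1:ℝ) 1 ⊆ {z : ℝ | pdx (pdx w) x z + pdy (pdy w) x z = 0} :=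
      fun z hz => hIoo z hz
    have : Set.Icc (-1:ℝ) 1 ⊆ {z : ℝ | pdx (pdx w) x z + pdy (pdy w) x z = 0} := by
      rw [← closure_Ioo (by norm_num : (-1:ℝ) ≠ 1)]
      exact hclosed.closure_subset_iff.mpr hsub
    exact this hy
  -- ### integral quantities
  set L : ℝ → ℝ := fun x => ∫ y in (-1:ℝ)..1,
      ((pdx ψ x y) ^ 2 + (pdy ψ x y) ^ 2
        + (pdx (pdx ψ) x y) ^ 2 + (pdy (pdx ψ) x y) ^ 2 + (pdy (pdy ψ) x y) ^ 2
        + (pdx (pdx (pdx ψ)) x y) ^ 2 + (pdy (pdx (pdx ψ)) x y) ^ 2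
        + (pdy (pdy (pdx ψ)) x y) ^ 2 + (pdy (pdy (pdy ψ)) x y) ^ 2) with hLdef
  set D1 : ℝ → ℝ := fun x => ∫ y in (-1:ℝ)..1, ((pdx ψ x y) ^ 2 + (pdy ψ x y) ^ 2) with hD1def
  set Q2 : ℝ → ℝ := fun x => ∫ y in (-1:ℝ)..1, (w x y) ^ 2 with hQ2def
  set Phi : ℝ → ℝ := fun x => ∫ y in (-1:ℝ)..1,
      (pdx ψ x y * w x y - ψ x y * pdx w x y) with hPhidef
  set Phi1 : ℝ → ℝ := fun x => ∫ y in (-1:ℝ)..1, (ψ x y * pdx ψ x y) with hPhi1def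
  set R : ℝ → ℝ := fun x => ∫ y in (-1:ℝ)..1, (ψ x y * w x y) with hRdef
  have hlocL : ∀ a : ℝ, (∫ x in a..(a+1), L x) ≤ M := hloc
  -- smoothness of integrands
  have hSQ : ContDiff ℝ (⊤ : ℕ∞) (Function.uncurry fun x y =>
      ((pdx ψ x y) ^ 2 + (pdy ψ x y) ^ 2
        + (pdx (pdx ψ) x y) ^ 2 + (pdy (pdx ψ) x y) ^ 2 + (pdy (pdy ψ) x y) ^ 2
        + (pdx (pdx (pdx ψ)) x y) ^ 2 + (pdy (pdx (pdx ψ)) x y) ^ 2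
        + (pdy (pdy (pdx ψ)) x y) ^ 2 + (pdy (pdy (pdy ψ)) x y) ^ 2)) :=
    ((((((((uncurry_sq h1x).add (uncurry_sq h1y)).add (uncurry_sq h2xx)).add
      (uncurry_sq h2yx)).add (uncurry_sq h2yy)).add (uncurry_sq h3xxx)).add
      (uncurry_sq h3yxx)).add (uncurry_sq h3yyx)).add (uncurry_sq h3yyy)
  have slice : ∀ {H : ℝ → ℝ → ℝ}, ContDiff ℝ (⊤ : ℕ∞) (Function.uncurry H) →
      ∀ x, Continuous (fun y => H x y) := fun h x =>
    h.continuous.comp (continuous_const.prodMk continuous_id)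
  have hLcont : Continuous L := continuous_param_integral hSQ
  have hD1cont : Continuous D1 :=
    continuous_param_integral ((uncurry_sq h1x).add (uncurry_sq h1y))
  have hQ2cont : Continuous Q2 := continuous_param_integral (uncurry_sq hw')
  have hPhicont : Continuous Phi :=
    continuous_param_integral (uncurry_sub (uncurry_mul h1x hw') (uncurry_mul hψ hwx))
  have hPhi1cont : Continuous Phi1 := continuous_param_integral (uncurry_mul hψ h1x)
  have hRcont : Continuous R := continuous_param_integral (uncurry_mul hψ hw')
  have hLnn : ∀ x, 0 ≤ L x := fun x =>
    intervalIntegral.integral_nonneg (by norm_num) (fun y _ => by positivity)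
  have hD1nn : ∀ x, 0 ≤ D1 x := fun x =>
    intervalIntegral.integral_nonneg (by norm_num) (fun y _ => by positivity)
  have hQ2nn : ∀ x, 0 ≤ Q2 x := fun x =>
    intervalIntegral.integral_nonneg (by norm_num) (fun y _ => by positivity)
  -- pointwise-in-x comparisons of line integrals
  have hD1L : ∀ x, D1 x ≤ L x := by
    intro x
    apply intervalIntegral.integral_mono_on (by norm_num)
      ((slice (uncurry_add (uncurry_sq h1x) (uncurry_sq h1y)) x).intervalIntegrable _ _)
      ((slice hSQ x).intervalIntegrable _ _)
    intro y _
    nlinarith [sq_nonneg (pdx (pdx ψ) x y), sq_nonneg (pdy (pdx ψ) x y),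
      sq_nonneg (pdy (pdy ψ) x y), sq_nonneg (pdx (pdx (pdx ψ)) x y),
      sq_nonneg (pdy (pdx (pdx ψ)) x y), sq_nonneg (pdy (pdy (pdx ψ)) x y),
      sq_nonneg (pdy (pdy (pdy ψ)) x y)]
  have hQ2L : ∀ x, Q2 x ≤ 2 * L x := by
    intro x
    have h2L : 2 * L x = ∫ y in (-1:ℝ)..1, 2 *
        ((pdx ψ x y) ^ 2 + (pdy ψ x y) ^ 2
          + (pdx (pdx ψ) x y) ^ 2 + (pdy (pdx ψ) x y) ^ 2 + (pdy (pdy ψ) x y) ^ 2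
          + (pdx (pdx (pdx ψ)) x y) ^ 2 + (pdy (pdx (pdx ψ)) x y) ^ 2
          + (pdy (pdy (pdx ψ)) x y) ^ 2 + (pdy (pdy (pdy ψ)) x y) ^ 2) :=
      (intervalIntegral.integral_const_mul _ _).symm
    rw [h2L]
    apply intervalIntegral.integral_mono_on (by norm_num)
      ((slice (uncurry_sq hw') x).intervalIntegrable _ _)
      ((continuous_const.fun_mul (slice hSQ x)).intervalIntegrable _ _)
    intro y _
    simp only [hw_def]
    nlinarith [sq_nonneg (pdx (pdx ψ) x y - pdy (pdy ψ) x y), sq_nonneg (pdx ψ x y),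
      sq_nonneg (pdy ψ x y), sq_nonneg (pdy (pdx ψ) x y), sq_nonneg (pdx (pdx (pdx ψ)) x y),
      sq_nonneg (pdy (pdx (pdx ψ)) x y), sq_nonneg (pdy (pdy (pdx ψ)) x y),
      sq_nonneg (pdy (pdy (pdy ψ)) x y)]
  have hWXL : ∀ x, (∫ y in (-1:ℝ)..1, (pdx w x y) ^ 2) ≤ 2 * L x := by
    intro x
    have h2L : 2 * L x = ∫ y in (-1:ℝ)..1, 2 *
        ((pdx ψ x y) ^ 2 + (pdy ψ x y) ^ 2
          + (pdx (pdx ψ) x y) ^ 2 + (pdy (pdx ψ) x y) ^ 2 + (pdy (pdy ψ) x y) ^ 2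
          + (pdx (pdx (pdx ψ)) x y) ^ 2 + (pdy (pdx (pdx ψ)) x y) ^ 2
          + (pdy (pdy (pdx ψ)) x y) ^ 2 + (pdy (pdy (pdy ψ)) x y) ^ 2) :=
      (intervalIntegral.integral_const_mul _ _).symm
    rw [h2L]
    apply intervalIntegral.integral_mono_on (by norm_num)
      ((slice (uncurry_sq hwx) x).intervalIntegrable _ _)
      ((continuous_const.fun_mul (slice hSQ x)).intervalIntegrable _ _)
    intro y _
    rw [hpdxw]
    simp only []
    nlinarith [sq_nonneg (pdx (pdx (pdx ψ)) x y - pdy (pdy (pdx ψ)) x y), sq_nonneg (pdx ψ x y),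
      sq_nonneg (pdy ψ x y), sq_nonneg (pdx (pdx ψ) x y), sq_nonneg (pdy (pdx ψ) x y),
      sq_nonneg (pdy (pdy ψ) x y), sq_nonneg (pdy (pdx (pdx ψ)) x y),
      sq_nonneg (pdy (pdy (pdy ψ)) x y)]
  have hPdyD1 : ∀ x, (∫ y in (-1:ℝ)..1, (pdy ψ x y) ^ 2) ≤ D1 x := by
    intro x
    apply intervalIntegral.integral_mono_on (by norm_num)
      ((slice (uncurry_sq h1y) x).intervalIntegrable _ _)
      ((slice (uncurry_add (uncurry_sq h1x) (uncurry_sq h1y)) x).intervalIntegrable _ _)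
    intro y _
    nlinarith [sq_nonneg (pdx ψ x y)]
  have hPdxD1 : ∀ x, (∫ y in (-1:ℝ)..1, (pdx ψ x y) ^ 2) ≤ D1 x := by
    intro x
    apply intervalIntegral.integral_mono_on (by norm_num)
      ((slice (uncurry_sq h1x) x).intervalIntegrable _ _)
      ((slice (uncurry_add (uncurry_sq h1x) (uncurry_sq h1y)) x).intervalIntegrable _ _)
    intro y _
    nlinarith [sq_nonneg (pdy ψ x y)]
  have hPoin : ∀ x : ℝ, ∀ y ∈ Set.Icc (-1:ℝ) 1, (ψ x y) ^ 2 ≤ 9 * D1 x := by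
    intro x y hy
    have h9 := poincare_pt (f := fun s => ψ x s) (df := fun s => pdy ψ x s)
      (hasDerivAt_pdy hψ x) (slice h1y x) (hbc x).1 hy
    have h9' : (9:ℝ) * (∫ s in (-1:ℝ)..1, (pdy ψ x s) ^ 2) ≤ 9 * D1 x := by
      have := hPdyD1 x
      linarith
    exact le_trans h9 h9'
  have hPsi2 : ∀ x, (∫ y in (-1:ℝ)..1, (ψ x y) ^ 2) ≤ 18 * D1 x := by
    intro x
    have hconst : (∫ y in (-1:ℝ)..1, (ψ x y) ^ 2) ≤ ∫ y in (-1:ℝ)..1, (9 * D1 x) := by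
      apply intervalIntegral.integral_mono_on (by norm_num)
        ((slice (uncurry_sq hψ) x).intervalIntegrable _ _) intervalIntegrable_const
      exact fun y hy => hPoin x y hy
    rw [intervalIntegral.integral_const, smul_eq_mul] at hconst
    have : (1 - (-1:ℝ)) * (9 * D1 x) = 18 * D1 x := by ring
    linarith [hconst, this]
  -- derivative identities
  have hPhider : ∀ x, HasDerivAt Phi (Q2 x) x := by
    intro x
    have hH : ContDiff ℝ (⊤ : ℕ∞) (Function.uncurry fun x y => pdx ψ x y * w x y - ψ x y * pdx w x y) :=
      uncurry_sub (uncurry_mul h1x hw') (uncurry_mul hψ hwx)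
    have h0 := hasDerivAt_integral hH x
    have hkey : (∫ y in (-1:ℝ)..1,
        pdx (fun x y => pdx ψ x y * w x y - ψ x y * pdx w x y) x y) = Q2 x := by
      have hpdxH : ∀ y : ℝ, pdx (fun x y => pdx ψ x y * w x y - ψ x y * pdx w x y) x y
          = pdx (pdx ψ) x y * w x y - ψ x y * pdx (pdx w) x y := by
        intro y
        have hd : HasDerivAt (fun t => pdx ψ t y * w t y - ψ t y * pdx w t y)
            ((pdx (pdx ψ) x y * w x y + pdx ψ x y * pdx w x y)
              - (pdx ψ x y * pdx w x y + ψ x y * pdx (pdx w) x y)) x :=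
          ((hasDerivAt_pdx h1x x y).mul (hasDerivAt_pdx hw' x y)).sub
            ((hasDerivAt_pdx hψ x y).mul (hasDerivAt_pdx hwx x y))
        have hD := hd.deriv
        show deriv (fun t => pdx ψ t y * w t y - ψ t y * pdx w t y) x = _
        rw [hD]; ring
      have hG : ContDiff ℝ (⊤ : ℕ∞) (Function.uncurry fun x y => ψ x y * pdy w x y - pdy ψ x y * w x y) :=
        uncurry_sub (uncurry_mul hψ hwy) (uncurry_mul h1y hw')
      have hpdyG : ∀ y : ℝ, pdy (fun x y => ψ x y * pdy w x y - pdy ψ x y * w x y) x y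
          = (pdy ψ x y * pdy w x y + ψ x y * pdy (pdy w) x y)
            - (pdy (pdy ψ) x y * w x y + pdy ψ x y * pdy w x y) := by
        intro y
        have hd : HasDerivAt (fun s => ψ x s * pdy w x s - pdy ψ x s * w x s)
            ((pdy ψ x y * pdy w x y + ψ x y * pdy (pdy w) x y)
              - (pdy (pdy ψ) x y * w x y + pdy ψ x y * pdy w x y)) y :=
          ((hasDerivAt_pdy hψ x y).mul (hasDerivAt_pdy hwy x y)).sub
            ((hasDerivAt_pdy h1y x y).mul (hasDerivAt_pdy hw' x y))
        exact hd.deriv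
      have step1 : (∫ y in (-1:ℝ)..1,
          pdx (fun x y => pdx ψ x y * w x y - ψ x y * pdx w x y) x y)
          = ∫ y in (-1:ℝ)..1, ((w x y) ^ 2
              + pdy (fun x y => ψ x y * pdy w x y - pdy ψ x y * w x y) x y) := by
        apply intervalIntegral.integral_congr
        intro y hy
        rw [Set.uIcc_of_le (by norm_num : (-1:ℝ) ≤ 1)] at hy
        dsimp only
        rw [hpdxH y, hpdyG y]
        have hc : pdx (pdx w) x y = - pdy (pdy w) x y := by linarith [hbih x y hy]
        rw [hc]
        simp only [hw_def]
        ring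
      rw [step1]
      have step2 : (∫ y in (-1:ℝ)..1, ((w x y) ^ 2
          + pdy (fun x y => ψ x y * pdy w x y - pdy ψ x y * w x y) x y))
          = (∫ y in (-1:ℝ)..1, (w x y) ^ 2)
            + ∫ y in (-1:ℝ)..1, pdy (fun x y => ψ x y * pdy w x y - pdy ψ x y * w x y) x y :=
        intervalIntegral.integral_add ((slice (uncurry_sq hw') x).intervalIntegrable _ _)
          ((slice (contDiff_pdy hG) x).intervalIntegrable _ _)
      rw [step2, integral_pdy hG x]
      have hb1 : ψ x 1 = 0 := (hbc x).2.1
      have hb2 : ψ x (-1) = 0 := (hbc x).1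
      have hb3 : pdy ψ x 1 = 0 := (hbc x).2.2.2.2.2
      have hb4 : pdy ψ x (-1) = 0 := (hbc x).2.2.2.2.1
      simp [hb1, hb2, hb3, hb4]
      rfl
    rw [← hkey]
    exact h0
  have hPhi1der : ∀ x, HasDerivAt Phi1 (D1 x + R x) x := by
    intro x
    have hH : ContDiff ℝ (⊤ : ℕ∞) (Function.uncurry fun x y => ψ x y * pdx ψ x y) :=
      uncurry_mul hψ h1x
    have h0 := hasDerivAt_integral hH x
    have hkey : (∫ y in (-1:ℝ)..1, pdx (fun x y => ψ x y * pdx ψ x y) x y)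
        = D1 x + R x := by
      have hpdxH : ∀ y : ℝ, pdx (fun x y => ψ x y * pdx ψ x y) x y
          = (pdx ψ x y) ^ 2 + ψ x y * pdx (pdx ψ) x y := by
        intro y
        have hd : HasDerivAt (fun t => ψ t y * pdx ψ t y)
            (pdx ψ x y * pdx ψ x y + ψ x y * pdx (pdx ψ) x y) x :=
          (hasDerivAt_pdx hψ x y).mul (hasDerivAt_pdx h1x x y)
        have hD := hd.deriv
        show deriv (fun t => ψ t y * pdx ψ t y) x = _
        rw [hD]; ring
      have hG : ContDiff ℝ (⊤ : ℕ∞) (Function.uncurry fun x y => ψ x y * pdy ψ x y) :=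
        uncurry_mul hψ h1y
      have hpdyG : ∀ y : ℝ, pdy (fun x y => ψ x y * pdy ψ x y) x y
          = (pdy ψ x y) ^ 2 + ψ x y * pdy (pdy ψ) x y := by
        intro y
        have hd : HasDerivAt (fun s => ψ x s * pdy ψ x s)
            (pdy ψ x y * pdy ψ x y + ψ x y * pdy (pdy ψ) x y) y :=
          (hasDerivAt_pdy hψ x y).mul (hasDerivAt_pdy h1y x y)
        have hD := hd.deriv
        show deriv (fun s => ψ x s * pdy ψ x s) y = _
        rw [hD]; ring
      have step1 : (∫ y in (-1:ℝ)..1, pdx (fun x y => ψ x y * pdx ψ x y) x y)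
          = ∫ y in (-1:ℝ)..1, ((((pdx ψ x y) ^ 2 + (pdy ψ x y) ^ 2) + ψ x y * w x y)
              - pdy (fun x y => ψ x y * pdy ψ x y) x y) := by
        apply intervalIntegral.integral_congr
        intro y _
        dsimp only
        rw [hpdxH y, hpdyG y]
        simp only [hw_def]
        ring
      rw [step1]
      have step2 : (∫ y in (-1:ℝ)..1, ((((pdx ψ x y) ^ 2 + (pdy ψ x y) ^ 2) + ψ x y * w x y)
              - pdy (fun x y => ψ x y * pdy ψ x y) x y))
          = (∫ y in (-1:ℝ)..1, (((pdx ψ x y) ^ 2 + (pdy ψ x y) ^ 2) + ψ x y * w x y))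
            - ∫ y in (-1:ℝ)..1, pdy (fun x y => ψ x y * pdy ψ x y) x y :=
        intervalIntegral.integral_sub
          (((slice (uncurry_add (uncurry_add (uncurry_sq h1x) (uncurry_sq h1y))
            (uncurry_mul hψ hw')) x)).intervalIntegrable _ _)
          ((slice (contDiff_pdy hG) x).intervalIntegrable _ _)
      have step3 : (∫ y in (-1:ℝ)..1, (((pdx ψ x y) ^ 2 + (pdy ψ x y) ^ 2) + ψ x y * w x y))
          = (∫ y in (-1:ℝ)..1, ((pdx ψ x y) ^ 2 + (pdy ψ x y) ^ 2))
            + ∫ y in (-1:ℝ)..1, ψ x y * w x y :=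
        intervalIntegral.integral_add
          ((slice (uncurry_add (uncurry_sq h1x) (uncurry_sq h1y)) x).intervalIntegrable _ _)
          ((slice (uncurry_mul hψ hw') x).intervalIntegrable _ _)
      rw [step2, step3, integral_pdy hG x]
      have hb1 : ψ x 1 = 0 := (hbc x).2.1
      have hb2 : ψ x (-1) = 0 := (hbc x).1
      simp [hb1, hb2]
      rfl
    rw [← hkey]
    exact h0
  -- bounds
  have hRbd : ∀ x, |R x| ≤ (1/4) * D1 x + 18 * Q2 x := by
    intro x
    have hb : |R x| ≤ ∫ y in (-1:ℝ)..1, ((ψ x y)^2/(2*36) + (36/2)*(w x y)^2) := by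
      apply abs_integral_le (slice (uncurry_mul hψ hw') x)
        (by
          have c1 := slice (uncurry_sq hψ) x
          have c2 := slice (uncurry_sq hw') x
          continuity)
      intro y _
      exact amgm (by norm_num : (0:ℝ) < 36) (ψ x y) (w x y)
    have hsplit : (∫ y in (-1:ℝ)..1, ((ψ x y)^2/(2*36) + (36/2)*(w x y)^2))
        = (1/72) * (∫ y in (-1:ℝ)..1, (ψ x y)^2) + 18 * ∫ y in (-1:ℝ)..1, (w x y)^2 := by
      rw [intervalIntegral.integral_add
        (((slice (uncurry_sq hψ) x).div_const _).intervalIntegrable _ _)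
        ((continuous_const.fun_mul (slice (uncurry_sq hw') x)).intervalIntegrable _ _),
        intervalIntegral.integral_const_mul, intervalIntegral.integral_div]
      ring
    have h18 := hPsi2 x
    have hQnn := hQ2nn x
    have : (1/72) * (∫ y in (-1:ℝ)..1, (ψ x y)^2) ≤ (1/72) * (18 * D1 x) := by
      apply mul_le_mul_of_nonneg_left h18 (by norm_num)
    calc |R x| ≤ _ := hb
    _ = _ := hsplit
    _ ≤ (1/4) * D1 x + 18 * Q2 x := by
        simp only [hQ2def]
        linarith
  have hPhibd : ∀ s : ℝ, 0 < s → ∀ x, |Phi x| ≤ (1 + 9/s) * (D1 x + Q2 x) + s * L x := by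
    intro s hs x
    have hb : |Phi x| ≤ ∫ y in (-1:ℝ)..1,
        (((pdx ψ x y)^2/(2*1) + (1/2)*(w x y)^2)
          + ((ψ x y)^2/(2*s) + (s/2)*(pdx w x y)^2)) := by
      apply abs_integral_le
        (slice (uncurry_sub (uncurry_mul h1x hw') (uncurry_mul hψ hwx)) x)
        (by
          have c1 := slice (uncurry_sq h1x) x
          have c2 := slice (uncurry_sq hw') x
          have c3 := slice (uncurry_sq hψ) x
          have c4 := slice (uncurry_sq hwx) x
          have hs' : s ≠ 0 := ne_of_gt hs
          continuity)
      intro y _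
      have h1 : |pdx ψ x y * w x y| ≤ (pdx ψ x y)^2/(2*1) + (1/2)*(w x y)^2 :=
        amgm (by norm_num : (0:ℝ) < 1) _ _
      have h2 : |ψ x y * pdx w x y| ≤ (ψ x y)^2/(2*s) + (s/2)*(pdx w x y)^2 :=
        amgm hs _ _
      calc |pdx ψ x y * w x y - ψ x y * pdx w x y|
          ≤ |pdx ψ x y * w x y| + |ψ x y * pdx w x y| := abs_sub _ _
      _ ≤ _ := by linarith
    have hsplit : (∫ y in (-1:ℝ)..1,
        (((pdx ψ x y)^2/(2*1) + (1/2)*(w x y)^2)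
          + ((ψ x y)^2/(2*s) + (s/2)*(pdx w x y)^2)))
        = ((1/2) * (∫ y in (-1:ℝ)..1, (pdx ψ x y)^2) + (1/2) * ∫ y in (-1:ℝ)..1, (w x y)^2)
          + ((1/(2*s)) * (∫ y in (-1:ℝ)..1, (ψ x y)^2)
            + (s/2) * ∫ y in (-1:ℝ)..1, (pdx w x y)^2) := by
      have i1 : IntervalIntegrable (fun y => (pdx ψ x y)^2/(2*1)) MeasureTheory.volume (-1:ℝ) 1 :=
        ((slice (uncurry_sq h1x) x).div_const _).intervalIntegrable _ _
      have i2 : IntervalIntegrable (fun y => (1/2)*(w x y)^2) MeasureTheory.volume (-1:ℝ) 1 :=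
        (continuous_const.mul (slice (uncurry_sq hw') x)).intervalIntegrable _ _
      have i3 : IntervalIntegrable (fun y => (ψ x y)^2/(2*s)) MeasureTheory.volume (-1:ℝ) 1 :=
        ((slice (uncurry_sq hψ) x).div_const _).intervalIntegrable _ _
      have i4 : IntervalIntegrable (fun y => (s/2)*(pdx w x y)^2) MeasureTheory.volume (-1:ℝ) 1 :=
        (continuous_const.mul (slice (uncurry_sq hwx) x)).intervalIntegrable _ _
      rw [intervalIntegral.integral_add (i1.add i2) (i3.add i4),
        intervalIntegral.integral_add i1 i2, intervalIntegral.integral_add i3 i4,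
        intervalIntegral.integral_const_mul, intervalIntegral.integral_div,
        intervalIntegral.integral_div, intervalIntegral.integral_const_mul]
      have hs0 : s ≠ 0 := ne_of_gt hs
      field_simp
    have h18 := hPsi2 x
    have hDx := hPdxD1 x
    have hWX := hWXL x
    have hQ2x : (∫ y in (-1:ℝ)..1, (w x y)^2) = Q2 x := rfl
    have hs9 : (1/(2*s)) * (∫ y in (-1:ℝ)..1, (ψ x y)^2) ≤ (9/s) * D1 x := by
      have := mul_le_mul_of_nonneg_left h18 (le_of_lt (by positivity : (0:ℝ) < 1/(2*s)))
      have heq9 : (1/(2*s)) * (18 * D1 x) = (9/s) * D1 x := by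
        field_simp
        ring
      linarith [heq9 ▸ this]
    have hsL : (s/2) * (∫ y in (-1:ℝ)..1, (pdx w x y)^2) ≤ s * L x := by
      have := mul_le_mul_of_nonneg_left hWX (le_of_lt (by positivity : (0:ℝ) < s/2))
      have heqL : (s/2) * (2 * L x) = s * L x := by ring
      linarith [heqL ▸ this]
    have hDnn := hD1nn x
    have hQnn := hQ2nn x
    have h9s : 0 ≤ 9/s := by positivity
    calc |Phi x| ≤ _ := hb
    _ = _ := hsplit
    _ ≤ (1 + 9/s) * (D1 x + Q2 x) + s * L x := by
        rw [hQ2x] at *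
        nlinarith [hs9, hsL, hDx, hDnn, hQnn, h9s]
  have hPhi1bd : ∀ x, |Phi1 x| ≤ 10 * D1 x := by
    intro x
    have hb : |Phi1 x| ≤ ∫ y in (-1:ℝ)..1, ((ψ x y)^2/(2*1) + (1/2)*(pdx ψ x y)^2) := by
      apply abs_integral_le (slice (uncurry_mul hψ h1x) x)
        (by
          have c1 := slice (uncurry_sq hψ) x
          have c2 := slice (uncurry_sq h1x) x
          continuity)
      intro y _
      exact amgm (by norm_num : (0:ℝ) < 1) (ψ x y) (pdx ψ x y)
    have hsplit : (∫ y in (-1:ℝ)..1, ((ψ x y)^2/(2*1) + (1/2)*(pdx ψ x y)^2))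
        = (1/2) * (∫ y in (-1:ℝ)..1, (ψ x y)^2) + (1/2) * ∫ y in (-1:ℝ)..1, (pdx ψ x y)^2 := by
      rw [intervalIntegral.integral_add
        (((slice (uncurry_sq hψ) x).div_const _).intervalIntegrable _ _)
        ((continuous_const.fun_mul (slice (uncurry_sq h1x) x)).intervalIntegrable _ _),
        intervalIntegral.integral_const_mul, intervalIntegral.integral_div]
      ring
    have h18 := hPsi2 x
    have hD := hPdxD1 x
    have hDnn := hD1nn x
    calc |Phi1 x| ≤ _ := hb
    _ = _ := hsplit
    _ ≤ 10 * D1 x := by linarith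
  -- FTC in x
  have hFTC2 : ∀ a : ℝ, (∫ x in (-a)..a, Q2 x) = Phi a - Phi (-a) := by
    intro a
    exact intervalIntegral.integral_eq_sub_of_hasDerivAt (fun t _ => hPhider t)
      (hQ2cont.intervalIntegrable _ _)
  have hFTC1 : ∀ a : ℝ, (∫ x in (-a)..a, (D1 x + R x)) = Phi1 a - Phi1 (-a) := by
    intro a
    exact intervalIntegral.integral_eq_sub_of_hasDerivAt (fun t _ => hPhi1der t)
      ((hD1cont.add hRcont).intervalIntegrable _ _)
  -- window integral of L
  have hLwin : ∀ a : ℝ, (∫ t in a..(a+1), (L t + L (-t))) ≤ 2 * M := by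
    intro a
    have hInt : IntervalIntegrable (fun t => L (-t)) MeasureTheory.volume a (a+1) :=
      (hLcont.comp continuous_neg).intervalIntegrable _ _
    rw [intervalIntegral.integral_add (hLcont.intervalIntegrable _ _) hInt]
    have h2 : (∫ t in a..(a+1), L (-t)) = ∫ t in (-(a+1))..(-a), L t := by
      rw [intervalIntegral.integral_comp_neg]
    have h3 := hlocL (-(a+1))
    rw [show -(a+1) + 1 = -a by ring] at h3
    linarith [hlocL a, h2 ▸ h3]
  -- monotonicity helper
  have hmono : ∀ (g : ℝ → ℝ), Continuous g → (∀ x, 0 ≤ g x) → ∀ a b : ℝ, 0 ≤ a → a ≤ b →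
      (∫ x in (-a)..a, g x) ≤ ∫ x in (-b)..b, g x := by
    intro g hg hnn a b ha hab
    apply intervalIntegral.integral_mono_interval (by linarith) (by linarith) (by linarith)
      (Filter.Eventually.of_forall fun t => hnn t) (hg.intervalIntegrable _ _)
  -- boundedness of the Dirichlet-type energies
  have hPhiL : ∀ t : ℝ, |Phi t| ≤ 31 * L t := by
    intro t
    have h2 := hPhibd 1 one_pos t
    have l1 := hD1L t; have l2 := hQ2L t; have ln := hLnn t
    have : (1 + 9/1) * (D1 t + Q2 t) + 1 * L t ≤ 31 * L t := by norm_num; linarith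
    linarith
  have he2bd : ∀ a : ℝ, 0 ≤ a → (∫ x in (-a)..a, Q2 x) ≤ 62 * M := by
    intro a ha
    have hpt : ∀ t ∈ Set.Icc a (a+1), (∫ x in (-a)..a, Q2 x) ≤ 31 * (L t + L (-t)) := by
      intro t ht
      have h1 : (∫ x in (-a)..a, Q2 x) ≤ ∫ x in (-t)..t, Q2 x :=
        hmono _ hQ2cont hQ2nn a t ha ht.1
      rw [hFTC2 t] at h1
      have hb2 : Phi t - Phi (-t) ≤ |Phi t| + |Phi (-t)| := by
        linarith [le_abs_self (Phi t), neg_abs_le (Phi (-t))]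
      linarith [hPhiL t, hPhiL (-t)]
    have hcont31 : Continuous (fun t : ℝ => 31 * (L t + L (-t))) :=
      continuous_const.mul (hLcont.add (hLcont.comp continuous_neg))
    have havg : (∫ x in (-a)..a, Q2 x) ≤ ∫ t in a..(a+1), 31 * (L t + L (-t)) := by
      have hmo := intervalIntegral.integral_mono_on (μ := MeasureTheory.volume)
        (by linarith : a ≤ a+1)
        (intervalIntegrable_const) (hcont31.intervalIntegrable _ _) hpt
      rwa [intervalIntegral.integral_const, show a + 1 - a = (1:ℝ) by ring, one_smul] at hmo
    have hfin : (∫ t in a..(a+1), 31 * (L t + L (-t))) ≤ 62 * M := by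
      rw [intervalIntegral.integral_const_mul]
      linarith [hLwin a]
    linarith
  have hD1key : ∀ t : ℝ, 0 ≤ t → (3/4) * (∫ x in (-t)..t, D1 x)
      ≤ 10 * (L t + L (-t)) + 1116 * M := by
    intro t ht
    have hsplitDR : (∫ x in (-t)..t, (D1 x + R x))
        = (∫ x in (-t)..t, D1 x) + ∫ x in (-t)..t, R x :=
      intervalIntegral.integral_add (hD1cont.intervalIntegrable _ _)
        (hRcont.intervalIntegrable _ _)
    have hRlow : (∫ x in (-t)..t, (-((1/4) * D1 x + 18 * Q2 x))) ≤ ∫ x in (-t)..t, R x := by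
      apply intervalIntegral.integral_mono_on (by linarith)
        (((continuous_const.fun_mul hD1cont).fun_add (continuous_const.fun_mul hQ2cont)).fun_neg.intervalIntegrable _ _)
        (hRcont.intervalIntegrable _ _)
      intro x _
      have := hRbd x
      have := neg_abs_le (R x)
      linarith
    have hRsplit : (∫ x in (-t)..t, (-((1/4) * D1 x + 18 * Q2 x)))
        = -((1/4) * (∫ x in (-t)..t, D1 x) + 18 * ∫ x in (-t)..t, Q2 x) := by
      rw [intervalIntegral.integral_neg, intervalIntegral.integral_add
        ((continuous_const.fun_mul hD1cont).intervalIntegrable _ _)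
        ((continuous_const.fun_mul hQ2cont).intervalIntegrable _ _),
        intervalIntegral.integral_const_mul, intervalIntegral.integral_const_mul]
    have hFTC := hFTC1 t
    have hup : Phi1 t - Phi1 (-t) ≤ |Phi1 t| + |Phi1 (-t)| := by
      linarith [le_abs_self (Phi1 t), neg_abs_le (Phi1 (-t))]
    have hP1 := hPhi1bd t
    have hP2 := hPhi1bd (-t)
    have hDL1 := hD1L t
    have hDL2 := hD1L (-t)
    have hQb := he2bd t ht
    -- ∫ D1 = Phi1 t - Phi1 (-t) - ∫ R ≤ |Phi1| + |Phi1| + (1/4)∫D1 + 18 ∫Q2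
    have : (∫ x in (-t)..t, D1 x)
        ≤ |Phi1 t| + |Phi1 (-t)| + ((1/4) * (∫ x in (-t)..t, D1 x) + 18 * ∫ x in (-t)..t, Q2 x) := by
      have h1 : (∫ x in (-t)..t, D1 x) = (Phi1 t - Phi1 (-t)) - ∫ x in (-t)..t, R x := by
        linarith [hsplitDR, hFTC]
      have h2 : -(∫ x in (-t)..t, R x)
          ≤ (1/4) * (∫ x in (-t)..t, D1 x) + 18 * ∫ x in (-t)..t, Q2 x := by
        linarith [hRsplit ▸ hRlow]
      linarith
    linarith
  have hD1bdd : ∀ a : ℝ, 0 ≤ a → (∫ x in (-a)..a, D1 x) ≤ 1520 * M := by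
    intro a ha
    have hpt : ∀ t ∈ Set.Icc a (a+1), (3/4) * (∫ x in (-a)..a, D1 x)
        ≤ 10 * (L t + L (-t)) + 1116 * M := by
      intro t ht
      have h1 : (∫ x in (-a)..a, D1 x) ≤ ∫ x in (-t)..t, D1 x :=
        hmono _ hD1cont hD1nn a t ha ht.1
      have := hD1key t (by linarith [ht.1])
      linarith
    have hcontb : Continuous (fun t : ℝ => 10 * (L t + L (-t)) + 1116 * M) :=
      (continuous_const.mul (hLcont.add (hLcont.comp continuous_neg))).add continuous_const
    have havg : (3/4) * (∫ x in (-a)..a, D1 x)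
        ≤ ∫ t in a..(a+1), (10 * (L t + L (-t)) + 1116 * M) := by
      have hmo := intervalIntegral.integral_mono_on (μ := MeasureTheory.volume)
        (by linarith : a ≤ a+1)
        (intervalIntegrable_const) (hcontb.intervalIntegrable _ _) hpt
      rwa [intervalIntegral.integral_const, show a + 1 - a = (1:ℝ) by ring, one_smul] at hmo
    have hfin : (∫ t in a..(a+1), (10 * (L t + L (-t)) + 1116 * M)) ≤ 1136 * M := by
      have j1 : IntervalIntegrable (fun t => 10 * (L t + L (-t))) MeasureTheory.volume a (a+1) :=
        (continuous_const.mul (hLcont.add (hLcont.comp continuous_neg))).intervalIntegrable _ _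
      rw [intervalIntegral.integral_add j1 (intervalIntegrable_const),
        intervalIntegral.integral_const_mul,
        intervalIntegral.integral_const, show a + 1 - a = (1:ℝ) by ring, one_smul]
      linarith [hLwin a]
    linarith
  -- tail of the total energy
  set q : ℕ → ℝ := fun n => ∫ x in (-(n:ℝ))..(n:ℝ), (D1 x + Q2 x) with hqdef
  have hqmono : Monotone q := by
    intro m n hmn
    exact hmono _ (hD1cont.add hQ2cont) (fun x => add_nonneg (hD1nn x) (hQ2nn x))
      _ _ (by positivity) (by exact_mod_cast hmn)
  have hqbdd : ∀ n, q n ≤ 1582 * M := by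
    intro n
    have h1 : (∫ x in (-(n:ℝ))..(n:ℝ), (D1 x + Q2 x))
        = (∫ x in (-(n:ℝ))..(n:ℝ), D1 x) + ∫ x in (-(n:ℝ))..(n:ℝ), Q2 x :=
      intervalIntegral.integral_add (hD1cont.intervalIntegrable _ _)
        (hQ2cont.intervalIntegrable _ _)
    have := he2bd (n:ℝ) (by positivity)
    have := hD1bdd (n:ℝ) (by positivity)
    simp only [hqdef]
    linarith [h1]
  have htail : Filter.Tendsto (fun n => q (n+1) - q n) Filter.atTop (nhds 0) := by
    have hsup : Filter.Tendsto q Filter.atTop (nhds (⨆ n, q n)) :=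
      tendsto_atTop_ciSup hqmono ⟨1582 * M, fun x hx => by obtain ⟨n, rfl⟩ := hx; exact hqbdd n⟩
    have hsup' : Filter.Tendsto (fun n => q (n+1)) Filter.atTop (nhds (⨆ n, q n)) :=
      hsup.comp (Filter.tendsto_add_atTop_nat 1)
    simpa using hsup'.sub hsup
  have hDQcont : Continuous (fun x => D1 x + Q2 x) := hD1cont.add hQ2cont
  have hwin_sum : ∀ n : ℕ, (∫ t in (n:ℝ)..((n:ℝ)+1), ((D1 t + Q2 t) + (D1 (-t) + Q2 (-t))))
      = q (n+1) - q n := by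
    intro n
    have j2 : IntervalIntegrable (fun t => D1 (-t) + Q2 (-t)) MeasureTheory.volume
        (n:ℝ) ((n:ℝ)+1) := (hDQcont.comp continuous_neg).intervalIntegrable _ _
    rw [intervalIntegral.integral_add (hDQcont.intervalIntegrable _ _) j2]
    have hneg : (∫ t in (n:ℝ)..((n:ℝ)+1), (D1 (-t) + Q2 (-t)))
        = ∫ x in (-((n:ℝ)+1))..(-(n:ℝ)), (D1 x + Q2 x) :=
      intervalIntegral.integral_comp_neg (f := fun x => D1 x + Q2 x)
    rw [hneg]
    have hq1 : q (n+1) = ∫ x in (-((n:ℝ)+1))..((n:ℝ)+1), (D1 x + Q2 x) := by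
      simp only [hqdef]
      norm_num
    have hq0 : q n = ∫ x in (-(n:ℝ))..((n:ℝ)), (D1 x + Q2 x) := rfl
    have hadj1 : (∫ x in (-((n:ℝ)+1))..(-(n:ℝ)), (D1 x + Q2 x))
        + (∫ x in (-(n:ℝ))..((n:ℝ)+1), (D1 x + Q2 x))
        = ∫ x in (-((n:ℝ)+1))..((n:ℝ)+1), (D1 x + Q2 x) :=
      intervalIntegral.integral_add_adjacent_intervals
        (hDQcont.intervalIntegrable _ _) (hDQcont.intervalIntegrable _ _)
    have hadj2 : (∫ x in (-(n:ℝ))..((n:ℝ)), (D1 x + Q2 x))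
        + (∫ x in ((n:ℝ))..((n:ℝ)+1), (D1 x + Q2 x))
        = ∫ x in (-(n:ℝ))..((n:ℝ)+1), (D1 x + Q2 x) :=
      intervalIntegral.integral_add_adjacent_intervals
        (hDQcont.intervalIntegrable _ _) (hDQcont.intervalIntegrable _ _)
    rw [hq1, hq0]
    linarith [hadj1, hadj2]
  -- vanishing of the second-order energy
  have he2zero : ∀ a : ℝ, 0 ≤ a → (∫ x in (-a)..a, Q2 x) = 0 := by
    have hle : ∀ a : ℝ, 0 ≤ a → ∀ c : ℝ, 0 < c → (∫ x in (-a)..a, Q2 x) ≤ c := by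
      intro a ha c hc
      set s : ℝ := c / (4 * M) with hsdef
      have hs : 0 < s := by positivity
      have hs2M : s * (2 * M) = c / 2 := by
        rw [hsdef]
        field_simp
        ring
      have h19 : 0 < 1 + 9/s := by positivity
      set ε : ℝ := (c/2) / (1 + 9/s) with hεdef
      have hε : 0 < ε := by positivity
      obtain ⟨N, hN⟩ := Metric.tendsto_atTop.mp htail ε hε
      set n : ℕ := max N ⌈a⌉₊ with hndef
      have hnN : N ≤ n := le_max_left _ _
      have han : a ≤ (n:ℝ) := by
        calc a ≤ (⌈a⌉₊ : ℝ) := Nat.le_ceil a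
        _ ≤ (n:ℝ) := by exact_mod_cast le_max_right N ⌈a⌉₊
      have htn : q (n+1) - q n < ε := by
        have := hN n hnN
        rw [Real.dist_eq, sub_zero] at this
        exact lt_of_le_of_lt (le_abs_self _) this
      have hpt : ∀ t ∈ Set.Icc (n:ℝ) ((n:ℝ)+1), (∫ x in (-a)..a, Q2 x)
          ≤ (1 + 9/s) * ((D1 t + Q2 t) + (D1 (-t) + Q2 (-t))) + s * (L t + L (-t)) := by
        intro t ht
        have h1 : (∫ x in (-a)..a, Q2 x) ≤ ∫ x in (-t)..t, Q2 x :=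
          hmono _ hQ2cont hQ2nn a t ha (le_trans han ht.1)
        rw [hFTC2 t] at h1
        have h2 := hPhibd s hs t
        have h3 := hPhibd s hs (-t)
        have habs2 : Phi t - Phi (-t) ≤ |Phi t| + |Phi (-t)| := by
          linarith [le_abs_self (Phi t), neg_abs_le (Phi (-t))]
        linarith
      have hcontb : Continuous (fun t : ℝ =>
          (1 + 9/s) * ((D1 t + Q2 t) + (D1 (-t) + Q2 (-t))) + s * (L t + L (-t))) :=
        (continuous_const.mul ((hD1cont.add hQ2cont).add
          ((hD1cont.add hQ2cont).comp continuous_neg))).add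
          (continuous_const.mul (hLcont.add (hLcont.comp continuous_neg)))
      have havg : (∫ x in (-a)..a, Q2 x) ≤ ∫ t in (n:ℝ)..((n:ℝ)+1),
          ((1 + 9/s) * ((D1 t + Q2 t) + (D1 (-t) + Q2 (-t))) + s * (L t + L (-t))) := by
        have hmo := intervalIntegral.integral_mono_on (μ := MeasureTheory.volume)
          (by linarith : (n:ℝ) ≤ (n:ℝ)+1)
          (intervalIntegrable_const) (hcontb.intervalIntegrable _ _) hpt
        rwa [intervalIntegral.integral_const, show (n:ℝ) + 1 - (n:ℝ) = (1:ℝ) by ring,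
          one_smul] at hmo
      have j1 : IntervalIntegrable (fun t => (1 + 9/s) * ((D1 t + Q2 t) + (D1 (-t) + Q2 (-t))))
          MeasureTheory.volume (n:ℝ) ((n:ℝ)+1) :=
        (continuous_const.mul ((hD1cont.add hQ2cont).add
          ((hD1cont.add hQ2cont).comp continuous_neg))).intervalIntegrable _ _
      have j2 : IntervalIntegrable (fun t => s * (L t + L (-t)))
          MeasureTheory.volume (n:ℝ) ((n:ℝ)+1) :=
        (continuous_const.mul (hLcont.add (hLcont.comp continuous_neg))).intervalIntegrable _ _
      have hsplit : (∫ t in (n:ℝ)..((n:ℝ)+1),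
          ((1 + 9/s) * ((D1 t + Q2 t) + (D1 (-t) + Q2 (-t))) + s * (L t + L (-t))))
          = (1 + 9/s) * (∫ t in (n:ℝ)..((n:ℝ)+1), ((D1 t + Q2 t) + (D1 (-t) + Q2 (-t))))
            + s * ∫ t in (n:ℝ)..((n:ℝ)+1), (L t + L (-t)) := by
        rw [intervalIntegral.integral_add j1 j2, intervalIntegral.integral_const_mul,
          intervalIntegral.integral_const_mul]
      have hLw := hLwin (n:ℝ)
      have hq := hwin_sum n
      have hεeq : (1 + 9/s) * ε = c/2 := by
        rw [hεdef]
        field_simp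
      calc (∫ x in (-a)..a, Q2 x) ≤ _ := havg
      _ = (1 + 9/s) * (q (n+1) - q n)
          + s * ∫ t in (n:ℝ)..((n:ℝ)+1), (L t + L (-t)) := by rw [hsplit, hq]
      _ ≤ (1 + 9/s) * ε + s * (2*M) := by
          have m1 : (1 + 9/s) * (q (n+1) - q n) ≤ (1 + 9/s) * ε :=
            mul_le_mul_of_nonneg_left (le_of_lt htn) (le_of_lt h19)
          have m2 : s * (∫ t in (n:ℝ)..((n:ℝ)+1), (L t + L (-t))) ≤ s * (2*M) :=
            mul_le_mul_of_nonneg_left hLw hs.le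
          linarith
      _ ≤ c := by linarith [hεeq, hs2M]
    intro a ha
    have hnn : 0 ≤ (∫ x in (-a)..a, Q2 x) :=
      intervalIntegral.integral_nonneg (by linarith) (fun x _ => hQ2nn x)
    by_contra hne
    have hpos : 0 < ∫ x in (-a)..a, Q2 x := lt_of_le_of_ne hnn (Ne.symm hne)
    have := hle a ha ((∫ x in (-a)..a, Q2 x)/2) (by linarith)
    linarith
  have hQ2zero : ∀ x, Q2 x = 0 :=
    zero_of_integral hQ2cont hQ2nn he2zero
  have hwzero : ∀ x : ℝ, ∀ y ∈ Set.Icc (-1:ℝ) 1, w x y = 0 := by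
    intro x
    have hz : (∫ y in (-1:ℝ)..1, (w x y)^2) = 0 := hQ2zero x
    intro y hy
    have := zero_on_of_integral (g := fun y => (w x y)^2)
      ((slice (uncurry_sq hw') x)) (fun y => sq_nonneg _) hz y hy
    exact pow_eq_zero_iff (by norm_num) |>.mp this
  have hR0 : ∀ x, R x = 0 := by
    intro x
    simp only [hRdef]
    rw [← intervalIntegral.integral_zero (a := (-1:ℝ)) (b := (1:ℝ))]
    apply intervalIntegral.integral_congr
    intro y hy
    rw [Set.uIcc_of_le (by norm_num)] at hy
    simp [hwzero x y hy]
  -- vanishing of the first-order energy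
  have hGzero : ∀ a : ℝ, 0 ≤ a → (∫ x in (-a)..a, D1 x) = 0 := by
    have hFTCD : ∀ t : ℝ, (∫ x in (-t)..t, D1 x) = Phi1 t - Phi1 (-t) := by
      intro t
      rw [← hFTC1 t]
      apply intervalIntegral.integral_congr
      intro x _
      dsimp only
      rw [hR0 x, add_zero]
    have hle : ∀ a : ℝ, 0 ≤ a → ∀ c : ℝ, 0 < c → (∫ x in (-a)..a, D1 x) ≤ c := by
      intro a ha c hc
      have hε : 0 < c / 20 := by linarith
      obtain ⟨N, hN⟩ := Metric.tendsto_atTop.mp htail (c/20) hε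
      set n : ℕ := max N ⌈a⌉₊ with hndef
      have hnN : N ≤ n := le_max_left _ _
      have han : a ≤ (n:ℝ) := by
        calc a ≤ (⌈a⌉₊ : ℝ) := Nat.le_ceil a
        _ ≤ (n:ℝ) := by exact_mod_cast le_max_right N ⌈a⌉₊
      have htn : q (n+1) - q n < c/20 := by
        have := hN n hnN
        rw [Real.dist_eq, sub_zero] at this
        exact lt_of_le_of_lt (le_abs_self _) this
      have hpt : ∀ t ∈ Set.Icc (n:ℝ) ((n:ℝ)+1), (∫ x in (-a)..a, D1 x)
          ≤ 10 * ((D1 t + Q2 t) + (D1 (-t) + Q2 (-t))) := by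
        intro t ht
        have h1 : (∫ x in (-a)..a, D1 x) ≤ ∫ x in (-t)..t, D1 x :=
          hmono _ hD1cont hD1nn a t ha (le_trans han ht.1)
        rw [hFTCD t] at h1
        have habs2 : Phi1 t - Phi1 (-t) ≤ |Phi1 t| + |Phi1 (-t)| := by
          linarith [le_abs_self (Phi1 t), neg_abs_le (Phi1 (-t))]
        linarith [hPhi1bd t, hPhi1bd (-t), hQ2nn t, hQ2nn (-t), h1]
      have hcontb : Continuous (fun t : ℝ =>
          (10:ℝ) * ((D1 t + Q2 t) + (D1 (-t) + Q2 (-t)))) :=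
        continuous_const.mul ((hD1cont.add hQ2cont).add
          ((hD1cont.add hQ2cont).comp continuous_neg))
      have havg : (∫ x in (-a)..a, D1 x) ≤ ∫ t in (n:ℝ)..((n:ℝ)+1),
          ((10:ℝ) * ((D1 t + Q2 t) + (D1 (-t) + Q2 (-t)))) := by
        have hmo := intervalIntegral.integral_mono_on (μ := MeasureTheory.volume)
          (by linarith : (n:ℝ) ≤ (n:ℝ)+1)
          (intervalIntegrable_const) (hcontb.intervalIntegrable _ _) hpt
        rwa [intervalIntegral.integral_const, show (n:ℝ) + 1 - (n:ℝ) = (1:ℝ) by ring,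
          one_smul] at hmo
      rw [intervalIntegral.integral_const_mul, hwin_sum n] at havg
      linarith
    intro a ha
    have hnn : 0 ≤ (∫ x in (-a)..a, D1 x) :=
      intervalIntegral.integral_nonneg (by linarith) (fun x _ => hD1nn x)
    by_contra hne
    have hpos : 0 < ∫ x in (-a)..a, D1 x := lt_of_le_of_ne hnn (Ne.symm hne)
    have := hle a ha ((∫ x in (-a)..a, D1 x)/2) (by linarith)
    linarith
  have hD1zero : ∀ x, D1 x = 0 :=
    zero_of_integral hD1cont hD1nn hGzero
  -- ### conclusion
  intro x y hy
  have hpdy0 : ∀ t ∈ Set.Icc (-1:ℝ) 1, pdy ψ x t = 0 := by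
    have hle : (∫ t in (-1:ℝ)..1, (pdy ψ x t)^2) ≤ 0 := by
      have : (∫ t in (-1:ℝ)..1, (pdy ψ x t)^2) ≤ D1 x := by
        apply intervalIntegral.integral_mono_on (by norm_num)
          ((slice (uncurry_sq h1y) x).intervalIntegrable _ _)
          ((slice (uncurry_add (uncurry_sq h1x) (uncurry_sq h1y)) x).intervalIntegrable _ _)
        intro t _
        nlinarith [sq_nonneg (pdx ψ x t)]
      linarith [hD1zero x]
    have hge : (0:ℝ) ≤ ∫ t in (-1:ℝ)..1, (pdy ψ x t)^2 :=
      intervalIntegral.integral_nonneg (by norm_num) (fun t _ => sq_nonneg _)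
    have hz : (∫ t in (-1:ℝ)..1, (pdy ψ x t)^2) = 0 := le_antisymm hle hge
    intro t ht
    have := zero_on_of_integral (g := fun t => (pdy ψ x t)^2)
      (slice (uncurry_sq h1y) x) (fun t => sq_nonneg _) hz t ht
    exact pow_eq_zero_iff (by norm_num) |>.mp this
  have hFTCy : ψ x y - ψ x (-1) = ∫ t in (-1:ℝ)..y, pdy ψ x t := by
    symm
    apply intervalIntegral.integral_eq_sub_of_hasDerivAt
    · intro t ht
      exact hasDerivAt_pdy hψ x t
    · exact ((slice h1y x).intervalIntegrable _ _)
  have hzero : (∫ t in (-1:ℝ)..y, pdy ψ x t) = 0 := by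
    rw [← intervalIntegral.integral_zero (a := (-1:ℝ)) (b := y)]
    apply intervalIntegral.integral_congr
    intro t ht
    rw [Set.uIcc_of_le hy.1] at ht
    exact hpdy0 t ⟨ht.1, le_trans ht.2 hy.2⟩
  rw [hzero] at hFTCy
  have := (hbc x).1
  linarith [hFTCy]
end
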